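/- arXiv:2201.00665 — 8 statements merged into one kernel-verified Lean document; each statement's English description precedes it below -/
import Mathlib

section
/- Let G be a finite simple graph and let α, α′ be acyclic orientations of G. Then α and α′ are flip equivalent if and only if α′ can be reached from α by a sequence consisting only of inflips; likewise, α and α′ are flip equivalent if and only if α′ can be reached from α by a sequence consisting only of outflips. -/
open SimpleGraph

/-- An acyclic orientation of a simple graph `G`: a choice of direction `toRel` for every edge
of `G` with no directed cycles. -/
structure AcyclicOrientation {V : Type*} (G : SimpleGraph V) where
  toRel : V → V → Prop
  adj_of_rel : ∀ a b, toRel a b → G.Adj a b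
  rel_total : ∀ a b, G.Adj a b → toRel a b ∨ toRel b a
  asymm : ∀ a b, toRel a b → ¬ toRel b a
  acyclic : ∀ v, ¬ Relation.TransGen toRel v v

/-- `v` is a source: it has no incoming edges (isolated vertices are permitted). -/
def AcyclicOrientation.IsSource {V : Type*} {G : SimpleGraph V}
    (α : AcyclicOrientation G) (v : V) : Prop :=
  ∀ u, ¬ α.toRel u v

/-- `v` is a sink: it has no outgoing edges (isolated vertices are permitted). -/
def AcyclicOrientation.IsSink {V : Type*} {G : SimpleGraph V}
    (α : AcyclicOrientation G) (v : V) : Prop :=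
  ∀ u, ¬ α.toRel v u

/-- `α'` is obtained from `α` by an inflip at `v`: the source `v` is converted into a sink by
reversing the directions of all its incident edges. -/
def IsInflipAt {V : Type*} {G : SimpleGraph V} (v : V) (α α' : AcyclicOrientation G) : Prop :=
  α.IsSource v ∧
    ∀ a b, (α'.toRel a b ↔ (a ≠ v ∧ b ≠ v ∧ α.toRel a b) ∨ (b = v ∧ α.toRel b a))

/-- `α'` is obtained from `α` by an outflip at `v`: the sink `v` is converted into a source by
reversing the directions of all its incident edges. -/
def IsOutflipAt {V : Type*} {G : SimpleGraph V} (v : V) (α α' : AcyclicOrientation G) : Prop :=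
  α.IsSink v ∧
    ∀ a b, (α'.toRel a b ↔ (a ≠ v ∧ b ≠ v ∧ α.toRel a b) ∨ (a = v ∧ α.toRel b a))

/-- `α'` is obtained from `α` by an inflip (at some source). -/
def IsInflip {V : Type*} {G : SimpleGraph V} (α α' : AcyclicOrientation G) : Prop :=
  ∃ v, IsInflipAt v α α'

/-- `α'` is obtained from `α` by an outflip (at some sink). -/
def IsOutflip {V : Type*} {G : SimpleGraph V} (α α' : AcyclicOrientation G) : Prop :=
  ∃ v, IsOutflipAt v α α'

/-- A flip is an inflip or an outflip. -/
def IsFlip {V : Type*} {G : SimpleGraph V} (α α' : AcyclicOrientation G) : Prop :=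
  IsInflip α α' ∨ IsOutflip α α'

/-- Flip equivalence: `α ∼ α'` iff one can be obtained from the other by a sequence of flips. -/
def FlipEquiv {V : Type*} {G : SimpleGraph V} (α α' : AcyclicOrientation G) : Prop :=
  Relation.ReflTransGen IsFlip α α'

section FlipAux

variable {V : Type*} {G : SimpleGraph V}

private lemma AcyclicOrientation.irrefl' (α : AcyclicOrientation G) (v : V) : ¬ α.toRel v v :=
  fun h => α.asymm v v h h

private lemma AcyclicOrientation.ext' {α β : AcyclicOrientation G}
    (h : ∀ a b, α.toRel a b ↔ β.toRel a b) : α = β := by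
  obtain ⟨ra, _, _, _, _⟩ := α
  obtain ⟨rb, _, _, _, _⟩ := β
  have : ra = rb := funext fun a => funext fun b => propext (h a b)
  subst this
  rfl

/-- The relation obtained from `α` by flipping every vertex of `S` (for `S` a lower set). -/
def flipRel (S : Set V) (α : AcyclicOrientation G) (a b : V) : Prop :=
  ((a ∈ S ↔ b ∈ S) ∧ α.toRel a b) ∨ (a ∉ S ∧ b ∈ S ∧ α.toRel b a)

private lemma flipRel_left {S : Set V} {α : AcyclicOrientation G} {v w : V}
    (h : Relation.TransGen (flipRel S α) v w) (hv : v ∈ S) :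
    w ∈ S ∧ Relation.TransGen α.toRel v w := by
  induction h with
  | single h =>
    rcases h with ⟨hiff, hr⟩ | ⟨ha, _, _⟩
    · exact ⟨hiff.mp hv, .single hr⟩
    · exact absurd hv ha
  | tail h1 h2 ih =>
    obtain ⟨hb, ht⟩ := ih
    rcases h2 with ⟨hiff, hr⟩ | ⟨ha, _, _⟩
    · exact ⟨hiff.mp hb, ht.tail hr⟩
    · exact absurd hb ha

private lemma flipRel_right {S : Set V} {α : AcyclicOrientation G} {v w : V}
    (h : Relation.TransGen (flipRel S α) v w) (hw : w ∉ S) :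
    v ∉ S ∧ Relation.TransGen α.toRel v w := by
  induction h with
  | single h =>
    rcases h with ⟨hiff, hr⟩ | ⟨_, hb, _⟩
    · exact ⟨fun hv => hw (hiff.mp hv), .single hr⟩
    · exact absurd hb hw
  | tail h1 h2 ih =>
    rcases h2 with ⟨hiff, hr⟩ | ⟨_, hb, _⟩
    · obtain ⟨hv, ht⟩ := ih (fun hb => hw (hiff.mp hb))
      exact ⟨hv, ht.tail hr⟩
    · exact absurd hb hw

/-- The orientation obtained from `α` by flipping every vertex of the lower set `S`. -/
def flipSet (S : Set V) (α : AcyclicOrientation G)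
    (hlow : ∀ ⦃a b : V⦄, b ∈ S → α.toRel a b → a ∈ S) : AcyclicOrientation G where
  toRel := flipRel S α
  adj_of_rel a b h := by
    rcases h with ⟨_, h⟩ | ⟨_, _, h⟩
    · exact α.adj_of_rel _ _ h
    · exact (α.adj_of_rel _ _ h).symm
  rel_total a b h := by
    rcases α.rel_total a b h with h' | h' <;> by_cases ha : a ∈ S <;> by_cases hb : b ∈ S <;>
      unfold flipRel <;> first
      | exact absurd (hlow hb h') ha
      | exact absurd (hlow ha h') hb
      | tauto
  asymm a b h1 h2 := by
    rcases h1 with ⟨i1, r1⟩ | ⟨ha, hb, r1⟩ <;> rcases h2 with ⟨i2, r2⟩ | ⟨hb', ha', r2⟩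
    · exact α.asymm _ _ r1 r2
    · exact hb' (i1.mp ha')
    · exact ha (i2.mp hb)
    · exact hb' hb
  acyclic v hv := by
    by_cases hv' : v ∈ S
    · exact α.acyclic v (flipRel_left hv hv').2
    · exact α.acyclic v (flipRel_right hv hv').2

private lemma flipSet_toRel (S : Set V) (α : AcyclicOrientation G) (hlow) (a b : V) :
    (flipSet S α hlow).toRel a b ↔ flipRel S α a b := Iff.rfl

private lemma flipSet_univ (α : AcyclicOrientation G) (hlow) :
    flipSet Set.univ α hlow = α := by
  apply AcyclicOrientation.ext'
  intro a b
  simp [flipSet_toRel, flipRel]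

private lemma lower_insert {S : Set V} {α : AcyclicOrientation G} {u : V}
    (hlow : ∀ ⦃a b : V⦄, b ∈ S → α.toRel a b → a ∈ S)
    (hpred : ∀ a, α.toRel a u → a ∈ S) :
    ∀ ⦃a b : V⦄, b ∈ insert u S → α.toRel a b → a ∈ insert u S := by
  intro a b hb hrel
  rcases hb with rfl | hb
  · exact Or.inr (hpred a hrel)
  · exact Or.inr (hlow hb hrel)

private lemma isInflipAt_flipSet {S : Set V} {α : AcyclicOrientation G} {u : V}
    (hlow : ∀ ⦃a b : V⦄, b ∈ S → α.toRel a b → a ∈ S) (hu : u ∉ S)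
    (hpred : ∀ a, α.toRel a u → a ∈ S) :
    IsInflipAt u (flipSet S α hlow) (flipSet (insert u S) α (lower_insert hlow hpred)) := by
  constructor
  · intro x hx
    rcases hx with ⟨hiff, hr⟩ | ⟨_, h, _⟩
    · exact hu (hiff.mp (hpred x hr))
    · exact hu h
  · intro a b
    have hir := α.irrefl' u
    have hlow' : ∀ b, b ∈ S → α.toRel u b → False := fun b hb h => hu (hlow hb h)
    show flipRel (insert u S) α a b ↔ _
    simp only [flipRel, flipSet_toRel, Set.mem_insert_iff]
    by_cases ha : a ∈ S <;> by_cases hb : b ∈ S <;> by_cases hau : a = u <;>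
      by_cases hbu : b = u <;> subst_vars <;> simp_all

private lemma flipSet_congr {S S' : Set V} (α : AcyclicOrientation G) (hlow hlow')
    (h : S = S') : flipSet S α hlow = flipSet S' α hlow' := by
  subst h; rfl

private lemma reach [Fintype V] [DecidableEq V] (α : AcyclicOrientation G) :
    ∀ (n : ℕ) (S : Finset V)
      (hlow : ∀ ⦃a b : V⦄, b ∈ (S : Set V) → α.toRel a b → a ∈ (S : Set V)),
      Sᶜ.card ≤ n →
      Relation.ReflTransGen IsInflip (flipSet (↑S) α hlow)
        (flipSet Set.univ α (fun _ _ _ _ => Set.mem_univ _)) := by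
  intro n
  induction n with
  | zero =>
    intro S hlow hcard
    have : Sᶜ = ∅ := Finset.card_eq_zero.mp (Nat.le_zero.mp hcard)
    have hS : S = Finset.univ := by
      rwa [Finset.compl_eq_empty_iff] at this
    subst hS
    rw [flipSet_congr α hlow (fun _ _ _ _ => Set.mem_univ _) (by simp)]
  | succ n ih =>
    intro S hlow hcard
    by_cases hS : S = Finset.univ
    · subst hS
      rw [flipSet_congr α hlow (fun _ _ _ _ => Set.mem_univ _) (by simp)]
    · have hne : Sᶜ.Nonempty := by
        rw [Finset.nonempty_iff_ne_empty, Ne, Finset.compl_eq_empty_iff]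
        exact hS
      haveI : IsIrrefl V (Relation.TransGen α.toRel) := ⟨α.acyclic⟩
      haveI : IsTrans V (Relation.TransGen α.toRel) := ⟨fun _ _ _ => Relation.TransGen.trans⟩
      have hwf := Finite.wellFounded_of_trans_of_irrefl (Relation.TransGen α.toRel)
      obtain ⟨x, hx⟩ := hne
      obtain ⟨u, hu, hmin⟩ := hwf.has_min {x : V | x ∉ S}
        ⟨x, Finset.mem_compl.mp hx⟩
      have hu' : u ∉ S := hu
      have hpred : ∀ a, α.toRel a u → a ∈ S := by
        intro a hrel
        by_contra haS
        exact hmin a haS (Relation.TransGen.single hrel)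
      have hstep := isInflipAt_flipSet hlow (u := u) (by simpa using hu')
        (fun a h => by simpa using hpred a h)
      have hlow2 : ∀ ⦃a b : V⦄, b ∈ ((insert u S : Finset V) : Set V) → α.toRel a b →
          a ∈ ((insert u S : Finset V) : Set V) := by
        intro a b hb hrel
        simp only [Finset.coe_insert, Set.mem_insert_iff, Finset.mem_coe] at hb ⊢
        rcases hb with rfl | hb
        · exact Or.inr (hpred a hrel)
        · exact Or.inr (hlow hb hrel)
      have heq : flipSet (insert u (S : Set V)) α (lower_insert hlow
          (fun a h => by simpa using hpred a h)) = flipSet (↑(insert u S)) α hlow2 :=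
        flipSet_congr α _ hlow2 (by simp)
      rw [heq] at hstep
      have hcard2 : (insert u S)ᶜ.card ≤ n := by
        rw [Finset.compl_insert, Finset.card_erase_of_mem (Finset.mem_compl.mpr hu')]
        omega
      exact Relation.ReflTransGen.head ⟨u, hstep⟩ (ih (insert u S) hlow2 hcard2)

private lemma inflip_reverse [Fintype V] {α α' : AcyclicOrientation G} (h : IsInflip α α') :
    Relation.ReflTransGen IsInflip α' α := by
  classical
  obtain ⟨v, hsrc, hrel⟩ := h
  have hlow : ∀ ⦃a b : V⦄, b ∈ ({v} : Set V) → α.toRel a b → a ∈ ({v} : Set V) := by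
    intro a b hb hrel'
    simp only [Set.mem_singleton_iff] at hb
    subst hb
    exact absurd hrel' (hsrc a)
  have hα' : α' = flipSet ({v} : Set V) α hlow := by
    apply AcyclicOrientation.ext'
    intro a b
    rw [hrel a b]
    have hir := α.irrefl' v
    simp only [flipSet_toRel, flipRel, Set.mem_singleton_iff]
    by_cases hau : a = v <;> by_cases hbu : b = v <;> subst_vars <;> simp_all
  have hlow' : ∀ ⦃a b : V⦄, b ∈ (({v} : Finset V) : Set V) → α.toRel a b →
      a ∈ (({v} : Finset V) : Set V) := by simpa using hlow
  have := reach α (({v} : Finset V)ᶜ.card) ({v} : Finset V) hlow' le_rfl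
  rw [flipSet_congr α hlow' hlow (by simp), flipSet_univ] at this
  rw [hα']
  exact this

private lemma rtg_inflip_symm [Fintype V] {α α' : AcyclicOrientation G}
    (h : Relation.ReflTransGen IsInflip α α') :
    Relation.ReflTransGen IsInflip α' α := by
  induction h with
  | refl => exact .refl
  | tail _ h2 ih => exact (inflip_reverse h2).trans ih

private lemma inflip_swap {v : V} {α α' : AcyclicOrientation G} (h : IsInflipAt v α α') :
    IsOutflipAt v α' α := by
  obtain ⟨hsrc, hrel⟩ := h
  have hir := α.irrefl' v
  constructor
  · intro u hu
    rw [hrel v u] at hu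
    rcases hu with ⟨hv, _, _⟩ | ⟨rfl, h'⟩
    · exact hv rfl
    · exact hir h'
  · intro a b
    rw [hrel a b, hrel b a]
    have h1 := hsrc a
    have h2 := hsrc b
    by_cases hav : a = v <;> by_cases hbv : b = v <;> subst_vars <;> simp_all

private lemma outflip_swap {v : V} {α α' : AcyclicOrientation G} (h : IsOutflipAt v α α') :
    IsInflipAt v α' α := by
  obtain ⟨hsink, hrel⟩ := h
  have hir := α.irrefl' v
  constructor
  · intro u hu
    rw [hrel u v] at hu
    rcases hu with ⟨_, hv, _⟩ | ⟨rfl, h'⟩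
    · exact hv rfl
    · exact hir h'
  · intro a b
    rw [hrel a b, hrel b a]
    have h1 := hsink a
    have h2 := hsink b
    by_cases hav : a = v <;> by_cases hbv : b = v <;> subst_vars <;> simp_all

end FlipAux

private lemma rtg_swap {X : Type*} {r : X → X → Prop} {a b : X}
    (h : Relation.ReflTransGen (fun x y => r y x) a b) : Relation.ReflTransGen r b a := by
  induction h with
  | refl => exact .refl
  | tail _ h2 ih => exact Relation.ReflTransGen.head h2 ih

/-- Two acyclic orientations of a finite simple graph are flip equivalent if
and only if one can be reached from the other by a sequence of inflips, and likewise if and only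
if one can be reached from the other by a sequence of outflips. -/
theorem flipEquiv_iff_inflips_and_iff_outflips {V : Type*} [Fintype V] (G : SimpleGraph V)
    (α α' : AcyclicOrientation G) :
    (FlipEquiv α α' ↔ Relation.ReflTransGen IsInflip α α') ∧
    (FlipEquiv α α' ↔ Relation.ReflTransGen IsOutflip α α') := by
  have part1 : FlipEquiv α α' ↔ Relation.ReflTransGen IsInflip α α' := by
    constructor
    · intro h
      induction h with
      | refl => exact .refl
      | tail _ hf ih =>
        rcases hf with hin | ⟨v, ho⟩
        · exact ih.tail hin
        · exact ih.trans (inflip_reverse ⟨v, outflip_swap ho⟩)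
    · intro h
      exact Relation.ReflTransGen.mono (fun a b hb => Or.inl hb) _ _ h
  refine ⟨part1, ?_⟩
  constructor
  · intro h
    have h1 := rtg_inflip_symm (part1.mp h)
    exact rtg_swap (Relation.ReflTransGen.mono
      (fun x y hxy => hxy.elim fun v hx => (⟨v, inflip_swap hx⟩ : IsOutflip y x)) _ _ h1)
  · intro h
    exact Relation.ReflTransGen.mono (fun a b hb => Or.inr hb) _ _ h
end

section
/- Let n ≥ 2 and let X be any simple graph on n vertices. Then every connected component of the friends-and-strangers graph FS(X, K_n) has diameter at most 2n² − 5n + 3 = (n−1)((n−1)+(n−2)). -/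
/-!
An edge of `FS(X, K_n)` composes a bijection with the transposition of two adjacent vertices
of `X`. Hence if `σ` and `τ` lie in one component, every vertex `a` lies in the same component
of `X` as `σ⁻¹ (τ a)`, and composing `σ` with the transposition of these two vertices makes it
agree with `τ` at `a` without creating new disagreements. Conjugating along a path of length
`ℓ ≤ n - 1`, such a transposition costs `2ℓ - 1 ≤ 2n - 3` steps. Since two bijections never
disagree at exactly one vertex, `n - 1` corrections suffice.
-/

open SimpleGraph

/-- Adjacency in the friends-and-strangers graph: bijections `σ` and `τ` are adjacent iff there
is an edge `{a, b}` of `X` such that `{σ a, σ b}` is an edge of `Y`, `σ a = τ b`, `σ b = τ a`,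
and `σ c = τ c` for every vertex `c` other than `a` and `b`. -/
def fsAdj {α β : Type*} (X : SimpleGraph α) (Y : SimpleGraph β) (σ τ : α ≃ β) : Prop :=
  ∃ a b : α, X.Adj a b ∧ Y.Adj (σ a) (σ b) ∧ σ a = τ b ∧ σ b = τ a ∧
    ∀ c : α, c ≠ a → c ≠ b → σ c = τ c

/-- The friends-and-strangers graph `FS(X, Y)` of two simple graphs on the same number of
vertices; its vertices are bijections from `V(X)` to `V(Y)`. -/
def FS {α β : Type*} (X : SimpleGraph α) (Y : SimpleGraph β) : SimpleGraph (α ≃ β) where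
  Adj := fsAdj X Y
  symm := by
    constructor
    rintro σ τ ⟨a, b, hX, hY, h1, h2, h3⟩
    refine ⟨a, b, hX, ?_, h2.symm, h1.symm, fun c hca hcb => (h3 c hca hcb).symm⟩
    rw [← h2, ← h1]
    exact hY.symm
  loopless := by
    constructor
    rintro σ ⟨a, b, hX, hY, h1, _, _⟩
    exact hX.ne (σ.injective h1)

open Equiv Finset

theorem SimpleGraph.Adj.reachable_swap_apply {α : Type*} [DecidableEq α] {X : SimpleGraph α}
    {u v : α} (huv : X.Adj u v) (z : α) : X.Reachable z (swap u v z) := by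
  rw [swap_apply_def]
  split_ifs with hu hv
  · exact hu ▸ huv.reachable
  · exact hv ▸ huv.symm.reachable
  · rfl

namespace FS

variable {α β : Type*} {X : SimpleGraph α}

section Swap

variable [DecidableEq α]

theorem adj_swap_trans {a b : α} (hab : X.Adj a b) (σ : α ≃ β) :
    (FS X ⊤).Adj σ ((swap a b).trans σ) := by
  refine ⟨a, b, hab, (top_adj _ _).mpr (σ.injective.ne hab.ne), ?_, ?_, fun c hca hcb => ?_⟩
  · simp
  · simp
  · simp [swap_apply_of_ne_of_ne hca hcb]

theorem exists_swap_of_adj {Y : SimpleGraph β} {σ τ : α ≃ β} (h : (FS X Y).Adj σ τ) :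
    ∃ a b, X.Adj a b ∧ τ = (swap a b).trans σ := by
  obtain ⟨a, b, hab, -, hσa, hσb, hσc⟩ := h
  refine ⟨a, b, hab, Equiv.ext fun x => ?_⟩
  rw [trans_apply, swap_apply_def]
  split_ifs with hxa hxb
  · rw [hxa, hσb]
  · rw [hxb, hσa]
  · exact (hσc x hxa hxb).symm

theorem reachable_symm_apply_of_reachable {Y : SimpleGraph β} {σ τ : α ≃ β}
    (h : (FS X Y).Reachable σ τ) (a : α) : X.Reachable a (σ.symm (τ a)) := by
  obtain ⟨w⟩ := h
  induction w with
  | nil => simp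
  | cons hadj _ ih =>
    obtain ⟨u, v, huv, rfl⟩ := exists_swap_of_adj hadj
    simpa using ih.trans (huv.reachable_swap_apply _)

/-- Transposing the ends of a walk `a - c - ⋯ - b`: since `(a c) (c b) (a c) = (a b)`, the
transposition `(a b)` costs two more steps than `(c b)`. -/
theorem exists_walk_swap_trans {a b : α} (p : X.Walk a b) (hab : a ≠ b) (σ : α ≃ β) :
    ∃ w : (FS X ⊤).Walk σ ((swap a b).trans σ), w.length ≤ 2 * p.length - 1 := by
  induction p generalizing σ with
  | nil => exact absurd rfl hab
  | @cons a c b hac q ih =>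
    by_cases hcb : c = b
    · subst hcb
      exact ⟨(adj_swap_trans hac σ).toWalk, by simp; omega⟩
    obtain ⟨w, hw⟩ := ih hcb ((swap a c).trans σ)
    have hconj : (swap a c).trans ((swap c b).trans ((swap a c).trans σ)) =
        (swap a b).trans σ := by
      have := symm_trans_swap_trans c b (swap a c)
      rw [swap_apply_right, swap_apply_of_ne_of_ne hab.symm (Ne.symm hcb), symm_swap] at this
      rw [← this]
      rfl
    have hlast := adj_swap_trans hac ((swap c b).trans ((swap a c).trans σ))
    rw [hconj] at hlast
    refine ⟨(w.cons (adj_swap_trans hac σ)).concat hlast, ?_⟩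
    have hq : q.length ≠ 0 := fun h => hcb (Walk.eq_of_length_eq_zero h)
    simp only [Walk.length_concat, Walk.length_cons]
    omega

theorem exists_walk_swap_trans_of_reachable [Fintype α] {a b : α} (h : X.Reachable a b)
    (hab : a ≠ b) (σ : α ≃ β) : ∃ w : (FS X ⊤).Walk σ ((swap a b).trans σ),
      w.length ≤ 2 * (Fintype.card α - 1) - 1 := by
  obtain ⟨p, hp⟩ := h.exists_isPath
  obtain ⟨w, hw⟩ := exists_walk_swap_trans p hab σ
  exact ⟨w, hw.trans (by have := hp.length_lt; omega)⟩

end Swap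

variable [Fintype α] [DecidableEq β]

def disagree (σ τ : α ≃ β) : Finset α := {x | σ x ≠ τ x}

@[simp]
theorem mem_disagree {σ τ : α ≃ β} {x : α} :
    x ∈ disagree σ τ ↔ σ x ≠ τ x := by
  simp [disagree]

variable [DecidableEq α]

/-- The new bijection agrees with `τ` at `a` and wherever `σ` did. -/
theorem card_disagree_swap_trans_lt {σ τ : α ≃ β} {a : α} (ha : σ a ≠ τ a) :
    #(disagree ((swap a (σ.symm (τ a))).trans σ) τ) < #(disagree σ τ) := by
  set b := σ.symm (τ a)
  have hb : σ b = τ a := σ.apply_symm_apply _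
  have hsub : disagree ((swap a b).trans σ) τ ⊆ disagree σ τ := by
    intro x hx
    rw [mem_disagree, trans_apply] at hx
    rw [mem_disagree]
    rcases eq_or_ne x a with rfl | hxa
    · simp [hb] at hx
    rcases eq_or_ne x b with rfl | hxb
    · rw [hb]
      exact τ.injective.ne hxa.symm
    rwa [swap_apply_of_ne_of_ne hxa hxb] at hx
  refine card_lt_card ((ssubset_iff_of_subset hsub).mpr ⟨a, mem_disagree.mpr ha, ?_⟩)
  simp [hb]

theorem dist_le_of_reachable {σ τ : α ≃ β}
    (h : (FS X ⊤).Reachable σ τ) :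
    (FS X ⊤).dist σ τ ≤ (#(disagree σ τ) - 1) * (2 * (Fintype.card α - 1) - 1) := by
  set c := 2 * (Fintype.card α - 1) - 1
  induction hk : #(disagree σ τ) using Nat.strong_induction_on generalizing σ with
  | _ k ih =>
  by_cases hστ : σ = τ
  · subst hστ
    simp
  obtain ⟨a, ha⟩ : ∃ a, σ a ≠ τ a := not_forall.mp (mt Equiv.ext hστ)
  set b := σ.symm (τ a)
  have hb : σ b = τ a := σ.apply_symm_apply _
  have hba : b ≠ a := fun h => ha (h ▸ hb)
  have hk_gt_one : 1 < k := hk ▸ one_lt_card.mpr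
    ⟨a, mem_disagree.mpr ha, b, mem_disagree.mpr (hb ▸ τ.injective.ne hba.symm), hba.symm⟩
  obtain ⟨w, hw⟩ :=
    exists_walk_swap_trans_of_reachable (reachable_symm_apply_of_reachable h a) hba.symm σ
  have hk' : #(disagree ((swap a b).trans σ) τ) < k := hk ▸ card_disagree_swap_trans_lt ha
  calc (FS X ⊤).dist σ τ
        ≤ (FS X ⊤).dist σ ((swap a b).trans σ) + (FS X ⊤).dist ((swap a b).trans σ) τ :=
        w.reachable.dist_triangle_left τ
    _ ≤ c + (#(disagree ((swap a b).trans σ) τ) - 1) * c :=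
        add_le_add ((dist_le w).trans hw) (ih _ hk' (w.reachable.symm.trans h) rfl)
    _ = (#(disagree ((swap a b).trans σ) τ) - 1 + 1) * c := by ring
    _ ≤ (k - 1) * c := Nat.mul_le_mul_right c (by omega)

end FS

theorem fs_complete_component_diam_general (n : ℕ) (X : SimpleGraph (Fin n))
    (σ τ : Fin n ≃ Fin n)
    (h : (FS X (⊤ : SimpleGraph (Fin n))).Reachable σ τ) :
    (FS X (⊤ : SimpleGraph (Fin n))).dist σ τ ≤ (n - 1) * ((n - 1) + (n - 2)) := by
  have hdist := FS.dist_le_of_reachable h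
  have hcard : #(FS.disagree σ τ) ≤ n := (card_le_univ _).trans_eq (Fintype.card_fin n)
  rw [Fintype.card_fin] at hdist
  exact hdist.trans (Nat.mul_le_mul (by omega) (by omega))

/-- For `n ≥ 2` and any `n`-vertex simple graph `X`, every connected component
of `FS(X, K_n)` has diameter at most `2n² - 5n + 3 = (n - 1) * ((n - 1) + (n - 2))`. -/
theorem fs_complete_component_diam (n : ℕ) (hn : 2 ≤ n) (X : SimpleGraph (Fin n))
    (σ τ : Fin n ≃ Fin n)
    (h : (FS X (⊤ : SimpleGraph (Fin n))).Reachable σ τ) :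
    (FS X (⊤ : SimpleGraph (Fin n))).dist σ τ ≤ (n - 1) * ((n - 1) + (n - 2)) :=
  fs_complete_component_diam_general n X σ τ h
end

section
/- Let Y be a simple graph on vertex set {1,…,n}, let α be an acyclic orientation of the complement of Y, let σ be a linear extension of the poset P_α, and let H_α denote the connected component of FS(Path_n, Y) containing σ. Then the diameter of H_α is at most C(n,2) − p_α, where p_α is the number of ordered pairs (i,j) with 1 ≤ i < j ≤ n such that i and j are comparable in P_α. -/
open SimpleGraph

/-!
A move of `FS(Path_n, Y)` swaps the entries in two consecutive positions that are adjacent in `Y`,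
so it never reverses a pair that is adjacent in `Yᶜ`: the component of a linear extension of
`P_α` consists of linear extensions, and any two of them order every comparable pair alike.
Conversely, bubble sort joins two linear extensions `τ₁ ≠ τ₂` inside `FS(Path_n, Y)`: some
consecutive entries of `τ₁` are in the wrong order for `τ₂`, they are incomparable in `P_α`, hence
adjacent in `Y`, and swapping them removes exactly one inversion. So the distance is at most the
number of inversions, all of which are incomparable pairs.
-/

open Finset

namespace Equiv

variable {α β : Type*}

theorem swap_lt_swap_iff_of_covBy [LinearOrder α] {a b x y : α} (hab : a ⋖ b) :
    swap a b x < swap a b y ↔ x < y ∧ ¬(x = a ∧ y = b) ∨ x = b ∧ y = a := by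
  have hlt := hab.lt
  have hcov : ∀ c, c ≤ a ∨ b ≤ c := fun c => (lt_or_ge c b).imp_left hab.le_of_lt
  have hx := hcov x
  have hy := hcov y
  simp only [swap_apply_def]
  split_ifs <;> grind

section inversions

variable [LinearOrder α] [Fintype β]

/-- Each unordered pair on which the orders `τ₁` and `τ₂` disagree occurs exactly once. -/
def inversions (τ₁ τ₂ : α ≃ β) : Finset (β × β) :=
  {p | τ₁.symm p.1 < τ₁.symm p.2 ∧ τ₂.symm p.2 < τ₂.symm p.1}

variable {τ₁ τ₂ : α ≃ β} {u v : β}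

@[simp]
theorem mem_inversions :
    (u, v) ∈ τ₁.inversions τ₂ ↔ τ₁.symm u < τ₁.symm v ∧ τ₂.symm v < τ₂.symm u := by
  simp [inversions]

theorem ne_of_mem_inversions (h : (u, v) ∈ τ₁.inversions τ₂) : u ≠ v := by
  rintro rfl
  exact (mem_inversions.1 h).1.false

theorem exists_covBy_mem_inversions [Finite α] [LocallyFiniteOrder α] (h : τ₁ ≠ τ₂) :
    ∃ k k', k ⋖ k' ∧ (τ₁ k, τ₁ k') ∈ τ₁.inversions τ₂ := by
  by_contra! hmono
  refine h (Equiv.ext fun k => τ₂.symm_apply_eq.1 ?_)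
  refine StrictMono.apply_eq (f := fun k => τ₂.symm (τ₁ k)) ?_
  refine (strictMono_iff_forall_covBy _).2 fun a b hab => ?_
  have hle : τ₂.symm (τ₁ a) ≤ τ₂.symm (τ₁ b) := by
    simpa [hab.lt] using hmono a b hab
  exact hle.lt_of_ne (by simpa using hab.ne)

theorem inversions_eq_empty_iff [Finite α] [LocallyFiniteOrder α] :
    τ₁.inversions τ₂ = ∅ ↔ τ₁ = τ₂ := by
  refine ⟨fun h => ?_, ?_⟩
  · by_contra hne
    obtain ⟨k, k', -, hmem⟩ := exists_covBy_mem_inversions hne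
    simp [h] at hmem
  · rintro rfl
    ext ⟨u, v⟩
    simp only [mem_inversions, notMem_empty, iff_false, not_and]
    exact lt_asymm

theorem inversions_swap_trans [DecidableEq β] {k k' : α} (hk : k ⋖ k')
    (hmem : (τ₁ k, τ₁ k') ∈ τ₁.inversions τ₂) :
    ((swap k k').trans τ₁).inversions τ₂ = (τ₁.inversions τ₂).erase (τ₁ k, τ₁ k') := by
  ext ⟨u, v⟩
  obtain ⟨x, rfl⟩ := τ₁.surjective u
  obtain ⟨y, rfl⟩ := τ₁.surjective v
  rw [mem_inversions] at hmem
  simp only [mem_inversions, mem_erase, symm_trans_apply, symm_swap, symm_apply_apply,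
    swap_lt_swap_iff_of_covBy hk, ne_eq, Prod.mk.injEq, τ₁.injective.eq_iff] at hmem ⊢
  grind

end inversions

end Equiv

open Equiv

theorem fs_adj_iff {α β : Type*} [DecidableEq α] {X : SimpleGraph α} {Y : SimpleGraph β}
    {σ τ : α ≃ β} :
    (FS X Y).Adj σ τ ↔ ∃ a b, X.Adj a b ∧ Y.Adj (σ a) (σ b) ∧ τ = (swap a b).trans σ := by
  refine ⟨fun ⟨a, b, hX, hY, ha, hb, hc⟩ => ⟨a, b, hX, hY, Equiv.ext fun c => ?_⟩, ?_⟩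
  · rcases eq_or_ne c a with rfl | hca
    · simp [hb]
    rcases eq_or_ne c b with rfl | hcb
    · simp [ha]
    · simp [swap_apply_of_ne_of_ne hca hcb, hc c hca hcb]
  · rintro ⟨a, b, hX, hY, rfl⟩
    refine ⟨a, b, hX, hY, by simp, by simp, fun c hca hcb => ?_⟩
    simp [swap_apply_of_ne_of_ne hca hcb]

namespace AcyclicOrientation

variable {n : ℕ} {β : Type*} {Y : SimpleGraph β} (A : AcyclicOrientation Yᶜ)

def IsLinearExtension (τ : Fin n ≃ β) : Prop :=
  ∀ u v, A.toRel u v → τ.symm u < τ.symm v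

variable {A} {τ τ' τ₁ τ₂ : Fin n ≃ β}

theorem isLinearExtension_iff :
    A.IsLinearExtension τ ↔
      ∀ u v, Relation.ReflTransGen A.toRel u v → τ.symm u ≤ τ.symm v := by
  refine ⟨fun h u v huv => ?_, fun h u v huv => ?_⟩
  · induction huv with
    | refl => exact le_rfl
    | tail _ hvw ih => exact ih.trans (h _ _ hvw).le
  · exact (h u v (.single huv)).lt_of_ne
      fun e => (A.adj_of_rel u v huv).ne (τ.symm.injective e)

theorem IsLinearExtension.swap_trans (h : A.IsLinearExtension τ) {k k' : Fin n} (hk : k ⋖ k')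
    (hY : Y.Adj (τ k) (τ k')) : A.IsLinearExtension ((swap k k').trans τ) := by
  intro u v huv
  simp only [symm_trans_apply, symm_swap, swap_lt_swap_iff_of_covBy hk]
  refine .inl ⟨h u v huv, ?_⟩
  rintro ⟨rfl, rfl⟩
  rw [apply_symm_apply, apply_symm_apply] at hY
  exact (A.adj_of_rel _ _ huv).2 hY

theorem IsLinearExtension.of_adj (h : A.IsLinearExtension τ)
    (hadj : (FS (pathGraph n) Y).Adj τ τ') : A.IsLinearExtension τ' := by
  obtain ⟨a, b, hab | hba, hY, rfl⟩ := fs_adj_iff.1 hadj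
  · exact h.swap_trans hab hY
  · rw [swap_comm]
    exact h.swap_trans hba hY.symm

theorem IsLinearExtension.of_reachable (h : A.IsLinearExtension τ)
    (hreach : (FS (pathGraph n) Y).Reachable τ τ') : A.IsLinearExtension τ' := by
  rw [SimpleGraph.reachable_iff_reflTransGen] at hreach
  induction hreach with
  | refl => exact h
  | tail _ hadj ih => exact ih.of_adj hadj

variable [Fintype β]

theorem IsLinearExtension.not_comparable_of_mem_inversions (h₁ : A.IsLinearExtension τ₁)
    (h₂ : A.IsLinearExtension τ₂) {u v : β} (huv : (u, v) ∈ τ₁.inversions τ₂) :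
    ¬(Relation.ReflTransGen A.toRel u v ∨ Relation.ReflTransGen A.toRel v u) := by
  rw [mem_inversions] at huv
  rintro (hr | hr)
  · exact (isLinearExtension_iff.1 h₂ _ _ hr).not_gt huv.2
  · exact (isLinearExtension_iff.1 h₁ _ _ hr).not_gt huv.1

theorem IsLinearExtension.adj_of_mem_inversions (h₁ : A.IsLinearExtension τ₁)
    (h₂ : A.IsLinearExtension τ₂) {u v : β} (huv : (u, v) ∈ τ₁.inversions τ₂) : Y.Adj u v := by
  by_contra hY
  have hcompl : Yᶜ.Adj u v := (Y.compl_adj u v).2 ⟨ne_of_mem_inversions huv, hY⟩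
  exact h₁.not_comparable_of_mem_inversions h₂ huv <|
    (A.rel_total u v hcompl).imp .single .single

theorem IsLinearExtension.exists_walk_length_eq_card_inversions [DecidableEq β]
    (h₁ : A.IsLinearExtension τ₁) (h₂ : A.IsLinearExtension τ₂) :
    ∃ w : (FS (pathGraph n) Y).Walk τ₁ τ₂, w.length = #(τ₁.inversions τ₂) := by
  induction hm : #(τ₁.inversions τ₂) generalizing τ₁ with
  | zero =>
    obtain rfl := inversions_eq_empty_iff.1 (card_eq_zero.1 hm)
    exact ⟨.nil, rfl⟩
  | succ m ih =>
    have hne : τ₁ ≠ τ₂ := by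
      rintro rfl
      simp [inversions_eq_empty_iff.2 rfl] at hm
    obtain ⟨k, k', hk, hmem⟩ := exists_covBy_mem_inversions hne
    have hY := h₁.adj_of_mem_inversions h₂ hmem
    have hadj : (FS (pathGraph n) Y).Adj τ₁ ((swap k k').trans τ₁) :=
      fs_adj_iff.2 ⟨k, k', .inl hk, hY, rfl⟩
    obtain ⟨w, hw⟩ := ih (h₁.swap_trans hk hY) <| by
      rw [inversions_swap_trans hk hmem, card_erase_of_mem hmem, hm, Nat.add_sub_cancel]
    exact ⟨.cons hadj w, by simp [hw]⟩

theorem IsLinearExtension.card_inversions_le [LinearOrder β]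
    [DecidableRel (Relation.ReflTransGen A.toRel)]
    (h₁ : A.IsLinearExtension τ₁) (h₂ : A.IsLinearExtension τ₂) :
    #(τ₁.inversions τ₂) ≤ #{p : β × β | p.1 < p.2 ∧
      ¬(Relation.ReflTransGen A.toRel p.1 p.2 ∨ Relation.ReflTransGen A.toRel p.2 p.1)} := by
  refine card_le_card_of_injOn (fun p => if p.1 < p.2 then p else p.swap) ?_ ?_
  · rintro ⟨u, v⟩ hp
    have hinc := h₁.not_comparable_of_mem_inversions h₂ hp
    have hne := ne_of_mem_inversions hp
    simp only [coe_filter, mem_univ, true_and, Set.mem_ofPred_eq]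
    split_ifs with huv
    · exact ⟨huv, hinc⟩
    · exact ⟨(not_lt.1 huv).lt_of_ne hne.symm, by rwa [or_comm]⟩
  · -- `(u, v)` and `(v, u)` are never both inversions
    rintro ⟨u, v⟩ hp ⟨u', v'⟩ hq he
    simp only [mem_coe, mem_inversions] at hp hq
    simp only at he
    split_ifs at he <;> grind

end AcyclicOrientation

theorem card_filter_lt_and_not {γ : Type*} [LinearOrder γ] [Fintype γ] (P : γ × γ → Prop)
    [DecidablePred P] :
    #{p : γ × γ | p.1 < p.2 ∧ ¬P p} =
      (Fintype.card γ).choose 2 - #{p : γ × γ | p.1 < p.2 ∧ P p} := by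
  rw [← Fintype.card_product_filter_lt,
    ← card_filter_add_card_filter_not (s := {x : γ × γ | x.1 < x.2}) P,
    filter_filter, filter_filter, Nat.add_sub_cancel_left]

/-- Let `Y` be a graph on `{1, …, n}`, `α` an acyclic orientation of `Yᶜ`,
and `σ` a linear extension of the poset `P_α`. Then the connected component of
`FS(Path_n, Y)` containing `σ` has diameter at most `C(n, 2) - p_α`, where `p_α` is the number
of pairs `i < j` comparable in `P_α`. -/
theorem fs_path_component_diam_le (n : ℕ) (Y : SimpleGraph (Fin n))
    (α : AcyclicOrientation Yᶜ) (σ : Fin n ≃ Fin n)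
    (hσ : ∀ i j : Fin n, Relation.ReflTransGen α.toRel i j → σ.symm i ≤ σ.symm j)
    (τ₁ τ₂ : Fin n ≃ Fin n)
    (h₁ : (FS (pathGraph n) Y).Reachable σ τ₁)
    (h₂ : (FS (pathGraph n) Y).Reachable σ τ₂) :
    (FS (pathGraph n) Y).dist τ₁ τ₂ ≤
      Nat.choose n 2 -
        {p : Fin n × Fin n | p.1 < p.2 ∧
          (Relation.ReflTransGen α.toRel p.1 p.2 ∨
            Relation.ReflTransGen α.toRel p.2 p.1)}.ncard := by
  classical
  have hσ' := AcyclicOrientation.isLinearExtension_iff.2 hσ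
  have hτ₁ := hσ'.of_reachable h₁
  have hτ₂ := hσ'.of_reachable h₂
  obtain ⟨w, hw⟩ := hτ₁.exists_walk_length_eq_card_inversions hτ₂
  set C : Fin n × Fin n → Prop := fun p =>
    Relation.ReflTransGen α.toRel p.1 p.2 ∨ Relation.ReflTransGen α.toRel p.2 p.1
  calc (FS (pathGraph n) Y).dist τ₁ τ₂ ≤ #(τ₁.inversions τ₂) := hw ▸ SimpleGraph.dist_le w
    _ ≤ #{p : Fin n × Fin n | p.1 < p.2 ∧ ¬C p} := hτ₁.card_inversions_le hτ₂
    _ = n.choose 2 - {p : Fin n × Fin n | p.1 < p.2 ∧ C p}.ncard := by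
      rw [card_filter_lt_and_not, Fintype.card_fin, Set.ncard_eq_toFinset_card',
        Set.toFinset_ofPred]
end

section
/- For every n ≥ 1 and every simple graph Y on n vertices, the diameter of any connected component of the friends-and-strangers graph FS(Path_n, Y) is at most |E(Y)|, the number of edges of Y. -/
/-!
A move in `FS(Path_n, Y)` exchanges the vertices of `Y` sitting at two consecutive positions, and
these must be `Y`-adjacent; so the relative order of two non-adjacent vertices is constant on a
component. If `σ ≠ τ` lie in one component, some two consecutive vertices of `σ` appear in the
reverse order in `τ`; they must therefore form an edge of `Y`, and swapping them removes exactly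
this edge from the set of `Y`-edges ordered differently by `σ` and `τ`. Induction on the size of
that set bounds `dist(σ, τ)` by it, hence by `|E(Y)|`.
-/

open SimpleGraph

open Equiv

section

variable {α β : Type*}

theorem fs_adj_iff_exists_swap [DecidableEq α] {X : SimpleGraph α} {Y : SimpleGraph β}
    {σ τ : α ≃ β} :
    (FS X Y).Adj σ τ ↔ ∃ a b, X.Adj a b ∧ Y.Adj (σ a) (σ b) ∧ τ = (swap a b).trans σ := by
  constructor
  · rintro ⟨a, b, hX, hY, hab, hba, hrest⟩
    refine ⟨a, b, hX, hY, Equiv.ext fun c => ?_⟩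
    rw [trans_apply, swap_apply_def]
    split_ifs with hca hcb
    · rw [hca, hba]
    · rw [hcb, hab]
    · exact (hrest c hca hcb).symm
  · rintro ⟨a, b, hX, hY, rfl⟩
    refine ⟨a, b, hX, hY, by simp, by simp, fun c hca hcb => ?_⟩
    simp [swap_apply_of_ne_of_ne hca hcb]

variable {n : ℕ} {Y : SimpleGraph β}

theorem fs_pathGraph_adj_iff {σ τ : Fin n ≃ β} :
    (FS (pathGraph n) Y).Adj σ τ ↔
      ∃ a b : Fin n, (a : ℕ) + 1 = b ∧ Y.Adj (σ a) (σ b) ∧ τ = (swap a b).trans σ := by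
  simp only [fs_adj_iff_exists_swap, pathGraph_adj]
  constructor
  · rintro ⟨a, b, hab | hba, hY, rfl⟩
    · exact ⟨a, b, hab, hY, rfl⟩
    · exact ⟨b, a, hba, hY.symm, by rw [swap_comm]⟩
  · rintro ⟨a, b, hab, hY, rfl⟩
    exact ⟨a, b, Or.inl hab, hY, rfl⟩

theorem Fin.swap_lt_swap_iff {a b x y : Fin n} (hab : (a : ℕ) + 1 = b)
    (hxy : s(x, y) ≠ s(a, b)) : swap a b x < swap a b y ↔ x < y := by
  simp only [ne_eq, Sym2.eq_iff, not_or, not_and, Fin.ext_iff] at hxy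
  simp only [swap_apply_def, Fin.lt_def, Fin.ext_iff]
  split_ifs <;> omega

theorem fs_pathGraph_adj_symm_lt_iff {σ τ : Fin n ≃ β} (h : (FS (pathGraph n) Y).Adj σ τ)
    {u v : β} (huv : ¬Y.Adj u v) : τ.symm u < τ.symm v ↔ σ.symm u < σ.symm v := by
  obtain ⟨a, b, hab, hY, rfl⟩ := fs_pathGraph_adj_iff.1 h
  simp only [symm_trans_apply, symm_swap]
  refine Fin.swap_lt_swap_iff hab fun he => huv ?_
  have : s(u, v) = s(σ a, σ b) := by simpa using congrArg (Sym2.map σ) he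
  rwa [← mem_edgeSet, this]

theorem fs_pathGraph_reachable_symm_lt_iff {σ τ : Fin n ≃ β}
    (h : (FS (pathGraph n) Y).Reachable σ τ) {u v : β} (huv : ¬Y.Adj u v) :
    τ.symm u < τ.symm v ↔ σ.symm u < σ.symm v := by
  obtain ⟨p⟩ := h
  induction p with
  | nil => rfl
  | cons hadj _ ih => exact ih.trans (fs_pathGraph_adj_symm_lt_iff hadj huv)

theorem exists_succ_descent {σ τ : Fin n ≃ β} (hne : σ ≠ τ) :
    ∃ a b : Fin n, (a : ℕ) + 1 = b ∧ τ.symm (σ b) < τ.symm (σ a) := by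
  by_contra! hasc
  refine hne (Equiv.ext fun i => (Equiv.symm_apply_eq τ).1 ?_)
  cases n with
  | zero => exact i.elim0
  | succ m =>
    have hmono : Monotone (σ.trans τ.symm) :=
      Fin.monotone_iff_le_succ.2 fun j => hasc _ _ (by simp)
    exact (hmono.strictMono_of_injective (σ.trans τ.symm).injective).apply_eq

def inversions [LinearOrder α] (Y : SimpleGraph β) (σ τ : α ≃ β) : Set (Sym2 β) :=
  {e ∈ Y.edgeSet | ∃ u v, e = s(u, v) ∧ σ.symm u < σ.symm v ∧ τ.symm v < τ.symm u}

theorem inversions_swap_ssubset {σ τ : Fin n ≃ β} {a b : Fin n} (hab : (a : ℕ) + 1 = b)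
    (hY : Y.Adj (σ a) (σ b)) (hdesc : τ.symm (σ b) < τ.symm (σ a)) :
    inversions Y ((swap a b).trans σ) τ ⊂ inversions Y σ τ := by
  have hab' : a < b := Fin.lt_def.2 (by omega)
  have hba : ¬b < a := hab'.asymm
  refine (Set.ssubset_iff_of_subset ?_).2
    ⟨s(σ a, σ b), ⟨hY, σ a, σ b, rfl, by simpa using hab', hdesc⟩, ?_⟩
  · rintro _ ⟨he, u, v, rfl, hlt, hτ⟩
    simp only [symm_trans_apply, symm_swap] at hlt
    by_cases hsab : s(σ.symm u, σ.symm v) = s(a, b)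
    · rcases Sym2.eq_iff.1 hsab with ⟨hu, hv⟩ | ⟨hu, hv⟩
      · rw [hu, hv, swap_apply_left, swap_apply_right] at hlt
        exact absurd hlt hba
      · rw [symm_apply_eq] at hu hv
        subst hu hv
        exact absurd hτ hdesc.asymm
    · exact ⟨he, u, v, rfl, (Fin.swap_lt_swap_iff hab hsab).1 hlt, hτ⟩
  · rintro ⟨-, u, v, huv, hlt, hτ⟩
    rcases Sym2.eq_iff.1 huv with ⟨rfl, rfl⟩ | ⟨rfl, rfl⟩
    · simp only [symm_trans_apply, symm_swap, symm_apply_apply, swap_apply_left,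
        swap_apply_right] at hlt
      exact hba hlt
    · exact hdesc.asymm hτ

theorem fs_pathGraph_dist_le_ncard_inversions {σ τ : Fin n ≃ β}
    (h : (FS (pathGraph n) Y).Reachable σ τ) :
    (FS (pathGraph n) Y).dist σ τ ≤ (inversions Y σ τ).ncard := by
  induction hk : (inversions Y σ τ).ncard using Nat.strong_induction_on generalizing σ with
  | _ k ih =>
  obtain rfl | hne := eq_or_ne σ τ
  · simp
  obtain ⟨a, b, hab, hdesc⟩ := exists_succ_descent hne
  have hY : Y.Adj (σ a) (σ b) := by
    by_contra hY
    have hσ : σ.symm (σ a) < σ.symm (σ b) := by simpa using Fin.lt_def.2 (by omega)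
    exact hdesc.asymm ((fs_pathGraph_reachable_symm_lt_iff h hY).2 hσ)
  set π := (swap a b).trans σ
  have hadj : (FS (pathGraph n) Y).Adj σ π := fs_pathGraph_adj_iff.2 ⟨a, b, hab, hY, rfl⟩
  have : Finite β := .of_equiv _ σ
  have hlt : (inversions Y π τ).ncard < k :=
    hk ▸ Set.ncard_lt_ncard (inversions_swap_ssubset hab hY hdesc)
  calc (FS (pathGraph n) Y).dist σ τ
      ≤ (FS (pathGraph n) Y).dist σ π + (FS (pathGraph n) Y).dist π τ :=
        hadj.reachable.dist_triangle_left τ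
    _ ≤ 1 + (inversions Y π τ).ncard := by
        rw [dist_eq_one_iff_adj.2 hadj]
        exact Nat.add_le_add_left (ih _ hlt (hadj.symm.reachable.trans h) rfl) 1
    _ ≤ k := by omega

end

theorem fs_path_component_diam_le_card_edges_general (n : ℕ) (Y : SimpleGraph (Fin n))
    (σ τ : Fin n ≃ Fin n) (h : (FS (pathGraph n) Y).Reachable σ τ) :
    (FS (pathGraph n) Y).dist σ τ ≤ Y.edgeSet.ncard :=
  (fs_pathGraph_dist_le_ncard_inversions h).trans (Set.ncard_le_ncard (Set.sep_subset _ _))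

/-- For every `n ≥ 1` and every `n`-vertex simple graph `Y`, the diameter of
any connected component of `FS(Path_n, Y)` is at most `|E(Y)|`. -/
theorem fs_path_component_diam_le_card_edges (n : ℕ) (hn : 1 ≤ n) (Y : SimpleGraph (Fin n))
    (σ τ : Fin n ≃ Fin n) (h : (FS (pathGraph n) Y).Reachable σ τ) :
    (FS (pathGraph n) Y).dist σ τ ≤ Y.edgeSet.ncard :=
  fs_path_component_diam_le_card_edges_general n Y σ τ h
end

section
/- Let Y be a simple graph on vertex set {1,…,n} and let σ and τ be two bijections lying in the same connected component of FS(Path_n, Y). Then the distance between σ and τ in FS(Path_n, Y) equals inv(σ,τ), the number of (σ,τ)-inversions. -/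
open SimpleGraph

/-! A move of `FS (hasse α) Y` swaps the values at two adjacent positions, so it reverses the
relative order of exactly one pair of values, and that pair is an edge of `Y`. Hence each move
changes the set of inversions by one element, which gives `dist ≥ inv`; moreover values that are
not adjacent in `Y` never pass each other, so all inversions of connected `σ`, `τ` are edges of `Y`.
Conversely, if `σ ≠ τ` then some adjacent positions carry values in the order opposite to `τ`;
that pair is an inversion, hence an edge of `Y`, and swapping it is a move removing one inversion.

Positions may range over any finite linear order `α`: `Path_n` is the Hasse diagram of `Fin n`. -/

open Finset
open scoped symmDiff

namespace FriendsAndStrangers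

variable {α β : Type*}

theorem fs_adj_iff [DecidableEq α] {X : SimpleGraph α} {Y : SimpleGraph β} {σ τ : α ≃ β} :
    (FS X Y).Adj σ τ ↔ ∃ a b, X.Adj a b ∧ Y.Adj (σ a) (σ b) ∧ τ = (Equiv.swap a b).trans σ := by
  constructor
  · rintro ⟨a, b, hX, hY, hab, hba, hc⟩
    refine ⟨a, b, hX, hY, Equiv.ext fun c => ?_⟩
    rcases eq_or_ne c a with rfl | hca
    · simp [hba]
    rcases eq_or_ne c b with rfl | hcb
    · simp [hab]
    · simp [Equiv.swap_apply_of_ne_of_ne hca hcb, hc c hca hcb]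
  · rintro ⟨a, b, hX, hY, rfl⟩
    exact ⟨a, b, hX, hY, by simp, by simp,
      fun c hca hcb => by simp [Equiv.swap_apply_of_ne_of_ne hca hcb]⟩

theorem swap_lt_swap_iff_of_covBy [LinearOrder α] {a b c d : α} (hab : a ⋖ b) :
    (Equiv.swap a b c < Equiv.swap a b d ↔ c < d) ↔ ¬(c = a ∧ d = b ∨ c = b ∧ d = a) := by
  have := hab.lt
  have := hab.lt_iff_le_left (z := c)
  have := hab.lt_iff_le_left (z := d)
  have := hab.lt_iff_le_right (z := c)
  have := hab.lt_iff_le_right (z := d)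
  simp only [Equiv.swap_apply_def]
  split_ifs <;> subst_vars <;> grind

theorem adj_min_max_iff [LinearOrder β] {Y : SimpleGraph β} {x y : β} :
    Y.Adj (min x y) (max x y) ↔ Y.Adj x y := by
  rcases le_total x y with h | h <;> simp [h, Y.adj_comm]

theorem exists_covBy_lt_of_ne [LinearOrder α] [Finite α] {σ τ : α ≃ β} (h : σ ≠ τ) :
    ∃ a b : α, a ⋖ b ∧ τ.symm (σ b) < τ.symm (σ a) := by
  have := Fintype.ofFinite α
  let := Fintype.toLocallyFiniteOrder (α := α)
  by_contra! hmono
  have : StrictMono (σ.trans τ.symm) := (strictMono_iff_forall_covBy _).2 fun a b hab =>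
    (hmono a b hab).lt_of_ne ((σ.trans τ.symm).injective.ne hab.lt.ne)
  apply h
  ext a
  exact τ.symm_apply_eq.1 (congrFun this.eq_id a)

section Inversions

variable [LinearOrder α] [LinearOrder β] [Fintype β]

def inversions (σ τ : α ≃ β) : Finset (β × β) :=
  {p | p.1 < p.2 ∧ ((σ.symm p.1 < σ.symm p.2 ∧ τ.symm p.2 < τ.symm p.1) ∨
    (σ.symm p.2 < σ.symm p.1 ∧ τ.symm p.1 < τ.symm p.2))}

theorem coe_inversions (σ τ : α ≃ β) :
    (inversions σ τ : Set (β × β)) = {p | p.1 < p.2 ∧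
      ((σ.symm p.1 < σ.symm p.2 ∧ τ.symm p.2 < τ.symm p.1) ∨
        (σ.symm p.2 < σ.symm p.1 ∧ τ.symm p.1 < τ.symm p.2))} :=
  coe_filter _ _ |>.trans (by simp)

theorem mem_inversions {σ τ : α ≃ β} {p : β × β} :
    p ∈ inversions σ τ ↔ p.1 < p.2 ∧ ¬(σ.symm p.1 < σ.symm p.2 ↔ τ.symm p.1 < τ.symm p.2) := by
  simp only [inversions, mem_filter, mem_univ, true_and, and_congr_right_iff]
  intro hp
  have hσ := σ.symm.injective.ne hp.ne
  have hτ := τ.symm.injective.ne hp.ne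
  grind

theorem inversions_self (σ : α ≃ β) : inversions σ σ = ∅ := by
  ext p
  simp [mem_inversions]

theorem inversions_comm (σ τ : α ≃ β) : inversions σ τ = inversions τ σ := by
  ext p
  simp only [mem_inversions, iff_comm (a := σ.symm p.1 < σ.symm p.2)]

theorem inversions_symmDiff (σ ρ τ : α ≃ β) :
    inversions σ ρ ∆ inversions ρ τ = inversions σ τ := by
  ext p
  simp only [mem_symmDiff, mem_inversions]
  tauto

theorem min_max_mem_inversions_iff {σ τ : α ≃ β} {x y : β} (hxy : x ≠ y) :
    (min x y, max x y) ∈ inversions σ τ ↔ ¬(σ.symm x < σ.symm y ↔ τ.symm x < τ.symm y) := by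
  have hσ := σ.symm.injective.ne hxy
  have hτ := τ.symm.injective.ne hxy
  rcases hxy.lt_or_gt with h | h
  · simp [mem_inversions, h, h.le]
  · simp only [mem_inversions, min_eq_right h.le, max_eq_left h.le, h, true_and]
    grind

theorem inversions_swap_trans_of_covBy (σ : α ≃ β) {a b : α} (hab : a ⋖ b) :
    inversions σ ((Equiv.swap a b).trans σ) = {(min (σ a) (σ b), max (σ a) (σ b))} := by
  ext ⟨i, j⟩
  obtain ⟨c, rfl⟩ := σ.surjective i
  obtain ⟨d, rfl⟩ := σ.surjective j
  simp only [mem_inversions, Equiv.symm_trans_apply, Equiv.symm_apply_apply, Equiv.symm_swap,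
    iff_comm (a := c < d), swap_lt_swap_iff_of_covBy hab, not_not,
    mem_singleton, Prod.mk.injEq]
  rcases (σ.injective.ne hab.lt.ne).lt_or_gt with h | h
  · simp only [min_eq_left h.le, max_eq_right h.le, σ.injective.eq_iff]
    grind
  · simp only [min_eq_right h.le, max_eq_left h.le, σ.injective.eq_iff]
    grind

end Inversions

section Hasse

variable [LinearOrder α] [LinearOrder β] [Fintype β] {Y : SimpleGraph β}

theorem exists_inversions_eq_singleton_of_adj {σ τ : α ≃ β} (h : (FS (hasse α) Y).Adj σ τ) :
    ∃ p : β × β, Y.Adj p.1 p.2 ∧ inversions σ τ = {p} := by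
  obtain ⟨a, b, hab, hY, rfl⟩ := fs_adj_iff.1 h
  refine ⟨(min (σ a) (σ b), max (σ a) (σ b)), adj_min_max_iff.2 hY, ?_⟩
  rcases hasse_adj.1 hab with hab | hba
  · exact inversions_swap_trans_of_covBy σ hab
  · rw [Equiv.swap_comm, inversions_swap_trans_of_covBy σ hba, min_comm, max_comm]

theorem card_inversions_le_length {σ τ : α ≃ β} (w : (FS (hasse α) Y).Walk σ τ) :
    #(inversions σ τ) ≤ w.length := by
  induction w with
  | nil => simp [inversions_self]
  | @cons σ ρ τ h w ih =>
    obtain ⟨p, -, hp⟩ := exists_inversions_eq_singleton_of_adj h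
    calc #(inversions σ τ) = #(inversions σ ρ ∆ inversions ρ τ) := by rw [inversions_symmDiff]
      _ ≤ #(inversions σ ρ ∪ inversions ρ τ) := card_le_card symmDiff_le_sup
      _ ≤ #(inversions σ ρ) + #(inversions ρ τ) := card_union_le _ _
      _ ≤ (Walk.cons h w).length := by simp only [hp, card_singleton, Walk.length_cons]; omega

theorem adj_of_mem_inversions {σ τ : α ≃ β} (h : (FS (hasse α) Y).Reachable σ τ) :
    ∀ p ∈ inversions σ τ, Y.Adj p.1 p.2 := by
  obtain ⟨w⟩ := h
  induction w with
  | nil => simp [inversions_self]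
  | @cons σ ρ τ h w ih =>
    obtain ⟨q, hq, hσρ⟩ := exists_inversions_eq_singleton_of_adj h
    intro p hp
    rw [← inversions_symmDiff σ ρ τ, hσρ] at hp
    rcases mem_symmDiff.1 hp with ⟨hp, -⟩ | ⟨hp, -⟩
    · rwa [mem_singleton.1 hp]
    · exact ih p hp

theorem exists_walk_length_eq_card_inversions [Finite α] (σ : α ≃ β) {τ : α ≃ β}
    (h : ∀ p ∈ inversions σ τ, Y.Adj p.1 p.2) :
    ∃ w : (FS (hasse α) Y).Walk σ τ, w.length = #(inversions σ τ) := by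
  by_cases hστ : σ = τ
  · subst hστ
    exact ⟨.nil, by simp [inversions_self]⟩
  obtain ⟨a, b, hab, hba⟩ := exists_covBy_lt_of_ne hστ
  set e := (min (σ a) (σ b), max (σ a) (σ b))
  have he : e ∈ inversions σ τ :=
    (min_max_mem_inversions_iff (σ.injective.ne hab.lt.ne)).2 (by simp [hab.lt, hba.not_gt])
  have hinv : inversions ((Equiv.swap a b).trans σ) τ = inversions σ τ \ {e} := by
    rw [← inversions_symmDiff _ σ, inversions_comm _ σ, inversions_swap_trans_of_covBy σ hab,
      symmDiff_of_le (singleton_subset_iff.2 he)]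
  have hcard : #(inversions ((Equiv.swap a b).trans σ) τ) + 1 = #(inversions σ τ) := by
    rw [hinv, card_sdiff_of_subset (singleton_subset_iff.2 he), card_singleton,
      Nat.sub_add_cancel (card_pos.2 ⟨e, he⟩)]
  have hadj : (FS (hasse α) Y).Adj σ ((Equiv.swap a b).trans σ) :=
    fs_adj_iff.2 ⟨a, b, hasse_adj.2 (.inl hab), adj_min_max_iff.1 (h e he), rfl⟩
  obtain ⟨w, hw⟩ := exists_walk_length_eq_card_inversions ((Equiv.swap a b).trans σ)
    (fun p hp => h p (sdiff_subset (hinv ▸ hp)))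
  exact ⟨.cons hadj w, by rw [Walk.length_cons, hw, hcard]⟩
termination_by #(inversions σ τ)
decreasing_by omega

theorem dist_fs_hasse_eq_card_inversions [Finite α] {σ τ : α ≃ β}
    (h : (FS (hasse α) Y).Reachable σ τ) :
    (FS (hasse α) Y).dist σ τ = #(inversions σ τ) := by
  apply le_antisymm
  · obtain ⟨w, hw⟩ := exists_walk_length_eq_card_inversions σ (adj_of_mem_inversions h)
    exact hw ▸ dist_le w
  · obtain ⟨w, hw⟩ := h.exists_walk_length_eq_dist
    exact hw ▸ card_inversions_le_length w

end Hasse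

end FriendsAndStrangers

/-- For bijections `σ`, `τ` lying in the same connected component of
`FS(Path_n, Y)`, the distance between `σ` and `τ` equals `inv(σ, τ)`, the number of
`(σ, τ)`-inversions. -/
theorem fs_path_dist_eq_inversions (n : ℕ) (Y : SimpleGraph (Fin n))
    (σ τ : Fin n ≃ Fin n) (h : (FS (pathGraph n) Y).Reachable σ τ) :
    (FS (pathGraph n) Y).dist σ τ =
      {p : Fin n × Fin n | p.1 < p.2 ∧
        ((σ.symm p.1 < σ.symm p.2 ∧ τ.symm p.2 < τ.symm p.1) ∨
          (σ.symm p.2 < σ.symm p.1 ∧ τ.symm p.1 < τ.symm p.2))}.ncard := by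
  rw [← FriendsAndStrangers.coe_inversions, Set.ncard_coe_finset]
  exact FriendsAndStrangers.dist_fs_hasse_eq_card_inversions h
end

section
/- Let n ≥ 3 and let Y be a simple graph on n vertices such that either Y has an isolated vertex or |E(Y)| ≤ n−2. Then the diameter of any connected component of the friends-and-strangers graph FS(Cycle_n, Y) is at most |E(Y)|. -/
/-!
A move of `FS(X, Y)` swaps two tokens that are adjacent in `Y`, so the `Y`-component of the
token sitting at a vertex of `X` never changes. Under either hypothesis `Y` is disconnected, so
some cycle edge `{c, c + 1}` carries tokens from different components and is never used: within
a component, `FS(Cycle_n, Y)` is `FS(Path_n, Y)` for the path obtained by cutting the cycle at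
that edge. On a path two tokens change their relative order only by being swapped with each
other, so every inversion between `σ` and a reachable `τ` is an edge of `Y`; and bubble sort,
which removes one inversion per move, reaches `τ` in as many moves as there are inversions.
-/

open SimpleGraph

theorem SimpleGraph.Reachable.dist_map_le {V W : Type*} {G : SimpleGraph V} {G' : SimpleGraph W}
    {u v : V} (f : G →g G') (h : G.Reachable u v) : G'.dist (f u) (f v) ≤ G.dist u v := by
  obtain ⟨w, hw⟩ := h.exists_walk_length_eq_dist
  rw [← hw, ← Walk.length_map f]
  exact dist_le _

theorem SimpleGraph.not_connected_of_exists_isolated_or_ncard_edgeSet_le {V : Type*} [Finite V]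
    [Nontrivial V] {G : SimpleGraph V}
    (h : (∃ v, ∀ u, ¬G.Adj v u) ∨ G.edgeSet.ncard ≤ Nat.card V - 2) : ¬G.Connected := by
  intro hG
  rcases h with ⟨v, hv⟩ | h
  · obtain ⟨u, hu⟩ := hG.preconnected.exists_adj_of_nontrivial v
    exact hv u hu
  · have hcard := hG.card_vert_le_card_edgeSet_add_one
    have := Finite.one_lt_card (α := V)
    rw [Nat.card_coe_set_eq] at hcard
    omega

theorem SimpleGraph.Connected.exists_adj_not_reachable_apply {α β : Type*} {X : SimpleGraph α}
    {Y : SimpleGraph β} (hX : X.Connected) (hY : ¬Y.Connected) (σ : α ≃ β) :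
    ∃ p q, X.Adj p q ∧ ¬Y.Reachable (σ p) (σ q) := by
  by_contra! h
  have hreach : ∀ p q, X.Reachable p q → Y.Reachable (σ p) (σ q) := by
    rintro p q ⟨w⟩
    induction w with
    | nil => rfl
    | cons hadj _ ih => exact (h _ _ hadj).trans ih
  have : Nonempty β := hX.nonempty.map σ
  exact hY ⟨fun u v => by simpa using hreach _ _ (hX.preconnected (σ.symm u) (σ.symm v))⟩

theorem SimpleGraph.exists_not_reachable_apply_add_one {β : Type*} {n : ℕ} {Y : SimpleGraph β}
    (hY : ¬Y.Connected) (σ : Fin (n + 2) ≃ β) : ∃ c, ¬Y.Reachable (σ c) (σ (c + 1)) := by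
  obtain ⟨p, q, hpq, hr⟩ := cycleGraph_connected.exists_adj_not_reachable_apply hY σ
  rcases cycleGraph_adj.1 hpq with h | h
  · obtain rfl := sub_eq_iff_eq_add'.1 h
    exact ⟨q, fun h => hr h.symm⟩
  · obtain rfl := sub_eq_iff_eq_add'.1 h
    exact ⟨p, hr⟩

def pathGraphIsoCycleGraphDeleteEdges (n : ℕ) (c : Fin (n + 3)) :
    pathGraph (n + 3) ≃g (cycleGraph (n + 3)).deleteEdges {s(c, c + 1)} where
  toEquiv := Equiv.addRight (c + 1)
  map_rel_iff' {k l} := by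
    have h₁ : ∀ j : Fin (n + 3), j + (c + 1) = c ↔ j = -1 := fun j => by
      rw [← eq_sub_iff_add_eq, sub_add_cancel_left]
    have h₀ : ∀ j : Fin (n + 3), j + (c + 1) = c + 1 ↔ j = 0 := fun j => add_eq_right
    simp only [Equiv.coe_addRight, deleteEdges_adj, cycleGraph_adj, add_sub_add_right_eq_sub,
      Set.mem_singleton_iff, Sym2.eq_iff, h₁, h₀, pathGraph_adj]
    rw [sub_eq_iff_eq_add', sub_eq_iff_eq_add']
    simp only [Fin.ext_iff, Fin.val_add_one, Fin.coe_neg_one, Fin.val_zero, Fin.val_last]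
    have := k.isLt
    have := l.isLt
    split_ifs <;> omega

theorem Equiv.swap_lt_swap_iff_of_covBy_s8 {α : Type*} [LinearOrder α] {a b x y : α} (hab : a ⋖ b)
    (h₁ : ¬(x = a ∧ y = b)) (h₂ : ¬(x = b ∧ y = a)) :
    swap a b x < swap a b y ↔ x < y := by
  have lt_iff : ∀ z, z ≠ a → z ≠ b → (a < z ↔ b < z) := fun z hza hzb =>
    ⟨fun h => (hab.ge_of_gt h).lt_of_ne hzb.symm, hab.lt.trans⟩
  have gt_iff : ∀ z, z ≠ a → z ≠ b → (z < a ↔ z < b) := fun z hza hzb =>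
    ⟨fun h => h.trans hab.lt, fun h => (hab.le_of_lt h).lt_of_ne hza⟩
  by_cases hxa : x = a <;> by_cases hxb : x = b <;> by_cases hya : y = a <;>
    by_cases hyb : y = b <;> subst_vars <;>
    simp_all [swap_apply_of_ne_of_ne, hab.lt.ne, hab.lt.ne']

theorem Equiv.Perm.exists_covBy_lt_of_ne_one {α : Type*} [LinearOrder α] [Finite α]
    {π : Perm α} (h : π ≠ 1) : ∃ a b, a ⋖ b ∧ π b < π a := by
  by_contra! hπ
  have := Fintype.ofFinite α
  let := Fintype.toLocallyFiniteOrder (α := α)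
  have hmono : StrictMono π := (strictMono_iff_forall_covBy π).2 fun a b hab =>
    (hπ a b hab).lt_of_ne (π.injective.ne hab.lt.ne)
  exact h (Equiv.ext (congrFun hmono.eq_id))

namespace FS

section General

variable {α β : Type*} {X X' : SimpleGraph α} {Y : SimpleGraph β} {σ τ : α ≃ β}

theorem adj_iff_exists_swap [DecidableEq α] :
    (FS X Y).Adj σ τ ↔
      ∃ a b, X.Adj a b ∧ Y.Adj (σ a) (σ b) ∧ τ = (Equiv.swap a b).trans σ := by
  constructor
  · rintro ⟨a, b, hX, hY, ha, hb, hc⟩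
    refine ⟨a, b, hX, hY, Equiv.ext fun c => ?_⟩
    rcases eq_or_ne c a with rfl | hca
    · simp [hb]
    rcases eq_or_ne c b with rfl | hcb
    · simp [ha]
    · simp [Equiv.swap_apply_of_ne_of_ne hca hcb, hc c hca hcb]
  · rintro ⟨a, b, hX, hY, rfl⟩
    exact ⟨a, b, hX, hY, by simp, by simp,
      fun c hca hcb => by simp [Equiv.swap_apply_of_ne_of_ne hca hcb]⟩

theorem mono (h : X ≤ X') : FS X Y ≤ FS X' Y :=
  fun _ _ ⟨a, b, hX, hrest⟩ => ⟨a, b, h hX, hrest⟩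

variable (Y) in
def homOfIso {γ : Type*} {Z : SimpleGraph γ} (φ : X ≃g Z) : FS X Y →g FS Z Y where
  toFun σ := φ.symm.toEquiv.trans σ
  map_rel' {σ τ} := by
    rintro ⟨a, b, hX, hY, ha, hb, hc⟩
    refine ⟨φ a, φ b, φ.map_adj_iff.2 hX, by simpa using hY, by simpa using ha,
      by simpa using hb, fun c hca hcb => hc _ ?_ ?_⟩
    · simpa [φ.symm_apply_eq] using hca
    · simpa [φ.symm_apply_eq] using hcb

theorem reachable_apply_of_adj (h : (FS X Y).Adj σ τ) (p : α) : Y.Reachable (σ p) (τ p) := by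
  obtain ⟨a, b, -, hY, ha, hb, hc⟩ := h
  rcases eq_or_ne p a with rfl | hpa
  · exact hb ▸ hY.reachable
  rcases eq_or_ne p b with rfl | hpb
  · exact ha ▸ hY.reachable.symm
  · rw [hc p hpa hpb]

/-- Since the `Y`-components of the tokens at `p` and at `q` never change, no move swaps across
the edge `{p, q}`. -/
theorem reachable_deleteEdges_of_not_reachable {p q : α} (hpq : ¬Y.Reachable (σ p) (σ q))
    (h : (FS X Y).Reachable σ τ) : (FS (X.deleteEdges {s(p, q)}) Y).Reachable σ τ := by
  obtain ⟨w⟩ := h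
  induction w with
  | nil => rfl
  | @cons σ ρ τ hadj _ ih =>
    have hρ : ¬Y.Reachable (ρ p) (ρ q) := fun hr => hpq <|
      ((reachable_apply_of_adj hadj p).trans hr).trans (reachable_apply_of_adj hadj q).symm
    refine Adj.reachable ?_ |>.trans (ih hρ)
    obtain ⟨a, b, hX, hY, hrest⟩ := hadj
    refine ⟨a, b, (deleteEdges_adj ..).2 ⟨hX, ?_⟩, hY, hrest⟩
    rw [Set.mem_singleton_iff, Sym2.eq_iff]
    rintro (⟨rfl, rfl⟩ | ⟨rfl, rfl⟩)
    exacts [hpq hY.reachable, hpq hY.reachable.symm]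

end General

section Path

variable {α β : Type*} [LinearOrder α] {Y : SimpleGraph β} {σ τ : α ≃ β}

def inversions (σ τ : α ≃ β) : Set (β × β) :=
  {z | σ.symm z.1 < σ.symm z.2 ∧ τ.symm z.2 < τ.symm z.1}

theorem exists_covBy_of_adj_hasse {ρ : α ≃ β} (h : (FS (hasse α) Y).Adj σ ρ) :
    ∃ a b, a ⋖ b ∧ Y.Adj (σ a) (σ b) ∧ ρ = (Equiv.swap a b).trans σ := by
  classical
  obtain ⟨a, b, hab | hba, hY, rfl⟩ := adj_iff_exists_swap.1 h
  · exact ⟨a, b, hab, hY, rfl⟩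
  · exact ⟨b, a, hba, hY.symm, by rw [Equiv.swap_comm]⟩

theorem mem_inversions_swap_iff {a b : α} (hab : a ⋖ b) {z : β × β}
    (h₁ : z ≠ (σ a, σ b)) (h₂ : z ≠ (σ b, σ a)) :
    z ∈ inversions ((Equiv.swap a b).trans σ) τ ↔ z ∈ inversions σ τ := by
  simp only [inversions, Set.mem_ofPred_eq, Equiv.symm_trans_apply, Equiv.symm_swap]
  rw [Equiv.swap_lt_swap_iff_of_covBy_s8 hab]
  · rintro ⟨h1, h2⟩; exact h₁ (Prod.ext (σ.symm_apply_eq.1 h1) (σ.symm_apply_eq.1 h2))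
  · rintro ⟨h1, h2⟩; exact h₂ (Prod.ext (σ.symm_apply_eq.1 h1) (σ.symm_apply_eq.1 h2))

theorem inversions_swap_of_mem {a b : α} (hab : a ⋖ b)
    (hmem : (σ a, σ b) ∈ inversions σ τ) :
    inversions ((Equiv.swap a b).trans σ) τ = inversions σ τ \ {(σ a, σ b)} := by
  ext z
  by_cases h₁ : z = (σ a, σ b)
  · simp [h₁, inversions, hab.lt.not_gt]
  by_cases h₂ : z = (σ b, σ a)
  · simp [h₂, inversions, hab.lt.not_gt, hmem.2.not_gt]
  · simp [mem_inversions_swap_iff hab h₁ h₂, h₁]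

/-- Two tokens change their relative order only when they are swapped with each other. -/
theorem adj_of_mem_inversions (h : (FS (hasse α) Y).Reachable σ τ) {z : β × β}
    (hz : z ∈ inversions σ τ) : Y.Adj z.1 z.2 := by
  obtain ⟨w⟩ := h
  induction w generalizing z with
  | nil => exact absurd hz.1 hz.2.not_gt
  | @cons σ ρ τ hadj _ ih =>
    obtain ⟨a, b, hab, hY, rfl⟩ := exists_covBy_of_adj_hasse hadj
    by_cases h₁ : z = (σ a, σ b)
    · exact h₁ ▸ hY
    by_cases h₂ : z = (σ b, σ a)
    · exact h₂ ▸ hY.symm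
    · exact ih ((mem_inversions_swap_iff hab h₁ h₂).2 hz)

theorem ncard_inversions_le [Finite β] (h : (FS (hasse α) Y).Reachable σ τ) :
    (inversions σ τ).ncard ≤ Y.edgeSet.ncard := by
  refine Set.ncard_le_ncard_of_injOn (fun z => s(z.1, z.2))
    (fun z hz => adj_of_mem_inversions h hz) ?_
  rintro ⟨u, v⟩ huv ⟨u', v'⟩ huv' he
  rcases Sym2.eq_iff.1 he with ⟨rfl, rfl⟩ | ⟨rfl, rfl⟩
  · rfl
  · exact absurd huv.1 huv'.1.not_gt

theorem exists_covBy_mem_inversions [Finite α] (h : σ ≠ τ) :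
    ∃ a b, a ⋖ b ∧ (σ a, σ b) ∈ inversions σ τ := by
  have hπ : σ.trans τ.symm ≠ 1 := fun h' => h (by
    ext a; simpa [τ.symm_apply_eq] using congrFun (congrArg DFunLike.coe h') a)
  obtain ⟨a, b, hab, hlt⟩ := Equiv.Perm.exists_covBy_lt_of_ne_one hπ
  exact ⟨a, b, hab, by simpa [inversions] using ⟨hab.lt, hlt⟩⟩

/-- Bubble sort: swapping an adjacent inversion, which is an edge of `Y` by
`adj_of_mem_inversions`, removes exactly that inversion. -/
theorem dist_le_ncard_inversions [Finite α] (h : (FS (hasse α) Y).Reachable σ τ) :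
    (FS (hasse α) Y).dist σ τ ≤ (inversions σ τ).ncard := by
  classical
  have : Finite β := .of_equiv α σ
  induction hk : (inversions σ τ).ncard generalizing σ with
  | zero =>
    obtain rfl | hne := eq_or_ne σ τ
    · simp
    obtain ⟨a, b, -, hmem⟩ := exists_covBy_mem_inversions hne
    exact absurd hk (Set.ncard_ne_zero_of_mem hmem)
  | succ k ih =>
    obtain rfl | hne := eq_or_ne σ τ
    · simp
    obtain ⟨a, b, hab, hmem⟩ := exists_covBy_mem_inversions hne
    set ρ := (Equiv.swap a b).trans σ
    have hadj : (FS (hasse α) Y).Adj σ ρ :=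
      adj_iff_exists_swap.2 ⟨a, b, hasse_adj.2 (.inl hab), adj_of_mem_inversions h hmem, rfl⟩
    have hρ : (inversions ρ τ).ncard = k := by
      rw [inversions_swap_of_mem hab hmem, Set.ncard_sdiff_singleton_of_mem hmem, hk,
        Nat.add_sub_cancel]
    calc (FS (hasse α) Y).dist σ τ
        ≤ (FS (hasse α) Y).dist σ ρ + (FS (hasse α) Y).dist ρ τ :=
          hadj.reachable.dist_triangle_left τ
      _ ≤ 1 + k := by
          rw [dist_eq_one_iff_adj.2 hadj]
          exact Nat.add_le_add_left (ih (hadj.symm.reachable.trans h) hρ) 1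
      _ = k + 1 := Nat.add_comm 1 k

theorem dist_le_ncard_edgeSet [Finite α] (h : (FS (hasse α) Y).Reachable σ τ) :
    (FS (hasse α) Y).dist σ τ ≤ Y.edgeSet.ncard :=
  have : Finite β := .of_equiv α σ
  (dist_le_ncard_inversions h).trans (ncard_inversions_le h)

theorem dist_le_ncard_edgeSet_of_iso [Finite α] {γ : Type*} {X : SimpleGraph γ}
    {σ τ : γ ≃ β} (φ : hasse α ≃g X) (h : (FS X Y).Reachable σ τ) :
    (FS X Y).dist σ τ ≤ Y.edgeSet.ncard := by
  have hφ : ∀ ρ : γ ≃ β, homOfIso Y φ (homOfIso Y φ.symm ρ) = ρ := fun ρ => by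
    ext; simp [homOfIso]
  rw [← hφ σ, ← hφ τ]
  exact ((h.map _).dist_map_le _).trans (dist_le_ncard_edgeSet (h.map _))

end Path

end FS

/-- Let `n ≥ 3` and let `Y` be an `n`-vertex graph which has an isolated
vertex or satisfies `|E(Y)| ≤ n - 2`. Then every connected component of `FS(Cycle_n, Y)` has
diameter at most `|E(Y)|`. -/
theorem fs_cycle_component_diam_of_sparse (n : ℕ) (hn : 3 ≤ n) (Y : SimpleGraph (Fin n))
    (hY : (∃ v : Fin n, ∀ u, ¬ Y.Adj v u) ∨ Y.edgeSet.ncard ≤ n - 2)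
    (σ τ : Fin n ≃ Fin n) (h : (FS (cycleGraph n) Y).Reachable σ τ) :
    (FS (cycleGraph n) Y).dist σ τ ≤ Y.edgeSet.ncard := by
  obtain ⟨m, rfl⟩ : ∃ m, n = m + 3 := ⟨n - 3, by omega⟩
  have hY' : ¬Y.Connected :=
    not_connected_of_exists_isolated_or_ncard_edgeSet_le (by rwa [Nat.card_fin])
  obtain ⟨c, hc⟩ := exists_not_reachable_apply_add_one hY' σ
  have h' := FS.reachable_deleteEdges_of_not_reachable hc h
  calc (FS (cycleGraph (m + 3)) Y).dist σ τ
      ≤ (FS ((cycleGraph (m + 3)).deleteEdges {s(c, c + 1)}) Y).dist σ τ :=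
        h'.dist_anti (FS.mono (deleteEdges_le _))
    _ ≤ Y.edgeSet.ncard :=
        FS.dist_le_ncard_edgeSet_of_iso (pathGraphIsoCycleGraphDeleteEdges m c) h'
end

section
/- For every n ≥ 3 and every simple graph Y on n vertices, if the friends-and-strangers graph FS(Cycle_n, Y) is connected, then its diameter is at most 4n³ + |E(Y)|. -/
set_option linter.unusedSectionVars false
set_option maxHeartbeats 1000000


open SimpleGraph

namespace FSProof
open Fin.NatCast
open Fin.CommRing

variable {n : ℕ}

/-- floor-division characterization -/
lemma ediv_eq_iff' {N d m : ℤ} (hN : 0 < N) : d / N = m ↔ N * m ≤ d ∧ d < N * (m + 1) := by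
  constructor
  · rintro rfl
    have h1 := Int.mul_ediv_add_emod d N
    have h2 := Int.emod_nonneg d (ne_of_gt hN)
    have h3 := Int.emod_lt_of_pos d hN
    constructor <;> nlinarith
  · rintro ⟨h1, h2⟩
    have ha := Int.ediv_le_ediv hN h1
    rw [Int.mul_ediv_cancel_left _ (ne_of_gt hN)] at ha
    have hb := Int.ediv_le_ediv hN (by omega : d ≤ N * (m+1) - 1)
    have h3 : (N * (m + 1) - 1) / N = m := by
      rw [show N * (m+1) - 1 = (N - 1) + N * m by ring,
        Int.add_mul_ediv_left _ _ (ne_of_gt hN), Int.ediv_eq_zero_of_lt (by omega) (by omega)]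
      ring
    omega

lemma ediv_sub_one {N d : ℤ} (hN : 0 < N) (h : d % N ≠ 0) : (d - 1) / N = d / N := by
  have h1 := Int.mul_ediv_add_emod d N
  have h2 := Int.emod_nonneg d (ne_of_gt hN)
  have h3 := Int.emod_lt_of_pos d hN
  have h4 : 1 ≤ d % N := by omega
  rw [ediv_eq_iff' hN]
  constructor <;> nlinarith

lemma ediv_add_one {N d : ℤ} (hN : 0 < N) (h : d % N ≠ N - 1) : (d + 1) / N = d / N := by
  have h1 := Int.mul_ediv_add_emod d N
  have h2 := Int.emod_nonneg d (ne_of_gt hN)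
  have h3 := Int.emod_lt_of_pos d hN
  have h4 : d % N ≤ N - 2 := by omega
  rw [ediv_eq_iff' hN]
  constructor <;> nlinarith

lemma ediv_sub_two {N d : ℤ} (hN : 1 < N) (h : d % N = 1) : (d - 2) / N = d / N - 1 := by
  have h1 := Int.mul_ediv_add_emod d N
  rw [ediv_eq_iff' (by omega)]
  constructor <;> nlinarith

lemma ediv_neg_of_emod_ne {N d : ℤ} (hN : 0 < N) (h : d % N ≠ 0) :
    (-d) / N = -(d / N) - 1 := by
  have h1 := Int.mul_ediv_add_emod d N
  have h2 := Int.emod_nonneg d (ne_of_gt hN)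
  have h3 := Int.emod_lt_of_pos d hN
  have h4 : 1 ≤ d % N := by omega
  rw [ediv_eq_iff' hN]
  constructor <;> nlinarith

lemma ediv_shift_le {N d e : ℤ} (hN : 0 < N) : (d + e) / N ≤ d / N + e / N + 1 := by
  have h1 := Int.mul_ediv_add_emod d N
  have h2 := Int.emod_nonneg d (ne_of_gt hN)
  have h3 := Int.emod_lt_of_pos d hN
  have h4 := Int.mul_ediv_add_emod e N
  have h5 := Int.emod_nonneg e (ne_of_gt hN)
  have h6 := Int.emod_lt_of_pos e hN
  have h7 := Int.ediv_le_ediv hN (by nlinarith : d + e ≤ N * (d / N + e / N + 1) + (N - 1))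
  rwa [show N * (d / N + e / N + 1) + (N - 1) = (N - 1) + N * (d/N + e/N + 1) by ring,
    Int.add_mul_ediv_left _ _ (ne_of_gt hN),
    Int.ediv_eq_zero_of_lt (a := N - 1) (b := N) (by omega) (by omega),
    zero_add] at h7

lemma le_ediv_shift {N d e : ℤ} (hN : 0 < N) : d / N + e / N ≤ (d + e) / N := by
  have h1 := Int.mul_ediv_add_emod d N
  have h2 := Int.emod_nonneg d (ne_of_gt hN)
  have h4 := Int.mul_ediv_add_emod e N
  have h5 := Int.emod_nonneg e (ne_of_gt hN)
  have h7 := Int.ediv_le_ediv hN (by omega : N * (d/N) + N * (e/N) ≤ d + e)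
  rwa [show N * (d/N) + N * (e/N) = N * (d/N + e/N) by ring,
    Int.mul_ediv_cancel_left _ (ne_of_gt hN)] at h7



section Conf

variable (n : ℕ)

/-- the pattern (relative winding) of tokens `a`,`b` in lifted configuration `x` -/
def pat (x : Fin n → ℤ) (a b : Fin n) : ℤ := (x b - x a) / (n : ℤ)

/-- `x` is a lifted configuration: residues mod `n` are distinct -/
def Inj (x : Fin n → ℤ) : Prop := ∀ s t : Fin n, x s % (n : ℤ) = x t % (n : ℤ) → s = t

/-- the elementary move: token `a` steps forward, token `b` steps back -/
def mv (x : Fin n → ℤ) (a b : Fin n) : Fin n → ℤ :=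
  fun t => if t = a then x a + 1 else if t = b then x b - 1 else x t

/-- total discrepancy between two lifted configurations -/
def cost (x y : Fin n → ℤ) : ℕ :=
  ∑ p : Fin n × Fin n, (pat n x p.1 p.2 - pat n y p.1 p.2).natAbs

variable {n}

lemma pat_self (x : Fin n → ℤ) (a : Fin n) : pat n x a a = 0 := by
  simp [pat]

lemma pat_decomp (x : Fin n → ℤ) (a b : Fin n) :
    x b - x a = (n : ℤ) * pat n x a b + (x b - x a) % (n : ℤ) :=
  (Int.mul_ediv_add_emod _ _).symm

variable [NeZero n] (hn : 3 ≤ n)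
include hn

lemma hNpos : (0 : ℤ) < (n : ℤ) := by exact_mod_cast Nat.lt_of_lt_of_le (by norm_num) hn

omit hn in
lemma emod_ne_zero {x : Fin n → ℤ} (hx : Inj n x) {a b : Fin n} (hab : a ≠ b) :
    (x b - x a) % (n : ℤ) ≠ 0 := by
  intro h
  have : x b % (n : ℤ) = x a % (n : ℤ) := Int.emod_eq_emod_iff_emod_sub_eq_zero.2 h
  exact hab (hx a b this.symm)

lemma pat_antisymm {x : Fin n → ℤ} (hx : Inj n x) {a b : Fin n} (hab : a ≠ b) :
    pat n x b a = - pat n x a b - 1 := by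
  have := emod_ne_zero hx hab
  have h := ediv_neg_of_emod_ne (hNpos hn) this
  rw [pat, pat, show x a - x b = -(x b - x a) by ring, h]

/-- residue (cycle position) of token `t` -/
def res (hn : 3 ≤ n) (x : Fin n → ℤ) (t : Fin n) : Fin n :=
  ⟨((x t) % (n : ℤ)).toNat, by
    have h1 := Int.emod_nonneg (x t) (ne_of_gt (hNpos hn))
    have h2 := Int.emod_lt_of_pos (x t) (hNpos hn)
    omega⟩

lemma res_coe (x : Fin n → ℤ) (t : Fin n) : ((res hn x t : Fin n) : ℤ) = x t % (n : ℤ) := by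
  simp only [res]
  exact Int.toNat_of_nonneg (Int.emod_nonneg _ (ne_of_gt (hNpos hn)))

lemma res_injective {x : Fin n → ℤ} (hx : Inj n x) : Function.Injective (res hn x) := by
  intro s t h
  apply hx
  have := congrArg (fun p : Fin n => ((p : ℕ) : ℤ)) h
  simpa only [res_coe] using this

/-- the bijection positions → tokens determined by a lifted configuration -/
noncomputable def toPerm (hn : 3 ≤ n) (x : Fin n → ℤ) (hx : Inj n x) : Fin n ≃ Fin n :=
  (Equiv.ofBijective (res hn x)
    ((Fintype.bijective_iff_injective_and_card _).2 ⟨res_injective hn hx, rfl⟩)).symm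

lemma toPerm_res {x : Fin n → ℤ} (hx : Inj n x) (t : Fin n) :
    toPerm hn x hx (res hn x t) = t :=
  Equiv.ofBijective_symm_apply_apply _ _ t

lemma res_toPerm {x : Fin n → ℤ} (hx : Inj n x) (p : Fin n) :
    res hn x (toPerm hn x hx p) = p :=
  (Equiv.ofBijective (res hn x) _).apply_symm_apply p

/-- the token one step ahead (clockwise) of token `t` -/
noncomputable def succT (hn : 3 ≤ n) (x : Fin n → ℤ) (hx : Inj n x) (t : Fin n) : Fin n :=
  toPerm hn x hx (res hn x t + 1)

lemma res_succT {x : Fin n → ℤ} (hx : Inj n x) (t : Fin n) :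
    res hn x (succT hn x hx t) = res hn x t + 1 := res_toPerm hn hx _

lemma val_one'' : ((1 : Fin n) : ℕ) = 1 := by
  rw [Fin.val_one']
  exact Nat.mod_eq_of_lt (by omega)

lemma emod_of_res_succ {x : Fin n → ℤ} {a b : Fin n} (h : res hn x b = res hn x a + 1) :
    (x b - x a) % (n : ℤ) = 1 := by
  have hN := hNpos hn
  have hb : x b % (n : ℤ) = (x a % (n : ℤ) + 1) % (n : ℤ) := by
    have h2 := congrArg (fun p : Fin n => ((p : ℕ) : ℤ)) h
    rw [res_coe hn x b, Fin.val_add, val_one'' hn] at h2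
    rw [h2]
    push_cast
    rw [res_coe hn x a]
  set r := x a % (n : ℤ) with hr
  have hr0 : 0 ≤ r := Int.emod_nonneg _ (ne_of_gt hN)
  have hr1 : r < (n : ℤ) := Int.emod_lt_of_pos _ hN
  have key : ((r + 1) % (n:ℤ) - r) % (n:ℤ) = 1 := by
    rcases eq_or_lt_of_le (by omega : r + 1 ≤ (n : ℤ)) with he | hlt
    · have h0 : (r + 1) % (n:ℤ) = 0 := by rw [he]; exact Int.emod_self
      rw [h0, ← Int.add_mul_emod_self_left (a := 0 - r) (b := (n:ℤ)) (c := 1),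
        show 0 - r + (n:ℤ) * 1 = 1 by omega]
      exact Int.emod_eq_of_lt (by omega) (by omega)
    · rw [Int.emod_eq_of_lt (by omega) hlt]
      simp only [add_sub_cancel_left]
      rw [Int.emod_eq_of_lt (by omega) (by omega)]
  calc (x b - x a) % (n:ℤ) = (x b % (n:ℤ) - x a % (n:ℤ)) % (n:ℤ) := by rw [Int.sub_emod]
    _ = ((r + 1) % (n:ℤ) - r) % (n:ℤ) := by rw [hb]
    _ = 1 := key

lemma res_succ_of_emod {x : Fin n → ℤ} {a b : Fin n} (h : (x b - x a) % (n:ℤ) = 1) :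
    res hn x b = res hn x a + 1 := by
  have hN := hNpos hn
  have hb : x b % (n : ℤ) = (x a % (n:ℤ) + 1) % (n : ℤ) := by
    conv_lhs => rw [show x b = x a + (x b - x a) by ring]
    rw [Int.add_emod, h]
  apply Fin.ext
  have : (((res hn x b : Fin n) : ℕ) : ℤ) = (((res hn x a + 1 : Fin n) : ℕ) : ℤ) := by
    rw [res_coe hn x b, Fin.val_add, val_one'' hn]
    push_cast
    rw [res_coe hn x a, hb]
  exact_mod_cast this

lemma res_iter {x : Fin n → ℤ} (hx : Inj n x) (t : Fin n) (k : ℕ) :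
    res hn x ((succT hn x hx)^[k] t) = res hn x t + (k : Fin n) := by
  induction k with
  | zero => simp
  | succ k ih =>
    rw [Function.iterate_succ_apply', res_succT hn hx, ih]
    push_cast
    ring

lemma chain_covers {x : Fin n → ℤ} (hx : Inj n x) (t₀ t : Fin n) :
    ∃ k < n, (succT hn x hx)^[k] t₀ = t := by
  refine ⟨((res hn x t - res hn x t₀ : Fin n)).val, Fin.is_lt _, ?_⟩
  apply res_injective hn hx
  rw [res_iter hn hx, Fin.cast_val_eq_self]
  ring

lemma succT_ne {x : Fin n → ℤ} (hx : Inj n x) (t : Fin n) : succT hn x hx t ≠ t := by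
  intro h
  have := res_succT hn hx t
  rw [h, left_eq_add] at this
  have h1 := congrArg (fun p : Fin n => (p : ℕ)) this
  simp only [val_one'' hn, Fin.val_zero] at h1
  exact one_ne_zero h1

lemma telescope {x : Fin n → ℤ} (hx : Inj n x) (z : Fin n → ℤ) (t : Fin n) (k : ℕ) :
    z ((succT hn x hx)^[k] t) - z t =
      ∑ j ∈ Finset.range k,
        (z ((succT hn x hx)^[j+1] t) - z ((succT hn x hx)^[j] t)) := by
  induction k with
  | zero => simp
  | succ k ih => rw [Finset.sum_range_succ, ← ih, Function.iterate_succ_apply']; ring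

lemma x_chain_sum {x : Fin n → ℤ} (hx : Inj n x) (t : Fin n) (k : ℕ) :
    x ((succT hn x hx)^[k] t) - x t =
      (n:ℤ) * (∑ j ∈ Finset.range k,
          pat n x ((succT hn x hx)^[j] t) ((succT hn x hx)^[j+1] t)) + k := by
  rw [telescope hn hx x t k, Finset.mul_sum]
  have : ∀ j ∈ Finset.range k,
      x ((succT hn x hx)^[j+1] t) - x ((succT hn x hx)^[j] t) =
        (n:ℤ) * pat n x ((succT hn x hx)^[j] t) ((succT hn x hx)^[j+1] t) + 1 := by
    intro j _
    have h1 : (x ((succT hn x hx)^[j+1] t) - x ((succT hn x hx)^[j] t)) % (n:ℤ) = 1 := by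
      apply emod_of_res_succ hn
      rw [Function.iterate_succ_apply']
      exact res_succT hn hx _
    conv_lhs => rw [pat_decomp, h1]
  rw [Finset.sum_congr rfl this, Finset.sum_add_distrib]
  simp

/-- Key descent lemma: if the patterns of `x` and `y` differ anywhere, then there are
tokens `a`, `b` on consecutive positions of `x` whose pattern exceeds the target. -/
lemma exists_descent {x y : Fin n → ℤ} (hx : Inj n x) (hy : Inj n y)
    {a₀ b₀ : Fin n} (hne : pat n x a₀ b₀ ≠ pat n y a₀ b₀) :
    ∃ a b, (x b - x a) % (n:ℤ) = 1 ∧ pat n y a b < pat n x a b := by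
  have hN := hNpos hn
  by_contra hc
  push_neg at hc
  have hLE : ∀ a b : Fin n, pat n x a b ≤ pat n y a b := by
    intro a b
    rcases eq_or_ne a b with rfl | hab
    · rw [pat_self, pat_self]
    obtain ⟨k, hk, rfl⟩ := chain_covers hn hx a b
    have hk1 : 1 ≤ k := by
      rcases Nat.eq_zero_or_pos k with rfl | h
      · simp at hab
      · exact h
    have hxsum := x_chain_sum hn hx a k
    have hμν : ∀ j ∈ Finset.range k,
        pat n x ((succT hn x hx)^[j] a) ((succT hn x hx)^[j+1] a) ≤
          pat n y ((succT hn x hx)^[j] a) ((succT hn x hx)^[j+1] a) := by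
      intro j _
      apply hc
      apply emod_of_res_succ hn
      rw [Function.iterate_succ_apply']
      exact res_succT hn hx _
    have hpatx : pat n x a ((succT hn x hx)^[k] a) =
        ∑ j ∈ Finset.range k, pat n x ((succT hn x hx)^[j] a) ((succT hn x hx)^[j+1] a) := by
      rw [pat, hxsum, ediv_eq_iff' hN]
      constructor
      · omega
      · have : (k : ℤ) < (n : ℤ) := by exact_mod_cast hk
        nlinarith
    have hpaty : ∑ j ∈ Finset.range k,
          pat n y ((succT hn x hx)^[j] a) ((succT hn x hx)^[j+1] a) ≤
        pat n y a ((succT hn x hx)^[k] a) := by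
      have hysum := telescope hn hx y a k
      have hd : y ((succT hn x hx)^[k] a) - y a =
          (n:ℤ) * (∑ j ∈ Finset.range k,
              pat n y ((succT hn x hx)^[j] a) ((succT hn x hx)^[j+1] a)) +
            ∑ j ∈ Finset.range k,
              ((y ((succT hn x hx)^[j+1] a) - y ((succT hn x hx)^[j] a)) % (n:ℤ)) := by
        rw [hysum, Finset.mul_sum, ← Finset.sum_add_distrib]
        apply Finset.sum_congr rfl
        intro j _
        exact pat_decomp y _ _
      have hS : 0 ≤ ∑ j ∈ Finset.range k,
          ((y ((succT hn x hx)^[j+1] a) - y ((succT hn x hx)^[j] a)) % (n:ℤ)) :=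
        Finset.sum_nonneg fun j _ => Int.emod_nonneg _ (ne_of_gt hN)
      have := Int.ediv_le_ediv hN (by omega :
        (n:ℤ) * (∑ j ∈ Finset.range k,
          pat n y ((succT hn x hx)^[j] a) ((succT hn x hx)^[j+1] a)) ≤
          y ((succT hn x hx)^[k] a) - y a)
      rwa [Int.mul_ediv_cancel_left _ (ne_of_gt hN)] at this
    calc pat n x a ((succT hn x hx)^[k] a)
        = ∑ j ∈ Finset.range k,
            pat n x ((succT hn x hx)^[j] a) ((succT hn x hx)^[j+1] a) := hpatx
      _ ≤ ∑ j ∈ Finset.range k,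
            pat n y ((succT hn x hx)^[j] a) ((succT hn x hx)^[j+1] a) :=
          Finset.sum_le_sum hμν
      _ ≤ pat n y a ((succT hn x hx)^[k] a) := hpaty
  have hab : a₀ ≠ b₀ := by
    intro h
    rw [h, pat_self, pat_self] at hne
    exact hne rfl
  have h1 := hLE a₀ b₀
  have h2 := hLE b₀ a₀
  rw [pat_antisymm hn hx hab, pat_antisymm hn hy hab] at h2
  omega

/-- Termination: equal patterns and equal sums force equality. -/
lemma eq_of_pat_eq {x y : Fin n → ℤ} (hx : Inj n x) (hy : Inj n y)
    (hpat : ∀ a b, pat n x a b = pat n y a b)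
    (hsum : ∑ t, x t = ∑ t, y t) : x = y := by
  have hN := hNpos hn
  have hcycle : (succT hn x hx)^[n] 0 = 0 := by
    apply res_injective hn hx
    rw [res_iter hn hx, Fin.natCast_self]
    ring
  have hμsum : (∑ j ∈ Finset.range n,
      pat n x ((succT hn x hx)^[j] 0) ((succT hn x hx)^[j+1] 0)) = -1 := by
    have h0 := x_chain_sum hn hx 0 n
    rw [hcycle, sub_self] at h0
    have : (n:ℤ) * (∑ j ∈ Finset.range n,
        pat n x ((succT hn x hx)^[j] 0) ((succT hn x hx)^[j+1] 0)) = (n:ℤ) * (-1) := by omega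
    exact mul_left_cancel₀ (ne_of_gt hN) this
  have hssum : (∑ j ∈ Finset.range n,
      ((y ((succT hn x hx)^[j+1] 0) - y ((succT hn x hx)^[j] 0)) % (n:ℤ))) = n := by
    have h0 := telescope hn hx y 0 n
    rw [hcycle, sub_self] at h0
    have hd : (0:ℤ) = (n:ℤ) * (∑ j ∈ Finset.range n,
        pat n x ((succT hn x hx)^[j] 0) ((succT hn x hx)^[j+1] 0)) +
          ∑ j ∈ Finset.range n,
            ((y ((succT hn x hx)^[j+1] 0) - y ((succT hn x hx)^[j] 0)) % (n:ℤ)) := by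
      rw [h0, Finset.mul_sum, ← Finset.sum_add_distrib]
      apply Finset.sum_congr rfl
      intro j _
      rw [hpat]
      exact pat_decomp y _ _
    rw [hμsum] at hd
    omega
  have hs1 : ∀ j ∈ Finset.range n,
      ((y ((succT hn x hx)^[j+1] 0) - y ((succT hn x hx)^[j] 0)) % (n:ℤ)) = 1 := by
    have hge : ∀ j ∈ Finset.range n,
        1 ≤ (y ((succT hn x hx)^[j+1] 0) - y ((succT hn x hx)^[j] 0)) % (n:ℤ) := by
      intro j _
      have hne : (succT hn x hx)^[j+1] 0 ≠ (succT hn x hx)^[j] 0 := by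
        rw [Function.iterate_succ_apply']
        exact succT_ne hn hx _
      have h1 := emod_ne_zero (hx := hy) (Ne.symm hne)
      have h2 := Int.emod_nonneg
        (y ((succT hn x hx)^[j+1] 0) - y ((succT hn x hx)^[j] 0)) (ne_of_gt hN)
      omega
    have hz : ∑ j ∈ Finset.range n,
        (((y ((succT hn x hx)^[j+1] 0) - y ((succT hn x hx)^[j] 0)) % (n:ℤ)) - 1) = 0 := by
      rw [Finset.sum_sub_distrib, hssum]
      simp
    have h3 := (Finset.sum_eq_zero_iff_of_nonneg (fun j hj => by
      have := hge j hj; omega)).1 hz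
    intro j hj
    have := h3 j hj
    omega
  have hu : ∀ j ∈ Finset.range n,
      y ((succT hn x hx)^[j+1] 0) - y ((succT hn x hx)^[j] 0) =
        x ((succT hn x hx)^[j+1] 0) - x ((succT hn x hx)^[j] 0) := by
    intro j hj
    have h1 : y ((succT hn x hx)^[j+1] 0) - y ((succT hn x hx)^[j] 0) =
        (n:ℤ) * pat n x ((succT hn x hx)^[j] 0) ((succT hn x hx)^[j+1] 0) + 1 := by
      conv_lhs => rw [pat_decomp]
      rw [hs1 j hj, hpat]
    have h2 : x ((succT hn x hx)^[j+1] 0) - x ((succT hn x hx)^[j] 0) =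
        (n:ℤ) * pat n x ((succT hn x hx)^[j] 0) ((succT hn x hx)^[j+1] 0) + 1 := by
      conv_lhs => rw [pat_decomp]
      congr 1
      apply emod_of_res_succ hn
      rw [Function.iterate_succ_apply']
      exact res_succT hn hx _
    rw [h1, h2]
  have huc : ∀ j, j < n → y ((succT hn x hx)^[j] 0) - x ((succT hn x hx)^[j] 0) =
      y ((succT hn x hx)^[0] 0) - x ((succT hn x hx)^[0] 0) := by
    intro j
    induction j with
    | zero => intro _; rfl
    | succ j ih =>
      intro hj
      have h1 := hu j (Finset.mem_range.2 (by omega))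
      have h2 := ih (by omega)
      omega
  have hconst : ∀ t : Fin n, y t - x t = y 0 - x 0 := by
    intro t
    obtain ⟨k, hk, rfl⟩ := chain_covers hn hx 0 t
    simpa using huc k hk
  have hzero : y 0 - x 0 = 0 := by
    have h1 : ∑ t : Fin n, (y t - x t) = (n : ℤ) * (y 0 - x 0) := by
      rw [Finset.sum_congr rfl (fun t _ => hconst t), Finset.sum_const]
      simp [mul_comm]
    rw [Finset.sum_sub_distrib] at h1
    have h2 : (n:ℤ) * (y 0 - x 0) = 0 := by omega
    rcases mul_eq_zero.1 h2 with h | h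
    · exfalso; omega
    · exact h
  funext t
  have := hconst t
  omega

lemma mv_ne {x : Fin n → ℤ} {a b : Fin n} (hcond : (x b - x a) % (n:ℤ) = 1) : a ≠ b := by
  intro h
  rw [h, sub_self] at hcond
  have : (0:ℤ) % (n:ℤ) = 0 := Int.zero_emod _
  omega

variable {x : Fin n → ℤ} {a b : Fin n}

lemma mv_ne' : True := trivial

variable (hcond : (x b - x a) % (n:ℤ) = 1)
include hcond

lemma mv_emod (t : Fin n) : (mv n x a b) t % (n:ℤ) = x (Equiv.swap a b t) % (n:ℤ) := by
  have hab := mv_ne hn hcond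
  have hq := Int.mul_ediv_add_emod (x b - x a) (n:ℤ)
  rw [hcond] at hq
  rcases eq_or_ne t a with rfl | hta
  · rw [Equiv.swap_apply_left]
    have : x b = (x t + 1) + (n:ℤ) * ((x b - x t) / (n:ℤ)) := by omega
    rw [mv, if_pos rfl, this, Int.add_mul_emod_self_left]
  rcases eq_or_ne t b with rfl | htb
  · rw [Equiv.swap_apply_right]
    have : x a = (x t - 1) + (n:ℤ) * (-((x t - x a) / (n:ℤ))) := by
      have : (n:ℤ) * (-((x t - x a) / (n:ℤ))) = -((n:ℤ) * ((x t - x a) / (n:ℤ))) := by ring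
      omega
    rw [mv, if_neg (Ne.symm hab), if_pos rfl, this, Int.add_mul_emod_self_left]
  · rw [Equiv.swap_apply_of_ne_of_ne hta htb, mv, if_neg hta, if_neg htb]

lemma mv_inj (hx : Inj n x) : Inj n (mv n x a b) := by
  intro s t h
  rw [mv_emod hn hcond, mv_emod hn hcond] at h
  exact (Equiv.swap a b).injective (hx _ _ h)

lemma pat_mv_ab (hx : Inj n x) : pat n (mv n x a b) a b = pat n x a b - 1 := by
  have hab := mv_ne hn hcond
  have : mv n x a b b - mv n x a b a = (x b - x a) - 2 := by
    rw [mv, mv, if_neg (Ne.symm hab), if_pos rfl, if_pos rfl]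
    ring
  rw [pat, this, ediv_sub_two (by exact_mod_cast (by omega : 1 < n)) hcond]
  rfl

lemma pat_mv_ba (hx : Inj n x) : pat n (mv n x a b) b a = pat n x b a + 1 := by
  have hab := mv_ne hn hcond
  rw [pat_antisymm hn (mv_inj hn hcond hx) hab, pat_antisymm hn hx hab,
    pat_mv_ab hn hcond hx]
  ring

lemma pat_mv_other {s t : Fin n} (hx : Inj n x)
    (hs : ¬(s = a ∧ t = b)) (ht : ¬(s = b ∧ t = a)) :
    pat n (mv n x a b) s t = pat n x s t := by
  have hab := mv_ne hn hcond
  have hN := hNpos hn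
  rcases eq_or_ne s t with rfl | hst
  · rw [pat_self, pat_self]
  rcases eq_or_ne s a with rfl | hsa
  · -- s = a, t ≠ b, t ≠ a
    have htb : t ≠ b := fun h => hs ⟨rfl, h⟩
    have : mv n x s b t - mv n x s b s = (x t - x s) - 1 := by
      rw [mv, mv, if_neg (Ne.symm hst), if_neg htb, if_pos rfl]
      ring
    rw [pat, this, ediv_sub_one hN (emod_ne_zero hx hst)]
    rfl
  rcases eq_or_ne t a with rfl | hta
  · -- t = a, s ≠ b
    have hsb : s ≠ b := fun h => ht ⟨h, rfl⟩
    have hv : mv n x t b t - mv n x t b s = (x t - x s) + 1 := by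
      rw [mv, mv, if_pos rfl, if_neg hsa, if_neg hsb]
      ring
    have hemod : (x t - x s) % (n:ℤ) ≠ (n:ℤ) - 1 := by
      intro hmod
      have hkey : (x b - x s) % (n:ℤ) = 0 := by
        have : x b - x s = (x b - x t) + (x t - x s) := by ring
        rw [this, Int.add_emod, hcond, hmod]
        simp
      exact emod_ne_zero hx hsb hkey
    rw [pat, hv, ediv_add_one hN hemod]
    rfl
  rcases eq_or_ne s b with rfl | hsb
  · -- s = b, t ≠ a, t ≠ b
    have hv : mv n x a s t - mv n x a s s = (x t - x s) + 1 := by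
      rw [mv, mv, if_neg hta, if_neg (Ne.symm hst), if_neg (Ne.symm hab), if_pos rfl]
      ring
    have hemod : (x t - x s) % (n:ℤ) ≠ (n:ℤ) - 1 := by
      intro hmod
      have hkey : (x t - x a) % (n:ℤ) = 0 := by
        have : x t - x a = (x t - x s) + (x s - x a) := by ring
        rw [this, Int.add_emod, hcond, hmod]
        simp
      exact emod_ne_zero hx (Ne.symm hta) hkey
    rw [pat, hv, ediv_add_one hN hemod]
    rfl
  rcases eq_or_ne t b with rfl | htb
  · -- t = b, s ∉ {a, b}
    have hv : mv n x a t t - mv n x a t s = (x t - x s) - 1 := by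
      rw [mv, mv, if_neg (Ne.symm hab), if_pos rfl, if_neg hsa, if_neg hsb]
      ring
    rw [pat, hv, ediv_sub_one hN (emod_ne_zero hx hst)]
    rfl
  · have hv : mv n x a b t - mv n x a b s = x t - x s := by
      rw [mv, mv, if_neg hta, if_neg htb, if_neg hsa, if_neg hsb]
    rw [pat, hv]
    rfl

lemma mv_sum : ∑ t, mv n x a b t = ∑ t, x t := by
  have hab := mv_ne hn hcond
  have hsplit : ∀ t : Fin n, mv n x a b t =
      x t + ((if t = a then 1 else 0) + (if t = b then (-1 : ℤ) else 0)) := by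
    intro t
    rcases eq_or_ne t a with rfl | hta
    · rw [mv, if_pos rfl, if_pos rfl, if_neg hab]
      ring
    rcases eq_or_ne t b with rfl | htb
    · rw [mv, if_neg hta, if_pos rfl, if_neg hta, if_pos rfl]
      ring
    · rw [mv, if_neg hta, if_neg htb, if_neg hta, if_neg htb]
      ring
  rw [Finset.sum_congr rfl (fun t _ => hsplit t)]
  rw [Finset.sum_add_distrib, Finset.sum_add_distrib]
  rw [Finset.sum_ite_eq' Finset.univ a (fun _ => (1:ℤ)),
    Finset.sum_ite_eq' Finset.univ b (fun _ => (-1:ℤ))]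
  simp

omit hcond

lemma cost_pos_exists {x y : Fin n → ℤ} (h : cost n x y ≠ 0) :
    ∃ a b, pat n x a b ≠ pat n y a b := by
  by_contra hc
  push_neg at hc
  apply h
  apply Finset.sum_eq_zero
  intro p _
  rw [hc p.1 p.2]
  simp

lemma cost_eq_zero {x y : Fin n → ℤ} (h : cost n x y = 0) :
    ∀ a b, pat n x a b = pat n y a b := by
  intro a b
  have := (Finset.sum_eq_zero_iff_of_nonneg (fun p _ => Nat.zero_le _)).1 h (a, b)
    (Finset.mem_univ _)
  have h2 : (pat n x a b - pat n y a b).natAbs = 0 := this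
  omega

lemma cost_step {x y : Fin n → ℤ} {a b : Fin n} (hx : Inj n x) (hy : Inj n y)
    (hcond : (x b - x a) % (n:ℤ) = 1) (hlt : pat n y a b < pat n x a b) :
    cost n (mv n x a b) y + 2 = cost n x y := by
  have hab := mv_ne hn hcond
  have hyba : pat n y b a = - pat n y a b - 1 := pat_antisymm hn hy hab
  have hxba : pat n x b a = - pat n x a b - 1 := pat_antisymm hn hx hab
  have hmab : pat n (mv n x a b) a b = pat n x a b - 1 := pat_mv_ab hn hcond hx
  have hmba : pat n (mv n x a b) b a = pat n x b a + 1 := pat_mv_ba hn hcond hx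
  have hkey : ∀ p : Fin n × Fin n,
      (pat n x p.1 p.2 - pat n y p.1 p.2).natAbs =
      (pat n (mv n x a b) p.1 p.2 - pat n y p.1 p.2).natAbs
        + ((if p = (a, b) then 1 else 0) + (if p = (b, a) then 1 else 0)) := by
    rintro ⟨s, t⟩
    rcases eq_or_ne (s, t) (a, b) with he | hne1
    · have h1 : s = a := congrArg Prod.fst he
      have h2 : t = b := congrArg Prod.snd he
      subst h1; subst h2
      dsimp only
      rw [if_pos rfl, if_neg (fun h => hab (congrArg Prod.snd h).symm), hmab]
      omega
    rcases eq_or_ne (s, t) (b, a) with he2 | hne2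
    · have h1 : s = b := congrArg Prod.fst he2
      have h2 : t = a := congrArg Prod.snd he2
      subst h1; subst h2
      dsimp only
      rw [if_neg hne1, if_pos rfl, hmba]
      omega
    · dsimp only
      rw [if_neg hne1, if_neg hne2,
        pat_mv_other hn hcond hx
          (fun h => hne1 (by rw [h.1, h.2]))
          (fun h => hne2 (by rw [h.1, h.2]))]
      omega
  have : cost n x y = cost n (mv n x a b) y +
      ((∑ p : Fin n × Fin n, if p = (a, b) then 1 else 0)
        + (∑ p : Fin n × Fin n, if p = (b, a) then 1 else 0)) := by
    rw [cost, cost, Finset.sum_congr rfl fun p _ => hkey p, Finset.sum_add_distrib,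
      Finset.sum_add_distrib]
  rw [this, Finset.sum_ite_eq' Finset.univ ((a : Fin n), (b : Fin n)) (fun _ => 1),
    Finset.sum_ite_eq' Finset.univ ((b : Fin n), (a : Fin n)) (fun _ => 1)]
  simp

lemma cycle_adj (p : Fin n) : (cycleGraph n).Adj p (p + 1) := by
  obtain ⟨m, rfl⟩ : ∃ m, n = m + 2 := ⟨n - 2, by omega⟩
  rw [cycleGraph_adj]
  right
  simp

lemma res_mv {x : Fin n → ℤ} {a b : Fin n} (hcond : (x b - x a) % (n:ℤ) = 1) (t : Fin n) :
    res hn (mv n x a b) t = res hn x (Equiv.swap a b t) := by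
  apply Fin.ext
  have h := mv_emod hn hcond (x := x) t
  simp only [res]
  rw [h]

lemma fs_adj_mv (Y : SimpleGraph (Fin n)) {x : Fin n → ℤ} (hx : Inj n x) {a b : Fin n}
    (hcond : (x b - x a) % (n:ℤ) = 1) (hadj : Y.Adj a b) :
    (FS (cycleGraph n) Y).Adj (toPerm hn x hx)
      (toPerm hn (mv n x a b) (mv_inj hn hcond hx)) := by
  have hab := mv_ne hn hcond
  have hQ : res hn x b = res hn x a + 1 := res_succ_of_emod hn hcond
  have hra : res hn (mv n x a b) a = res hn x b := by
    rw [res_mv hn hcond, Equiv.swap_apply_left]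
  have hrb : res hn (mv n x a b) b = res hn x a := by
    rw [res_mv hn hcond, Equiv.swap_apply_right]
  refine ⟨res hn x a, res hn x b, ?_, ?_, ?_, ?_, ?_⟩
  · rw [hQ]
    exact cycle_adj hn _
  · rw [toPerm_res hn hx, toPerm_res hn hx]
    exact hadj
  · rw [toPerm_res hn hx, ← hra, toPerm_res hn (mv_inj hn hcond hx)]
  · rw [toPerm_res hn hx, ← hrb, toPerm_res hn (mv_inj hn hcond hx)]
  · intro c hca hcb
    have hres : res hn x (toPerm hn x hx c) = c := res_toPerm hn hx c
    have hta : toPerm hn x hx c ≠ a := by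
      intro h
      exact hca (by rw [← hres, h])
    have htb : toPerm hn x hx c ≠ b := by
      intro h
      exact hcb (by rw [← hres, h])
    have : res hn (mv n x a b) (toPerm hn x hx c) = c := by
      rw [res_mv hn hcond, Equiv.swap_apply_of_ne_of_ne hta htb, hres]
    conv_rhs => rw [← this, toPerm_res hn (mv_inj hn hcond hx)]

/-- Greedy sorting: a valid target with equal sums can be reached by a walk of length
at most half the cost. -/
lemma walk_of_valid (Y : SimpleGraph (Fin n)) {y : Fin n → ℤ} (hy : Inj n y)
    (K : ℕ) : ∀ x : Fin n → ℤ, ∀ hx : Inj n x,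
      (∀ a b, pat n x a b ≠ pat n y a b → Y.Adj a b) →
      (∑ t, x t = ∑ t, y t) → cost n x y = K →
      ∃ w : (FS (cycleGraph n) Y).Walk (toPerm hn x hx) (toPerm hn y hy),
        w.length ≤ K / 2 := by
  induction K using Nat.strong_induction_on with
  | _ K ih =>
    intro x hx hval hsum hK
    rcases Nat.eq_zero_or_pos K with rfl | hpos
    · have hpat := cost_eq_zero hn hK
      have hxy : x = y := eq_of_pat_eq hn hx hy hpat hsum
      subst hxy
      exact ⟨SimpleGraph.Walk.nil, by simp⟩
    · obtain ⟨a₀, b₀, hne⟩ := cost_pos_exists hn (by rw [hK]; omega)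
      obtain ⟨a, b, hcond, hlt⟩ := exists_descent hn hx hy hne
      have hab := mv_ne hn hcond
      have hadj : Y.Adj a b := hval a b (Ne.symm (ne_of_lt hlt))
      have hstep := cost_step hn hx hy hcond hlt
      have hx' := mv_inj hn hcond hx
      have hval' : ∀ a' b', pat n (mv n x a b) a' b' ≠ pat n y a' b' → Y.Adj a' b' := by
        intro a' b' hne'
        rcases eq_or_ne (a', b') (a, b) with he | hne1
        · have h1 : a' = a := congrArg Prod.fst he
          have h2 : b' = b := congrArg Prod.snd he
          subst h1; subst h2
          exact hadj
        rcases eq_or_ne (a', b') (b, a) with he2 | hne2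
        · have h1 : a' = b := congrArg Prod.fst he2
          have h2 : b' = a := congrArg Prod.snd he2
          subst h1; subst h2
          exact hadj.symm
        · apply hval a' b'
          rwa [pat_mv_other hn hcond hx
            (fun h => hne1 (by rw [h.1, h.2]))
            (fun h => hne2 (by rw [h.1, h.2]))] at hne'
      have hsum' : ∑ t, mv n x a b t = ∑ t, y t := by
        rw [mv_sum hn hcond]
        exact hsum
      obtain ⟨w, hw⟩ := ih (K - 2) (by omega) (mv n x a b) hx' hval' hsum' (by omega)
      refine ⟨SimpleGraph.Walk.cons (fs_adj_mv hn Y hx hcond hadj) w, ?_⟩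
      rw [SimpleGraph.Walk.length_cons]
      omega

lemma toPerm_mv {x : Fin n → ℤ} (hx : Inj n x) {a b : Fin n}
    (hcond : (x b - x a) % (n:ℤ) = 1) :
    toPerm hn (mv n x a b) (mv_inj hn hcond hx) =
      (Equiv.swap (res hn x a) (res hn x b)).trans (toPerm hn x hx) := by
  have hab := mv_ne hn hcond
  have hx' := mv_inj hn hcond hx
  apply Equiv.ext
  intro c
  have key : ∀ t : Fin n, res hn (mv n x a b) t = c →
      toPerm hn (mv n x a b) (mv_inj hn hcond hx) c = t := by
    intro t ht
    rw [← ht, toPerm_res hn hx']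
  simp only [Equiv.trans_apply]
  rcases eq_or_ne c (res hn x a) with rfl | hcp
  · rw [Equiv.swap_apply_left]
    apply key
    rw [res_mv hn hcond, toPerm_res hn hx, Equiv.swap_apply_right]
  rcases eq_or_ne c (res hn x b) with rfl | hcq
  · rw [Equiv.swap_apply_right]
    apply key
    rw [res_mv hn hcond, toPerm_res hn hx, Equiv.swap_apply_left]
  · rw [Equiv.swap_apply_of_ne_of_ne hcp hcq]
    apply key
    have hta : toPerm hn x hx c ≠ a := by
      intro h
      exact hcp (by rw [← res_toPerm hn hx c, h])
    have htb : toPerm hn x hx c ≠ b := by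
      intro h
      exact hcq (by rw [← res_toPerm hn hx c, h])
    rw [res_mv hn hcond, Equiv.swap_apply_of_ne_of_ne hta htb, res_toPerm hn hx]

/-- Lifting a walk in the friends-and-strangers graph to lifted configurations. -/
lemma lift_walk (Y : SimpleGraph (Fin n)) {σ τ : Fin n ≃ Fin n}
    (w : (FS (cycleGraph n) Y).Walk σ τ) :
    ∀ x : Fin n → ℤ, ∀ hx : Inj n x, toPerm hn x hx = σ →
    ∃ y, ∃ hy : Inj n y, toPerm hn y hy = τ ∧ (∑ t, y t = ∑ t, x t) ∧
      (∀ a b, pat n x a b ≠ pat n y a b → Y.Adj a b) := by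
  induction w with
  | nil =>
    intro x hx hσ
    exact ⟨x, hx, hσ, rfl, fun a b h => absurd rfl h⟩
  | @cons σ σ₁ τ hadj w ih =>
    intro x hx hσ
    obtain ⟨P, Q, hXPQ, hYadj, h1, h2, h3⟩ := hadj
    have hPQ : Q = P + 1 ∨ P = Q + 1 := by
      obtain ⟨m, rfl⟩ : ∃ m, n = m + 2 := ⟨n - 2, by omega⟩
      rw [cycleGraph_adj] at hXPQ
      rcases hXPQ with h | h
      · exact Or.inr ((sub_eq_iff_eq_add.mp h).trans (add_comm 1 Q))
      · exact Or.inl ((sub_eq_iff_eq_add.mp h).trans (add_comm 1 P))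
    have hresP : res hn x (σ P) = P := by rw [← hσ]; exact res_toPerm hn hx P
    have hresQ : res hn x (σ Q) = Q := by rw [← hσ]; exact res_toPerm hn hx Q
    rcases hPQ with hQP | hQP
    · -- `Q = P + 1` : the token at `P` moves forward
      have hcond : (x (σ Q) - x (σ P)) % (n:ℤ) = 1 := by
        apply emod_of_res_succ hn
        rw [hresP, hresQ, hQP]
      have hx₁ := mv_inj hn hcond hx
      have hσ₁ : toPerm hn (mv n x (σ P) (σ Q)) (mv_inj hn hcond hx) = σ₁ := by
        rw [toPerm_mv hn hx hcond, hresP, hresQ, hσ]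
        apply Equiv.ext
        intro c
        simp only [Equiv.trans_apply]
        rcases eq_or_ne c P with rfl | hcP
        · rw [Equiv.swap_apply_left]
          exact h2
        rcases eq_or_ne c Q with rfl | hcQ
        · rw [Equiv.swap_apply_right]
          exact h1
        · rw [Equiv.swap_apply_of_ne_of_ne hcP hcQ]
          exact h3 c hcP hcQ
      obtain ⟨y, hy, hτ, hsum, hval⟩ := ih (mv n x (σ P) (σ Q)) hx₁ hσ₁
      refine ⟨y, hy, hτ, by rw [hsum, mv_sum hn hcond], ?_⟩
      intro a b hne
      rcases eq_or_ne (a, b) (σ P, σ Q) with he | hne1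
      · have e1 : a = σ P := congrArg Prod.fst he
        have e2 : b = σ Q := congrArg Prod.snd he
        rw [e1, e2]
        exact hYadj
      rcases eq_or_ne (a, b) (σ Q, σ P) with he2 | hne2
      · have e1 : a = σ Q := congrArg Prod.fst he2
        have e2 : b = σ P := congrArg Prod.snd he2
        rw [e1, e2]
        exact hYadj.symm
      · apply hval a b
        rwa [← pat_mv_other hn hcond hx
          (fun h => hne1 (by rw [h.1, h.2]))
          (fun h => hne2 (by rw [h.1, h.2]))] at hne
    · -- `P = Q + 1` : the token at `Q` moves forward
      have hcond : (x (σ P) - x (σ Q)) % (n:ℤ) = 1 := by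
        apply emod_of_res_succ hn
        rw [hresP, hresQ, hQP]
      have hx₁ := mv_inj hn hcond hx
      have hσ₁ : toPerm hn (mv n x (σ Q) (σ P)) (mv_inj hn hcond hx) = σ₁ := by
        rw [toPerm_mv hn hx hcond, hresP, hresQ, hσ]
        apply Equiv.ext
        intro c
        simp only [Equiv.trans_apply]
        rcases eq_or_ne c Q with rfl | hcQ
        · rw [Equiv.swap_apply_left]
          exact h1
        rcases eq_or_ne c P with rfl | hcP
        · rw [Equiv.swap_apply_right]
          exact h2
        · rw [Equiv.swap_apply_of_ne_of_ne hcQ hcP]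
          exact h3 c hcP hcQ
      obtain ⟨y, hy, hτ, hsum, hval⟩ := ih (mv n x (σ Q) (σ P)) hx₁ hσ₁
      refine ⟨y, hy, hτ, by rw [hsum, mv_sum hn hcond], ?_⟩
      intro a b hne
      rcases eq_or_ne (a, b) (σ Q, σ P) with he | hne1
      · have e1 : a = σ Q := congrArg Prod.fst he
        have e2 : b = σ P := congrArg Prod.snd he
        rw [e1, e2]
        exact hYadj.symm
      rcases eq_or_ne (a, b) (σ P, σ Q) with he2 | hne2
      · have e1 : a = σ P := congrArg Prod.fst he2
        have e2 : b = σ Q := congrArg Prod.snd he2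
        rw [e1, e2]
        exact hYadj
      · apply hval a b
        rwa [← pat_mv_other hn hcond hx
          (fun h => hne1 (by rw [h.1, h.2]))
          (fun h => hne2 (by rw [h.1, h.2]))] at hne

lemma pat_x0_cases {x₀ : Fin n → ℤ} (hrng : ∀ t, 0 ≤ x₀ t ∧ x₀ t < (n:ℤ)) (a b : Fin n) :
    pat n x₀ a b = 0 ∨ pat n x₀ a b = -1 := by
  have hN := hNpos hn
  have h1 := (hrng a).1
  have h2 := (hrng a).2
  have h3 := (hrng b).1
  have h4 := (hrng b).2
  rcases le_or_gt 0 (x₀ b - x₀ a) with h | h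
  · left
    rw [pat, Int.ediv_eq_zero_of_lt h (by omega)]
  · right
    rw [pat, ediv_eq_iff' hN]
    omega

lemma compl_adj_bound {x₀ y : Fin n → ℤ} (hrng : ∀ t, 0 ≤ x₀ t ∧ x₀ t < (n:ℤ))
    {Y : SimpleGraph (Fin n)}
    (hval : ∀ a b, pat n x₀ a b ≠ pat n y a b → Y.Adj a b)
    {a b : Fin n} (hadj : Yᶜ.Adj a b) :
    y b - y a ≤ (n:ℤ) ∧ y a - y b ≤ (n:ℤ) := by
  have hN := hNpos hn
  obtain ⟨hne, hnadj⟩ := hadj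
  have hpat : pat n x₀ a b = pat n y a b := by
    by_contra hc
    exact hnadj (hval a b hc)
  have hdec := pat_decomp y a b
  have h1 := Int.emod_nonneg (y b - y a) (ne_of_gt hN)
  have h2 := Int.emod_lt_of_pos (y b - y a) hN
  rcases pat_x0_cases hn hrng a b with h | h <;> rw [hpat] at h <;> rw [h] at hdec <;>
    constructor <;> omega

lemma walk_bound {y : Fin n → ℤ} {Y : SimpleGraph (Fin n)}
    (hedge : ∀ a b : Fin n, Yᶜ.Adj a b → y b - y a ≤ (n:ℤ) ∧ y a - y b ≤ (n:ℤ)) :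
    ∀ {s t : Fin n} (p : Yᶜ.Walk s t), y t - y s ≤ (n:ℤ) * p.length ∧
      y s - y t ≤ (n:ℤ) * p.length := by
  intro s t p
  induction p with
  | nil => simp
  | @cons u v w hadj p ih =>
    have h1 := hedge u v hadj
    rw [SimpleGraph.Walk.length_cons]
    have h2 : ((p.length + 1 : ℕ) : ℤ) = (p.length : ℤ) + 1 := by push_cast; ring
    rw [h2]
    constructor <;> nlinarith [ih.1, ih.2, hNpos hn]

lemma comp_bound {y : Fin n → ℤ} {Y : SimpleGraph (Fin n)}
    (hedge : ∀ a b : Fin n, Yᶜ.Adj a b → y b - y a ≤ (n:ℤ) ∧ y a - y b ≤ (n:ℤ))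
    {s t : Fin n} (h : Yᶜ.connectedComponentMk s = Yᶜ.connectedComponentMk t) :
    y t - y s ≤ (n:ℤ) * (n:ℤ) ∧ y s - y t ≤ (n:ℤ) * (n:ℤ) := by
  have hreach : Yᶜ.Reachable s t := SimpleGraph.ConnectedComponent.exact h
  obtain ⟨p⟩ := hreach
  have hlen : (p.toPath : Yᶜ.Walk s t).length < n := by
    have := SimpleGraph.Walk.IsPath.length_lt (p.toPath.2)
    simpa using this
  have hb := walk_bound hn hedge (p.toPath : Yᶜ.Walk s t)
  have hcast : ((p.toPath : Yᶜ.Walk s t).length : ℤ) ≤ (n:ℤ) - 1 := by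
    have : (p.toPath : Yᶜ.Walk s t).length ≤ n - 1 := by omega
    have h3 : ((p.toPath : Yᶜ.Walk s t).length : ℤ) ≤ ((n - 1 : ℕ) : ℤ) := by
      exact_mod_cast this
    omega
  have hN := hNpos hn
  constructor <;> nlinarith [hb.1, hb.2]

set_option maxHeartbeats 1000000 in
/-- Normalization: shift the complement-components so that all relative displacements
are bounded, keeping residues, sum and validity. -/
lemma exists_normalized {Y : SimpleGraph (Fin n)} {x₀ y : Fin n → ℤ}
    (hrng : ∀ t, 0 ≤ x₀ t ∧ x₀ t < (n:ℤ))
    (hval : ∀ a b, pat n x₀ a b ≠ pat n y a b → Y.Adj a b) :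
    ∃ y' : Fin n → ℤ, (∀ t, y' t % (n:ℤ) = y t % (n:ℤ)) ∧ (∑ t, y' t = ∑ t, y t) ∧
      (∀ a b, pat n x₀ a b ≠ pat n y' a b → Y.Adj a b) ∧
      (∀ s t, (y' t - x₀ t) - (y' s - x₀ s) ≤ 4 * (n:ℤ) * (n:ℤ)) := by
  classical
  have hN := hNpos hn
  have hN3 : (3:ℤ) ≤ (n:ℤ) := by exact_mod_cast hn
  have hedge := fun a b h => compl_adj_bound hn hrng hval (a := a) (b := b) h
  set cm : Fin n → Yᶜ.ConnectedComponent := fun t => Yᶜ.connectedComponentMk t with hcm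
  set F : (Yᶜ.ConnectedComponent → ℤ) → ℤ :=
    fun c => ∑ t, (y t + (n:ℤ) * c (cm t) - x₀ t)^2 with hF
  have hFnn : ∀ c, 0 ≤ F c := fun c => Finset.sum_nonneg fun t _ => sq_nonneg _
  set S : Set ℕ := {k | ∃ c : Yᶜ.ConnectedComponent → ℤ,
    (∑ t, c (cm t)) = 0 ∧ (F c).toNat = k} with hS
  have hSne : S.Nonempty := ⟨(F 0).toNat, 0, by simp, rfl⟩
  obtain ⟨c, hc0, hcF⟩ := Nat.sInf_mem hSne
  have hmin : ∀ c' : Yᶜ.ConnectedComponent → ℤ, (∑ t, c' (cm t)) = 0 → F c ≤ F c' := by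
    intro c' hc'
    have h1 : (F c').toNat ∈ S := ⟨c', hc', rfl⟩
    have h2 := Nat.sInf_le h1
    have h4 := hFnn c
    have h5 := hFnn c'
    omega
  set y' : Fin n → ℤ := fun t => y t + (n:ℤ) * c (cm t) with hy'
  have hpat' : ∀ a b : Fin n, pat n y' a b = pat n y a b + (c (cm b) - c (cm a)) := by
    intro a b
    rw [pat, pat]
    show (y b + (n:ℤ) * c (cm b) - (y a + (n:ℤ) * c (cm a))) / (n:ℤ) = _
    rw [show y b + (n:ℤ) * c (cm b) - (y a + (n:ℤ) * c (cm a)) =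
      (y b - y a) + (n:ℤ) * (c (cm b) - c (cm a)) by ring,
      Int.add_mul_ediv_left _ _ (ne_of_gt hN)]
  refine ⟨y', ?_, ?_, ?_, ?_⟩
  · intro t
    show (y t + (n:ℤ) * c (cm t)) % (n:ℤ) = y t % (n:ℤ)
    simpa using Int.add_mul_emod_self_left (a := y t) (b := (n:ℤ)) (c := c (cm t))
  · show (∑ t, (y t + (n:ℤ) * c (cm t))) = ∑ t, y t
    rw [Finset.sum_add_distrib, ← Finset.mul_sum, hc0]
    ring
  · intro a b hne
    rcases eq_or_ne a b with rfl | hab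
    · rw [pat_self, pat_self] at hne
      exact absurd rfl hne
    rcases eq_or_ne (cm a) (cm b) with hcab | hcab
    · apply hval a b
      intro hcontra
      apply hne
      rw [hpat' a b, hcab, ← hcontra]
      ring
    · by_contra hnadj
      exact hcab (SimpleGraph.ConnectedComponent.sound ⟨SimpleGraph.Walk.cons
        ⟨hab, hnadj⟩ SimpleGraph.Walk.nil⟩)
  · -- the displacement bound at the minimizer
    intro s t
    set u : Fin n → ℤ := fun r => y r + (n:ℤ) * c (cm r) - x₀ r with hu
    show u t - u s ≤ 4 * (n:ℤ) * (n:ℤ)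
    have hsame : ∀ p q : Fin n, cm p = cm q →
        u q - u p ≤ (n:ℤ) * (n:ℤ) + (n:ℤ) := by
      intro p q hpq
      have h1 := (comp_bound hn hedge hpq).1
      have h2 := (hrng p).1
      have h3 := (hrng p).2
      have h4 := (hrng q).1
      have h5 := (hrng q).2
      show y q + (n:ℤ) * c (cm q) - x₀ q - (y p + (n:ℤ) * c (cm p) - x₀ p) ≤ _
      rw [hpq]
      omega
    rcases eq_or_ne (cm s) (cm t) with hst | hst
    · have h := hsame s t hst
      nlinarith
    · -- different components: use the exchange move
      set fT : Finset (Fin n) := Finset.univ.filter (fun r => cm r = cm t) with hfT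
      set fS : Finset (Fin n) := Finset.univ.filter (fun r => cm r = cm s) with hfS
      set sT : ℤ := (fT.card : ℤ) with hsT
      set sS : ℤ := (fS.card : ℤ) with hsS
      have htT : t ∈ fT := Finset.mem_filter.2 ⟨Finset.mem_univ _, rfl⟩
      have hsS' : s ∈ fS := Finset.mem_filter.2 ⟨Finset.mem_univ _, rfl⟩
      have hsT1 : 1 ≤ sT := by
        rw [hsT]
        exact_mod_cast Finset.card_pos.2 ⟨t, htT⟩
      have hsS1 : 1 ≤ sS := by
        rw [hsS]
        exact_mod_cast Finset.card_pos.2 ⟨s, hsS'⟩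
      have hdisj : Disjoint fT fS := by
        rw [Finset.disjoint_left]
        intro r hrT hrS
        have h1 := (Finset.mem_filter.1 hrT).2
        have h2 := (Finset.mem_filter.1 hrS).2
        exact hst (h2.symm.trans h1)
      have hcard : sT + sS ≤ (n:ℤ) := by
        have h1 : (fT ∪ fS).card ≤ (Finset.univ : Finset (Fin n)).card :=
          Finset.card_le_card (Finset.subset_univ _)
        rw [Finset.card_union_of_disjoint hdisj] at h1
        simp only [Finset.card_univ, Fintype.card_fin] at h1
        rw [hsT, hsS]
        exact_mod_cast h1
      set c' : Yᶜ.ConnectedComponent → ℤ := fun k =>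
        if k = cm t then c k - sS else if k = cm s then c k + sT else c k with hc'
      have hw : ∀ r : Fin n, c' (cm r) = c (cm r) +
          ((if cm r = cm t then -sS else 0) + (if cm r = cm s then sT else 0)) := by
        intro r
        show (if cm r = cm t then c (cm r) - sS else
          if cm r = cm s then c (cm r) + sT else c (cm r)) = _
        rcases eq_or_ne (cm r) (cm t) with h | h
        · have h2 : cm r ≠ cm s := by
            rw [h]
            exact fun hh => hst hh.symm
          rw [if_pos h, if_pos h, if_neg h2]
          ring
        · rw [if_neg h, if_neg h]
          rcases eq_or_ne (cm r) (cm s) with h2 | h2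
          · rw [if_pos h2, if_pos h2]
            ring
          · rw [if_neg h2, if_neg h2]
            ring
      have hfilT : ∀ (g : Fin n → ℤ),
          (∑ r, if cm r = cm t then g r else 0) = ∑ r ∈ fT, g r := by
        intro g
        rw [hfT, Finset.sum_filter]
      have hfilS : ∀ (g : Fin n → ℤ),
          (∑ r, if cm r = cm s then g r else 0) = ∑ r ∈ fS, g r := by
        intro g
        rw [hfS, Finset.sum_filter]
      have hc'0 : (∑ r, c' (cm r)) = 0 := by
        rw [Finset.sum_congr rfl fun r _ => hw r, Finset.sum_add_distrib, hc0,
          Finset.sum_add_distrib, hfilT (fun _ => -sS), hfilS (fun _ => sT),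
          Finset.sum_const, Finset.sum_const, nsmul_eq_mul, nsmul_eq_mul, ← hsT, ← hsS]
        ring
      have hkey := hmin c' hc'0
      -- expand F c'
      have hFc' : F c' = F c + ∑ r, ((if cm r = cm t then
            -2*(n:ℤ)*sS*(u r) + (n:ℤ)^2*sS^2 else 0) +
          (if cm r = cm s then 2*(n:ℤ)*sT*(u r) + (n:ℤ)^2*sT^2 else 0)) := by
        rw [hF]
        show (∑ r, (y r + (n:ℤ) * c' (cm r) - x₀ r)^2) = _
        have hterm : ∀ r : Fin n, (y r + (n:ℤ) * c' (cm r) - x₀ r)^2 =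
            (y r + (n:ℤ) * c (cm r) - x₀ r)^2 +
            ((if cm r = cm t then -2*(n:ℤ)*sS*(u r) + (n:ℤ)^2*sS^2 else 0) +
             (if cm r = cm s then 2*(n:ℤ)*sT*(u r) + (n:ℤ)^2*sT^2 else 0)) := by
          intro r
          rw [hw r]
          have hur : u r = y r + (n:ℤ) * c (cm r) - x₀ r := rfl
          rcases eq_or_ne (cm r) (cm t) with h | h
          · have h2 : cm r ≠ cm s := by
              rw [h]
              exact fun hh => hst hh.symm
            rw [if_pos h, if_neg h2, if_pos h, if_neg h2, ← hur]
            ring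
          · rw [if_neg h, if_neg h]
            rcases eq_or_ne (cm r) (cm s) with h2 | h2
            · rw [if_pos h2, if_pos h2, ← hur]
              ring
            · rw [if_neg h2, if_neg h2, ← hur]
              ring
        rw [Finset.sum_congr rfl fun r _ => hterm r, Finset.sum_add_distrib]
      have hsum0 : 0 ≤ ∑ r, ((if cm r = cm t then
            -2*(n:ℤ)*sS*(u r) + (n:ℤ)^2*sS^2 else 0) +
          (if cm r = cm s then 2*(n:ℤ)*sT*(u r) + (n:ℤ)^2*sT^2 else 0)) := by
        omega
      rw [Finset.sum_add_distrib,
        hfilT (fun r => -2*(n:ℤ)*sS*(u r) + (n:ℤ)^2*sS^2),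
        hfilS (fun r => 2*(n:ℤ)*sT*(u r) + (n:ℤ)^2*sT^2),
        Finset.sum_add_distrib, Finset.sum_add_distrib,
        Finset.sum_const, Finset.sum_const, nsmul_eq_mul, nsmul_eq_mul,
        ← hsT, ← hsS] at hsum0
      have hUT : ∑ r ∈ fT, (u t - ((n:ℤ)*(n:ℤ) + (n:ℤ))) ≤ ∑ r ∈ fT, u r := by
        apply Finset.sum_le_sum
        intro r hr
        have h1 := hsame r t ((Finset.mem_filter.1 hr).2)
        omega
      have hUS : ∑ r ∈ fS, u r ≤ ∑ r ∈ fS, (u s + ((n:ℤ)*(n:ℤ) + (n:ℤ))) := by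
        apply Finset.sum_le_sum
        intro r hr
        have h1 := hsame s r ((Finset.mem_filter.1 hr).2).symm
        omega
      rw [Finset.sum_const, nsmul_eq_mul, ← hsT] at hUT
      rw [Finset.sum_const, nsmul_eq_mul, ← hsS] at hUS
      have hsum1 : ∑ r ∈ fT, (-2*(n:ℤ)*sS*(u r)) = (-2*(n:ℤ)*sS) * ∑ r ∈ fT, u r := by
        rw [Finset.mul_sum]
      have hsum2 : ∑ r ∈ fS, (2*(n:ℤ)*sT*(u r)) = (2*(n:ℤ)*sT) * ∑ r ∈ fS, u r := by
        rw [Finset.mul_sum]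
      rw [hsum1, hsum2] at hsum0
      -- put everything together
      have hM : 0 ≤ ((n:ℤ) * sS * sT) *
          (2*(u s - u t) + 4*((n:ℤ)*(n:ℤ) + (n:ℤ)) + (n:ℤ)*(sS + sT)) := by
        have e1 : (-2*(n:ℤ)*sS) * ∑ r ∈ fT, u r ≤
            (-2*(n:ℤ)*sS) * (sT * (u t - ((n:ℤ)*(n:ℤ) + (n:ℤ)))) := by
          apply mul_le_mul_of_nonpos_left hUT
          nlinarith
        have e2 : (2*(n:ℤ)*sT) * ∑ r ∈ fS, u r ≤
            (2*(n:ℤ)*sT) * (sS * (u s + ((n:ℤ)*(n:ℤ) + (n:ℤ)))) := by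
          apply mul_le_mul_of_nonneg_left hUS
          nlinarith
        nlinarith [hsum0]
      have hC : 0 < (n:ℤ) * sS * sT := by positivity
      have hM2 : 0 ≤ 2*(u s - u t) + 4*((n:ℤ)*(n:ℤ) + (n:ℤ)) + (n:ℤ)*(sS + sT) := by
        by_contra hc2
        push_neg at hc2
        nlinarith
      nlinarith [mul_le_mul_of_nonneg_left hcard (by omega : (0:ℤ) ≤ (n:ℤ))]

lemma toPerm_congr {x z : Fin n → ℤ} (hx : Inj n x) (hz : Inj n z)
    (hres : ∀ t, x t % (n:ℤ) = z t % (n:ℤ)) : toPerm hn x hx = toPerm hn z hz := by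
  have hresf : ∀ t, res hn x t = res hn z t := by
    intro t
    apply Fin.ext
    simp only [res]
    rw [hres t]
  apply Equiv.ext
  intro p
  have h1 : res hn x (toPerm hn z hz p) = p := by
    rw [hresf]
    exact res_toPerm hn hz p
  calc toPerm hn x hx p = toPerm hn x hx (res hn x (toPerm hn z hz p)) := by rw [h1]
    _ = toPerm hn z hz p := toPerm_res hn hx _

lemma stdlift (σ : Fin n ≃ Fin n) :
    ∃ x₀ : Fin n → ℤ, ∃ hx₀ : Inj n x₀, toPerm hn x₀ hx₀ = σ ∧
      (∀ t, 0 ≤ x₀ t ∧ x₀ t < (n:ℤ)) := by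
  have hN := hNpos hn
  set x₀ : Fin n → ℤ := fun t => ((σ.symm t : Fin n) : ℤ) with hx₀def
  have hrng : ∀ t, 0 ≤ x₀ t ∧ x₀ t < (n:ℤ) := by
    intro t
    constructor
    · show (0:ℤ) ≤ ((σ.symm t : Fin n) : ℕ)
      positivity
    · show (((σ.symm t : Fin n) : ℕ) : ℤ) < (n:ℤ)
      exact_mod_cast (σ.symm t).is_lt
  have hmod : ∀ t, x₀ t % (n:ℤ) = x₀ t := fun t =>
    Int.emod_eq_of_lt (hrng t).1 (hrng t).2
  have hx₀ : Inj n x₀ := by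
    intro s t hst
    rw [hmod s, hmod t] at hst
    have hst' : (((σ.symm s : Fin n) : ℕ) : ℤ) = (((σ.symm t : Fin n) : ℕ) : ℤ) := hst
    have : σ.symm s = σ.symm t := by
      apply Fin.ext
      exact_mod_cast hst'
    exact σ.symm.injective this
  refine ⟨x₀, hx₀, ?_, hrng⟩
  apply Equiv.ext
  intro p
  have hres : res hn x₀ (σ p) = p := by
    apply Fin.ext
    simp only [res]
    rw [show x₀ (σ p) = ((σ.symm (σ p) : Fin n) : ℤ) from rfl, Equiv.symm_apply_apply,
      Int.emod_eq_of_lt (by positivity) (by exact_mod_cast p.is_lt)]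
    simp
  calc toPerm hn x₀ hx₀ p = toPerm hn x₀ hx₀ (res hn x₀ (σ p)) := by rw [hres]
    _ = σ p := toPerm_res hn hx₀ _

lemma cost_bound {x₀ y' : Fin n → ℤ} (hrng : ∀ t, 0 ≤ x₀ t ∧ x₀ t < (n:ℤ))
    (hdisp : ∀ s t, (y' t - x₀ t) - (y' s - x₀ s) ≤ 4 * (n:ℤ) * (n:ℤ)) :
    cost n x₀ y' ≤ n * n * (4 * n + 1) := by
  have hN := hNpos hn
  have hpair : ∀ a b : Fin n, (pat n x₀ a b - pat n y' a b).natAbs ≤ 4 * n + 1 := by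
    intro a b
    have he1 := hdisp a b
    have he2 := hdisp b a
    set d : ℤ := x₀ b - x₀ a with hd
    set e : ℤ := (y' b - x₀ b) - (y' a - x₀ a) with he
    have hyd : y' b - y' a = d + e := by rw [hd, he]; ring
    have hup : pat n y' a b ≤ pat n x₀ a b + e / (n:ℤ) + 1 := by
      rw [pat, pat, hyd]
      exact ediv_shift_le hN
    have hlo : pat n x₀ a b + e / (n:ℤ) ≤ pat n y' a b := by
      rw [pat, pat, hyd]
      exact le_ediv_shift hN
    have heup : e / (n:ℤ) ≤ 4 * (n:ℤ) := by
      have h1 : e ≤ (n:ℤ) * (4 * (n:ℤ)) := by nlinarith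
      have h2 := Int.ediv_le_ediv hN h1
      rwa [Int.mul_ediv_cancel_left _ (ne_of_gt hN)] at h2
    have helo : -(4 * (n:ℤ)) ≤ e / (n:ℤ) := by
      have h1 : (n:ℤ) * (-(4 * (n:ℤ))) ≤ e := by nlinarith
      have h2 := Int.ediv_le_ediv hN h1
      rwa [Int.mul_ediv_cancel_left _ (ne_of_gt hN)] at h2
    omega
  have hsum := Finset.sum_le_card_nsmul Finset.univ
    (fun p : Fin n × Fin n => (pat n x₀ p.1 p.2 - pat n y' p.1 p.2).natAbs)
    (4 * n + 1) (fun p _ => hpair p.1 p.2)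
  rw [cost]
  calc (∑ p : Fin n × Fin n, (pat n x₀ p.1 p.2 - pat n y' p.1 p.2).natAbs)
      ≤ Finset.univ.card • (4 * n + 1) := hsum
    _ = n * n * (4 * n + 1) := by
        rw [Finset.card_univ, Fintype.card_prod, Fintype.card_fin, smul_eq_mul]

lemma main_dist (Y : SimpleGraph (Fin n)) (hconn : (FS (cycleGraph n) Y).Connected)
    (σ τ : Fin n ≃ Fin n) :
    (FS (cycleGraph n) Y).edist σ τ ≤ ((4 * n^3 : ℕ) : ℕ∞) := by
  obtain ⟨x₀, hx₀, hσ, hrng⟩ := stdlift hn σ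
  obtain ⟨w0⟩ := hconn.preconnected σ τ
  obtain ⟨y, hy, hτ, hysum, hyval⟩ := lift_walk hn Y w0 x₀ hx₀ hσ
  obtain ⟨y', hres, hsum', hval', hdisp⟩ := exists_normalized hn hrng hyval
  have hy' : Inj n y' := by
    intro s t hst
    apply hy
    rwa [← hres s, ← hres t]
  have hτ' : toPerm hn y' hy' = τ := by
    rw [← hτ]
    exact toPerm_congr hn hy' hy hres
  obtain ⟨w, hwlen⟩ := walk_of_valid hn Y hy' (cost n x₀ y') x₀ hx₀ hval'
    ((hsum'.trans hysum).symm) rfl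
  have hcost := cost_bound hn hrng hdisp
  have hlen : w.length ≤ 4 * n^3 := by
    have h8 : n * n * (4 * n + 1) ≤ 8 * n^3 := by nlinarith
    omega
  have hedist := SimpleGraph.Walk.edist_le w
  rw [← hσ, ← hτ']
  exact le_trans hedist (by exact_mod_cast Nat.cast_le.2 hlen)

end Conf
end FSProof


/-- For every `n ≥ 3` and every `n`-vertex graph `Y`, if `FS(Cycle_n, Y)` is
connected then its diameter is at most `4n³ + |E(Y)|`. -/
theorem fs_cycle_diam_of_connected (n : ℕ) (hn : 3 ≤ n) (Y : SimpleGraph (Fin n))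
    (h : (FS (cycleGraph n) Y).Connected) :
    (FS (cycleGraph n) Y).diam ≤ 4 * n ^ 3 + Y.edgeSet.ncard := by
  haveI : NeZero n := ⟨by omega⟩
  have hediam : (FS (cycleGraph n) Y).ediam ≤ ((4 * n^3 + Y.edgeSet.ncard : ℕ) : ℕ∞) := by
    apply SimpleGraph.ediam_le_of_edist_le
    intro σ τ
    refine le_trans (FSProof.main_dist hn Y h σ τ) ?_
    exact Nat.cast_le.2 (Nat.le_add_right _ _)
  have h2 := ENat.toNat_le_toNat hediam (ENat.coe_ne_top _)
  rwa [ENat.toNat_coe] at h2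
end

section
/- There exists an absolute constant C > 0 such that for every n ≥ 3 and every simple graph Y on n vertices, the diameter of any connected component of the friends-and-strangers graph FS(Cycle_n, Y) is at most C·n⁴. -/
set_option linter.unusedSectionVars false
set_option linter.unusedVariables false
set_option maxHeartbeats 1000000

open SimpleGraph

open Finset

namespace FSDiam

/-- reduction of an integer mod `n` into `Fin n` -/
def fm (n : ℕ) [NeZero n] (x : ℤ) : Fin n :=
  ⟨(x % n).toNat, by
    have h0 : 0 < (n : ℤ) := by exact_mod_cast Nat.pos_of_ne_zero (NeZero.ne n)
    have h1 := Int.emod_lt_of_pos x (by omega : 0 < (n:ℤ))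
    have h2 := Int.emod_nonneg x (by omega : (n:ℤ) ≠ 0)
    omega⟩

variable {n : ℕ} [NeZero n]

lemma npos : 0 < (n : ℤ) := by exact_mod_cast Nat.pos_of_ne_zero (NeZero.ne n)

lemma fm_coe (x : ℤ) : ((fm n x : ℕ) : ℤ) = x % n := by
  have h2 := Int.emod_nonneg x (by have := npos (n := n); omega : (n:ℤ) ≠ 0)
  simp [fm, Int.toNat_of_nonneg h2]

lemma fm_eq_iff {x y : ℤ} : fm n x = fm n y ↔ x % n = y % n := by
  rw [Fin.ext_iff]
  constructor
  · intro h
    have := congrArg (fun t : ℕ => (t : ℤ)) h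
    simpa [fm_coe] using this
  · intro h
    have : ((fm n x : ℕ) : ℤ) = ((fm n y : ℕ) : ℤ) := by rw [fm_coe, fm_coe, h]
    exact_mod_cast this

lemma fm_vI (a : Fin n) : fm n (a.val : ℤ) = a := by
  have h : ((a.val : ℤ)) % n = a.val := Int.emod_eq_of_lt (by positivity) (by exact_mod_cast a.isLt)
  have : ((fm n (a.val : ℤ) : ℕ) : ℤ) = a.val := by rw [fm_coe, h]
  exact Fin.ext (by exact_mod_cast this)

lemma fm_add_mul (x k : ℤ) : fm n (x + n * k) = fm n x := by
  rw [fm_eq_iff]; simp [Int.add_mul_emod_self_left]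

lemma fm_add_n (x : ℤ) : fm n (x + n) = fm n x := by
  simpa using fm_add_mul x 1

lemma fm_dec (x : ℤ) : x = ((fm n x : ℕ) : ℤ) + n * (x / n) := by
  rw [fm_coe]
  have := Int.emod_def x (n : ℤ)
  linarith

lemma fm_eq_dvd {x y : ℤ} (h : fm n x = fm n y) : (n:ℤ) ∣ y - x := by
  rw [fm_eq_iff] at h
  exact Int.ModEq.dvd h

lemma fm_add_one (hn : 2 ≤ n) (x : ℤ) : fm n (x + 1) = fm n x + 1 := by
  apply Fin.ext
  have hone : ((1 : Fin n) : ℕ) = 1 := by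
    rw [Fin.val_one']
    exact Nat.mod_eq_of_lt (by omega)
  have hone2 : (1 : ℤ) % (n:ℤ) = 1 :=
    Int.emod_eq_of_lt (by omega) (by exact_mod_cast (show 1 < n by omega))
  have h1 : ((fm n (x+1) : ℕ) : ℤ) = (x % n + 1) % n := by
    rw [fm_coe, Int.add_emod x 1, hone2]
  have h2 : ((((fm n x : ℕ) + 1) % n : ℕ) : ℤ) = (x % n + 1) % n := by
    push_cast
    rw [fm_coe]
  rw [Fin.add_def, hone]
  exact_mod_cast h1.trans h2.symm


/-- the periodic adjacent transposition at residues `x₀, x₀+1` -/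
def sw (n : ℕ) [NeZero n] (x₀ : ℤ) (y : ℤ) : ℤ :=
  if fm n y = fm n x₀ then y + 1 else if fm n y = fm n (x₀ + 1) then y - 1 else y

section SW

variable (hn : 3 ≤ n) (x₀ : ℤ)

include hn

lemma fm_succ_ne (x : ℤ) : fm n (x + 1) ≠ fm n x := by
  intro h
  have := fm_eq_dvd h
  have h1 : (n : ℤ) ∣ 1 := dvd_neg.mp (by simpa using this)
  have := Int.le_of_dvd one_pos h1
  omega

lemma sw_apply_fst {y : ℤ} (h : fm n y = fm n x₀) : sw n x₀ y = y + 1 := by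
  rw [sw, if_pos h]

lemma sw_apply_snd {y : ℤ} (h : fm n y = fm n (x₀ + 1)) : sw n x₀ y = y - 1 := by
  have hne : fm n y ≠ fm n x₀ := by
    rw [h]; exact fm_succ_ne hn x₀
  rw [sw, if_neg hne, if_pos h]

lemma sw_apply_other {y : ℤ} (h1 : fm n y ≠ fm n x₀) (h2 : fm n y ≠ fm n (x₀ + 1)) :
    sw n x₀ y = y := by
  rw [sw, if_neg h1, if_neg h2]

lemma sw_shift (y k : ℤ) : sw n x₀ (y + n * k) = sw n x₀ y + n * k := by
  rcases eq_or_ne (fm n y) (fm n x₀) with h | h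
  · rw [sw_apply_fst hn x₀ (by rwa [fm_add_mul]), sw_apply_fst hn x₀ h]; ring
  rcases eq_or_ne (fm n y) (fm n (x₀ + 1)) with h2 | h2
  · rw [sw_apply_snd hn x₀ (by rwa [fm_add_mul]), sw_apply_snd hn x₀ h2]; ring
  · rw [sw_apply_other hn x₀ (by rwa [fm_add_mul]) (by rwa [fm_add_mul]),
      sw_apply_other hn x₀ h h2]

lemma fm_pred (y : ℤ) (hn' : 2 ≤ n) : fm n (y - 1) + 1 = fm n y := by
  rw [← fm_add_one hn' (y-1), sub_add_cancel]

lemma sw_invol (y : ℤ) : sw n x₀ (sw n x₀ y) = y := by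
  rcases eq_or_ne (fm n y) (fm n x₀) with h | h
  · have hs : fm n (y + 1) = fm n (x₀ + 1) := by
      rw [fm_add_one (by omega : 2 ≤ n) y, h, fm_add_one (by omega : 2 ≤ n) x₀]
    rw [sw_apply_fst hn x₀ h, sw_apply_snd hn x₀ hs]
    ring
  rcases eq_or_ne (fm n y) (fm n (x₀ + 1)) with h2 | h2
  · have hy : fm n (y - 1) = fm n x₀ := by
      have h3 : fm n (y - 1) + 1 = fm n x₀ + 1 := by
        rw [fm_pred hn y (by omega), h2, fm_add_one (by omega : 2 ≤ n) x₀]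
      exact add_right_cancel h3
    rw [sw_apply_snd hn x₀ h2, sw_apply_fst hn x₀ hy]
    ring
  · rw [sw_apply_other hn x₀ h h2, sw_apply_other hn x₀ h h2]

lemma sw_fm (y : ℤ) : fm n (sw n x₀ y) = Equiv.swap (fm n x₀) (fm n (x₀+1)) (fm n y) := by
  rcases eq_or_ne (fm n y) (fm n x₀) with h | h
  · rw [sw_apply_fst hn x₀ h, h, Equiv.swap_apply_left,
      fm_add_one (by omega : 2 ≤ n) y, h, fm_add_one (by omega : 2 ≤ n) x₀]
  rcases eq_or_ne (fm n y) (fm n (x₀ + 1)) with h2 | h2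
  · rw [sw_apply_snd hn x₀ h2, h2, Equiv.swap_apply_right]
    have h3 : fm n (y - 1) + 1 = fm n x₀ + 1 := by
      rw [fm_pred hn y (by omega), h2, fm_add_one (by omega : 2 ≤ n) x₀]
    exact add_right_cancel h3
  · rw [sw_apply_other hn x₀ h h2, Equiv.swap_apply_of_ne_of_ne h h2]

lemma sw_le (y : ℤ) : sw n x₀ y ≤ y + 1 ∧ y - 1 ≤ sw n x₀ y := by
  rw [sw]
  split_ifs <;> omega

lemma sw_inj {y z : ℤ} (h : sw n x₀ y = sw n x₀ z) : y = z := by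
  have := congrArg (sw n x₀) h
  rwa [sw_invol hn, sw_invol hn] at this

lemma sw_flip {i j : ℤ} (hij : i < j) (hflip : sw n x₀ j < sw n x₀ i) :
    j = i + 1 ∧ fm n i = fm n x₀ := by
  have h1 := sw_le hn x₀ i
  have h2 := sw_le hn x₀ j
  have hj : j = i + 1 := by omega
  subst hj
  refine ⟨rfl, ?_⟩
  by_contra h
  rcases eq_or_ne (fm n i) (fm n (x₀ + 1)) with he | he
  · have := sw_apply_snd hn x₀ he
    omega
  · have hswi := sw_apply_other hn x₀ h he
    have hfj : fm n (i+1) = fm n i + 1 := fm_add_one (by omega) _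
    rcases eq_or_ne (fm n (i+1)) (fm n x₀) with hf | hf
    · have := sw_apply_fst hn x₀ hf
      omega
    rcases eq_or_ne (fm n (i+1)) (fm n (x₀+1)) with hg | hg
    · -- then fm i = fm x₀, contradiction with h
      exfalso
      apply h
      rw [hfj, fm_add_one (by omega : 2 ≤ n) x₀] at hg
      exact add_right_cancel hg
    · have := sw_apply_other hn x₀ hf hg
      omega

end SW


section Conf

variable {Y : SimpleGraph (Fin n)}

/-- periodic configuration associated to a bijection -/
def uconf (σ : Fin n ≃ Fin n) : ℤ → Fin n := fun x => σ (fm n x)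

lemma uconf_shift (σ : Fin n ≃ Fin n) (x k : ℤ) : uconf σ (x + n * k) = uconf σ x := by
  simp [uconf, fm_add_mul]

/-- a certificate relating two configurations -/
structure Valid (Y : SimpleGraph (Fin n)) (σ τ : Fin n ≃ Fin n) (r : ℤ → ℤ) : Prop where
  per : ∀ i : ℤ, r (i + n) = r i + n
  compat : ∀ i : ℤ, uconf τ (r i) = uconf σ i
  sum0 : ∑ x : Fin n, (r (x.val : ℤ) - (x.val : ℤ)) = 0
  mono : ∀ i j : ℤ, i < j → ¬ Y.Adj (uconf σ i) (uconf σ j) → r i < r j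

lemma per_shift {r : ℤ → ℤ} (hper : ∀ i : ℤ, r (i + n) = r i + n) (k : ℤ) (i : ℤ) :
    r (i + n * k) = r i + n * k := by
  induction k using Int.induction_on with
  | zero => simp
  | succ m ih =>
      have : i + n * (m + 1) = (i + n * m) + n := by ring
      rw [this, hper, ih]; ring
  | pred m ih =>
      have h2 := hper (i + n * (-m - 1))
      have he : i + n * (-m - 1) + n = i + n * (-(m:ℤ)) := by ring
      rw [he] at h2
      rw [h2] at ih
      have : i + n * (-(m:ℤ) - 1) = i + n * (-m - 1) := by ring
      rw [this]
      omega

lemma sw_add_n (hn : 3 ≤ n) (x₀ y : ℤ) : sw n x₀ (y + n) = sw n x₀ y + n := by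
  simpa using sw_shift hn x₀ y 1

lemma disp_per {r : ℤ → ℤ} (hper : ∀ i : ℤ, r (i + n) = r i + n) (y : ℤ) :
    r y - y = r ((fm n y : ℕ) : ℤ) - ((fm n y : ℕ) : ℤ) := by
  have hd := fm_dec (n := n) y
  set v : ℤ := ((fm n y : ℕ) : ℤ) with hv
  have h2 := per_shift hper (y / n) v
  rw [← hd] at h2
  omega

lemma sum0_sw (hn : 3 ≤ n) {r : ℤ → ℤ} (hper : ∀ i : ℤ, r (i + n) = r i + n)
    (hsum : ∑ x : Fin n, (r (x.val : ℤ) - (x.val : ℤ)) = 0) (x₀ : ℤ) :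
    ∑ x : Fin n, (r (sw n x₀ (x.val : ℤ)) - (x.val : ℤ)) = 0 := by
  set a := fm n x₀ with ha
  set b := fm n (x₀ + 1) with hb
  have hab : a ≠ b := fun h => fm_succ_ne hn x₀ h.symm
  have split : ∀ x : Fin n, r (sw n x₀ (x.val : ℤ)) - (x.val : ℤ) =
      (r ((Equiv.swap a b x).val : ℤ) - ((Equiv.swap a b x).val : ℤ))
        + (if x = a then 1 else 0) + (if x = b then (-1) else 0) := by
    intro x
    have h1 : r (sw n x₀ (x.val : ℤ)) - sw n x₀ (x.val : ℤ) =
        r ((Equiv.swap a b x).val : ℤ) - ((Equiv.swap a b x).val : ℤ) := by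
      have := disp_per hper (sw n x₀ (x.val : ℤ))
      rwa [sw_fm hn, fm_vI, ← ha, ← hb] at this
    have h2 : sw n x₀ (x.val : ℤ) - (x.val : ℤ) =
        (if x = a then 1 else 0) + (if x = b then (-1) else 0) := by
      rcases eq_or_ne x a with h | h
      · rw [if_pos h, if_neg (h ▸ hab), sw_apply_fst hn x₀ (by rw [fm_vI, h])]
        ring
      rcases eq_or_ne x b with h' | h'
      · rw [if_neg h, if_pos h', sw_apply_snd hn x₀ (by rw [fm_vI, h'])]
        ring
      · rw [if_neg h, if_neg h', sw_apply_other hn x₀ (by rw [fm_vI, ← ha]; exact h)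
          (by rw [fm_vI, ← hb]; exact h')]
        ring
    omega
  rw [Finset.sum_congr rfl (fun x _ => split x)]
  rw [Finset.sum_add_distrib, Finset.sum_add_distrib]
  have e1 : ∑ x : Fin n, (r ((Equiv.swap a b x).val : ℤ) - ((Equiv.swap a b x).val : ℤ)) = 0 := by
    rw [Equiv.sum_comp (Equiv.swap a b) (fun t : Fin n => r ((t.val : ℤ)) - ((t.val : ℤ)))]
    exact hsum
  have e2 : ∑ x : Fin n, (if x = a then (1:ℤ) else 0) = 1 := by simp
  have e3 : ∑ x : Fin n, (if x = b then (-1:ℤ) else 0) = -1 := by simp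
  rw [e1, e2, e3]
  ring

lemma valid_nil (σ : Fin n ≃ Fin n) : Valid Y σ σ id := by
  refine ⟨fun i => rfl, fun i => rfl, by simp, fun i j hij _ => hij⟩

lemma fin_eq_add_one {a b : Fin n} (hn : 3 ≤ n) (h : (b - a).val = 1) : b = a + 1 := by
  have h1 : ((1 : Fin n)).val = 1 := by
    rw [Fin.val_one']; exact Nat.mod_eq_of_lt (by omega)
  have : b - a = 1 := Fin.ext (by rw [h, h1])
  rw [sub_eq_iff_eq_add] at this
  rw [this]; exact add_comm _ _

lemma valid_cons (hn : 3 ≤ n) {σ σ₁ τ : Fin n ≃ Fin n} {r : ℤ → ℤ}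
    (hadj : (FS (cycleGraph n) Y).Adj σ σ₁) (hv : Valid Y σ₁ τ r) :
    ∃ r', Valid Y σ τ r' := by
  suffices key : ∀ a b : Fin n, b = a + 1 → Y.Adj (σ a) (σ b) → σ a = σ₁ b → σ b = σ₁ a →
      (∀ c, c ≠ a → c ≠ b → σ c = σ₁ c) → ∃ r', Valid Y σ τ r' by
    obtain ⟨a', b', hcyc, hY, h1, h2, h3⟩ := hadj
    rcases cycleGraph_adj'.mp hcyc with hor | hor
    · exact key b' a' (fin_eq_add_one hn hor) hY.symm h2 h1 (fun c hc1 hc2 => h3 c hc2 hc1)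
    · exact key a' b' (fin_eq_add_one hn hor) hY h1 h2 h3
  clear hadj
  intro a b hb hY h1 h2 h3
  set x₀ : ℤ := (a.val : ℤ) with hx₀
  have hfa : fm n x₀ = a := fm_vI a
  have hfb : fm n (x₀ + 1) = b := by
    rw [fm_add_one (by omega : 2 ≤ n), hfa, hb]
  have hcomp : ∀ y : ℤ, uconf σ y = uconf σ₁ (sw n x₀ y) := by
    intro y
    show σ (fm n y) = σ₁ (fm n (sw n x₀ y))
    rw [sw_fm hn, hfa, hfb]
    rcases eq_or_ne (fm n y) a with h | h
    · rw [h, Equiv.swap_apply_left]; exact h1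
    rcases eq_or_ne (fm n y) b with h' | h'
    · rw [h', Equiv.swap_apply_right]; exact h2
    · rw [Equiv.swap_apply_of_ne_of_ne h h']; exact h3 _ h h'
  refine ⟨fun i => r (sw n x₀ i), ?_, ?_, ?_, ?_⟩
  · intro i
    rw [sw_add_n hn, hv.per]
  · intro i
    rw [hv.compat (sw n x₀ i), ← hcomp i]
  · exact sum0_sw hn hv.per hv.sum0 x₀
  · intro i j hij hnadj
    rcases lt_trichotomy (sw n x₀ i) (sw n x₀ j) with hlt | heq | hgt
    · refine hv.mono _ _ hlt ?_
      rwa [← hcomp i, ← hcomp j]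
    · exact absurd (sw_inj hn x₀ heq) hij.ne
    · exfalso
      obtain ⟨hj, hfi⟩ := sw_flip hn x₀ hij hgt
      apply hnadj
      have e1 : uconf σ i = σ a := by
        show σ (fm n i) = σ a
        rw [hfi, hfa]
      have e2 : uconf σ j = σ b := by
        show σ (fm n j) = σ b
        rw [hj, fm_add_one (by omega : 2 ≤ n), hfi, hfa, hb]
      rw [e1, e2]
      exact hY

lemma valid_of_walk {σ τ : Fin n ≃ Fin n} (hn : 3 ≤ n)
    (W : (FS (cycleGraph n) Y).Walk σ τ) : ∃ r, Valid Y σ τ r := by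
  induction W with
  | nil => exact ⟨id, valid_nil _⟩
  | cons h p ih =>
      obtain ⟨r, hr⟩ := ih
      exact valid_cons hn h hr

lemma r_inj (hv : Valid Y σ τ r) {i j : ℤ} (h : r i = r j) : i = j := by
  have hc : uconf σ i = uconf σ j := by
    rw [← hv.compat i, ← hv.compat j, h]
  have hfm : fm n i = fm n j := σ.injective hc
  obtain ⟨k, hk⟩ := fm_eq_dvd hfm
  have hj : j = i + n * k := by omega
  have := per_shift hv.per k i
  rw [← hj] at this
  have hk0 : (n:ℤ) * k = 0 := by omega
  have : k = 0 := by
    rcases mul_eq_zero.mp hk0 with h' | h'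
    · exact absurd h' (by have := npos (n := n); omega)
    · exact h'
  omega

/-- position of person `p` in `σ`, in the window `[0, n)` -/
def iP (σ : Fin n ≃ Fin n) (p : Fin n) : ℤ := ((σ.symm p).val : ℤ)

/-- winding of person `p` -/
def wP (σ : Fin n ≃ Fin n) (r : ℤ → ℤ) (p : Fin n) : ℤ := r (iP σ p) / n

lemma iP_nonneg (σ : Fin n ≃ Fin n) (p : Fin n) : 0 ≤ iP σ p := Int.ofNat_nonneg _

lemma iP_lt (σ : Fin n ≃ Fin n) (p : Fin n) : iP σ p < n := by
  unfold iP
  exact_mod_cast (σ.symm p).isLt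

lemma uconf_iP (σ : Fin n ≃ Fin n) (p : Fin n) : uconf σ (iP σ p) = p := by
  simp [uconf, iP, fm_vI]

lemma r_iP (hv : Valid Y σ τ r) (p : Fin n) :
    r (iP σ p) = iP τ p + n * wP σ r p := by
  have hc : uconf τ (r (iP σ p)) = p := by rw [hv.compat, uconf_iP]
  have hfm : fm n (r (iP σ p)) = τ.symm p := τ.injective (by simpa [uconf] using hc)
  have hd := fm_dec (n := n) (r (iP σ p))
  rw [hfm] at hd
  exact hd

lemma w_adj (hv : Valid Y σ τ r) (hn : 3 ≤ n) {p q : Fin n}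
    (hpq : p ≠ q) (hYc : ¬ Y.Adj p q) : |wP σ r p - wP σ r q| ≤ 1 := by
  have hnpos := npos (n := n)
  have key : ∀ p q : Fin n, ¬ Y.Adj p q → iP σ p < iP σ q →
      wP σ r p ≤ wP σ r q ∧ wP σ r q ≤ wP σ r p + 1 := by
    intro p q hYc hlt
    have h1 : r (iP σ p) < r (iP σ q) := by
      refine hv.mono _ _ hlt ?_
      rwa [uconf_iP, uconf_iP]
    have h2 : r (iP σ q) < r (iP σ p + n) := by
      refine hv.mono _ _ ?_ ?_
      · have := iP_lt σ q; have := iP_nonneg σ p; omega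
      · have hsh : uconf σ (iP σ p + (n:ℤ)) = p := by
          have h := uconf_shift σ (iP σ p) 1
          rw [mul_one] at h
          rw [h, uconf_iP]
        rw [uconf_iP, hsh]
        intro hadj
        exact hYc (hadj.symm)
    rw [hv.per] at h2
    rw [r_iP hv p, r_iP hv q] at h1 h2
    have b1 := iP_nonneg τ p; have b2 := iP_lt τ p
    have b3 := iP_nonneg τ q; have b4 := iP_lt τ q
    constructor
    · by_contra hcon
      push_neg at hcon
      have : (n:ℤ) * (wP σ r q + 1) ≤ n * wP σ r p := by
        apply mul_le_mul_of_nonneg_left (by omega) (by omega)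
      have := this
      nlinarith
    · by_contra hcon
      push_neg at hcon
      have : (n:ℤ) * (wP σ r p + 2) ≤ n * wP σ r q := by
        apply mul_le_mul_of_nonneg_left (by omega) (by omega)
      nlinarith
  have hip : iP σ p ≠ iP σ q := by
    intro h
    apply hpq
    have hval : (σ.symm p).val = (σ.symm q).val := by
      have h' : ((σ.symm p).val : ℤ) = ((σ.symm q).val : ℤ) := h
      exact_mod_cast h'
    exact σ.symm.injective (Fin.ext hval)
  rcases lt_or_gt_of_ne hip with h | h
  · obtain ⟨ha, hb⟩ := key p q hYc h
    rw [abs_le]; omega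
  · obtain ⟨ha, hb⟩ := key q p (fun hadj => hYc hadj.symm) h
    rw [abs_le]; omega

lemma w_walk (hv : Valid Y σ τ r) (hn : 3 ≤ n) {p q : Fin n} (W : Yᶜ.Walk p q) :
    |wP σ r p - wP σ r q| ≤ (W.length : ℤ) := by
  induction W with
  | nil => simp
  | @cons u v w h W ih =>
      have hadj := h
      rw [compl_adj] at hadj
      have h1 : |wP σ r u - wP σ r v| ≤ 1 := w_adj hv hn hadj.1 hadj.2
      calc |wP σ r u - wP σ r w| ≤ |wP σ r u - wP σ r v| + |wP σ r v - wP σ r w| :=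
            abs_sub_le _ _ _
        _ ≤ 1 + W.length := by exact add_le_add h1 ih
        _ ≤ ((W.length + 1 : ℕ) : ℤ) := by push_cast; omega
        _ = _ := by rw [SimpleGraph.Walk.length_cons]

lemma w_reach (hv : Valid Y σ τ r) (hn : 3 ≤ n) {p q : Fin n} (h : Yᶜ.Reachable p q) :
    |wP σ r p - wP σ r q| ≤ (n : ℤ) - 1 := by
  obtain ⟨W⟩ := h
  have hP := w_walk hv hn (W.bypass)
  have hlen : W.bypass.length < n := by
    have := SimpleGraph.Walk.IsPath.length_lt (W.bypass_isPath)
    simpa using this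
  have hc : (W.bypass.length : ℤ) < (n:ℤ) := by exact_mod_cast hlen
  linarith

lemma sum_w (hv : Valid Y σ τ r) : ∑ p : Fin n, wP σ r p = 0 := by
  have hnpos := npos (n := n)
  have h1 : ∑ p : Fin n, (r (iP σ p) - iP σ p) = 0 := by
    have he := Equiv.sum_comp σ.symm (fun x : Fin n => r ((x.val : ℤ)) - ((x.val : ℤ)))
    calc ∑ p : Fin n, (r (iP σ p) - iP σ p)
        = ∑ x : Fin n, (r ((x.val : ℤ)) - ((x.val : ℤ))) := he
      _ = 0 := hv.sum0
  have h2 : ∑ p : Fin n, (iP τ p + (n:ℤ) * wP σ r p - iP σ p) = 0 := by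
    rw [← h1]
    refine Finset.sum_congr rfl fun p _ => ?_
    rw [r_iP hv p]
  have h3 : ∑ p : Fin n, iP τ p = ∑ p : Fin n, iP σ p := by
    rw [show ∑ p : Fin n, iP τ p = ∑ x : Fin n, ((x.val : ℤ)) from
        Equiv.sum_comp τ.symm (fun x : Fin n => ((x.val : ℤ))),
      show ∑ p : Fin n, iP σ p = ∑ x : Fin n, ((x.val : ℤ)) from
        Equiv.sum_comp σ.symm (fun x : Fin n => ((x.val : ℤ)))]
  have h4 : (n:ℤ) * ∑ p : Fin n, wP σ r p = 0 := by
    rw [Finset.mul_sum]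
    rw [Finset.sum_sub_distrib, Finset.sum_add_distrib] at h2
    omega
  rcases mul_eq_zero.mp h4 with h' | h'
  · omega
  · exact h'

/-- canonical representative of the `Yᶜ`-component of `p` -/
noncomputable def repC (Y : SimpleGraph (Fin n)) (p : Fin n) : Fin n :=
  (Yᶜ.connectedComponentMk p).out

lemma repC_reachable (p : Fin n) : Yᶜ.Reachable p (repC Y p) := by
  have h : Yᶜ.connectedComponentMk (repC Y p) = Yᶜ.connectedComponentMk p :=
    (Yᶜ.connectedComponentMk p).out_eq
  exact (SimpleGraph.ConnectedComponent.eq.mp h).symm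

lemma repC_eq_of_reachable {p q : Fin n} (h : Yᶜ.Reachable p q) : repC Y p = repC Y q := by
  unfold repC
  rw [SimpleGraph.ConnectedComponent.sound h]

end Conf

section NT

variable {α : Type*} [DecidableEq α]

theorem nt_aux (s : Finset α) (hs : s.Nonempty) (c : α → ℕ) (hc : ∀ x ∈ s, 0 < c x) :
    ∀ T : ℤ, (((s.gcd c : ℕ) : ℤ) ∣ T) →
    ∃ δ : α → ℤ, (∑ x ∈ s, (c x : ℤ) * δ x = T) ∧
      ∀ x ∈ s, |δ x| ≤ |T| + (∑ x ∈ s, (c x : ℤ))^2 + ∑ x ∈ s, (c x : ℤ) := by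
  induction hs using Finset.Nonempty.cons_induction with
  | singleton a =>
      intro T hT
      simp only [Finset.gcd_singleton] at hT
      rw [show normalize (c a) = c a from normalize_eq _] at hT
      have hdvd : ((c a : ℤ)) ∣ T := by exact_mod_cast hT
      refine ⟨fun _ => T / (c a : ℤ), by simp [Int.mul_ediv_cancel' hdvd], fun x hx => ?_⟩
      simp only [Finset.sum_singleton]
      have h1 : |T / (c a : ℤ)| ≤ |T| := Int.abs_ediv_le_abs _ _
      have h2 : (0:ℤ) ≤ ((c a : ℤ))^2 := sq_nonneg _
      have h3 : (0:ℤ) ≤ (c a : ℤ) := by positivity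
      linarith
  | cons a s ha hs ih =>
      intro T hT
      have hcs : ∀ x ∈ s, 0 < c x := fun x hx => hc x (Finset.mem_cons_of_mem hx)
      have hca : 0 < c a := hc a (Finset.mem_cons_self a s)
      set g' : ℕ := s.gcd c with hg'
      have hg'pos : 0 < g' := by
        rcases hs with ⟨x₀, hx₀⟩
        by_contra h
        have h0 : g' = 0 := by omega
        have := Finset.gcd_eq_zero_iff.mp h0 x₀ hx₀
        have := hcs x₀ hx₀
        omega
      -- gcd over the cons
      have hgcons : (Finset.cons a s ha).gcd c = Nat.gcd (c a) g' := by
        rw [Finset.cons_eq_insert, Finset.gcd_insert]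
        rfl
      rw [hgcons] at hT
      -- Bezout
      have hbez := Int.gcd_eq_gcd_ab (c a : ℤ) (g' : ℤ)
      have hgnat : (Int.gcd (c a : ℤ) (g' : ℤ) : ℤ) = (Nat.gcd (c a) g' : ℤ) := by
        rw [Int.gcd_natCast_natCast]
      obtain ⟨m, hm⟩ := hT
      set δ0 : ℤ := Int.gcdA (c a : ℤ) (g' : ℤ) * m with hδ0
      rw [hgnat] at hbez
      have hdvd0 : (g' : ℤ) ∣ T - (c a : ℤ) * δ0 := by
        refine ⟨Int.gcdB (c a : ℤ) (g' : ℤ) * m, ?_⟩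
        rw [hm, hδ0]
        linear_combination m * hbez
      set δa : ℤ := δ0 % (g' : ℤ) with hδa
      have hg'posZ : (0:ℤ) < (g' : ℤ) := by exact_mod_cast hg'pos
      have hδa0 : 0 ≤ δa := Int.emod_nonneg _ (by omega)
      have hδalt : δa < g' := Int.emod_lt_of_pos _ hg'posZ
      have hdvd1 : (g' : ℤ) ∣ T - (c a : ℤ) * δa := by
        have h5 : (g':ℤ) ∣ δ0 - δa := by
          refine ⟨δ0 / g', ?_⟩
          rw [hδa]
          have := Int.emod_def δ0 (g' : ℤ)
          omega
        obtain ⟨u, hu⟩ := hdvd0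
        obtain ⟨v, hv⟩ := h5
        refine ⟨u + (c a) * v, ?_⟩
        have : T - (c a : ℤ) * δa = (T - c a * δ0) + c a * (δ0 - δa) := by ring
        rw [this, hu, hv]
        ring
      obtain ⟨δ, hδsum, hδbound⟩ := ih hcs (T - (c a : ℤ) * δa) hdvd1
      set δf : α → ℤ := fun x => if x = a then δa else δ x with hδf
      have hδfa : δf a = δa := by simp [hδf]
      have hδfx : ∀ x ∈ s, δf x = δ x := by
        intro x hx
        simp only [hδf]
        rw [if_neg (by rintro rfl; exact ha hx)]
      refine ⟨δf, ?_, ?_⟩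
      · rw [Finset.sum_cons, hδfa]
        have : ∑ x ∈ s, (c x : ℤ) * δf x = ∑ x ∈ s, (c x : ℤ) * δ x := by
          refine Finset.sum_congr rfl fun x hx => ?_
          rw [hδfx x hx]
        rw [this, hδsum]
        ring
      · intro x hx
        have hsums : (0:ℤ) ≤ ∑ x ∈ s, (c x : ℤ) := by positivity
        have hsumcons : ∑ x ∈ Finset.cons a s ha, (c x : ℤ) = (c a : ℤ) + ∑ x ∈ s, (c x : ℤ) := by
          rw [Finset.sum_cons]
        -- g' ≤ ∑ x in s, c x
        have hg'le : (g' : ℤ) ≤ ∑ x ∈ s, (c x : ℤ) := by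
          rcases hs with ⟨x₀, hx₀⟩
          have hdvdg : g' ∣ c x₀ := Finset.gcd_dvd hx₀
          have h6 : (g' : ℤ) ≤ (c x₀ : ℤ) := by
            exact_mod_cast Nat.le_of_dvd (hcs x₀ hx₀) hdvdg
          have h7 : (c x₀ : ℤ) ≤ ∑ x ∈ s, (c x : ℤ) := by
            refine Finset.single_le_sum (f := fun y => ((c y : ℕ) : ℤ)) (fun y _ => by positivity) hx₀
          omega
        rcases Finset.mem_cons.mp hx with rfl | hx'
        · rw [hδfa, hsumcons]
          have hca' : (0:ℤ) ≤ (c x : ℤ) := by positivity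
          have habsT : (0:ℤ) ≤ |T| := abs_nonneg _
          have habs : |δa| = δa := abs_of_nonneg hδa0
          have hsq : (0:ℤ) ≤ ((c x : ℤ) + ∑ x ∈ s, (c x : ℤ))^2 := sq_nonneg _
          linarith
        · rw [hδfx x hx']
          have hb := hδbound x hx'
          have h8 : |T - (c a : ℤ) * δa| ≤ |T| + (c a : ℤ) * (g' : ℤ) := by
            have h9 : |(c a : ℤ) * δa| ≤ (c a : ℤ) * (g' : ℤ) := by
              rw [abs_mul]
              have : |(c a : ℤ)| = (c a : ℤ) := abs_of_nonneg (by positivity)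
              rw [this]
              have : |δa| ≤ (g' : ℤ) := by rw [abs_of_nonneg hδa0]; omega
              nlinarith
            calc |T - (c a : ℤ) * δa| ≤ |T| + |(c a : ℤ) * δa| := by
                  have := abs_sub (T) ((c a : ℤ) * δa)
                  exact abs_sub _ _
              _ ≤ |T| + (c a : ℤ) * (g' : ℤ) := by omega
          rw [hsumcons]
          have hca' : (0:ℤ) ≤ (c a : ℤ) := by positivity
          nlinarith [sq_nonneg ((c a : ℤ) + ∑ x ∈ s, (c x : ℤ)), sq_nonneg (∑ x ∈ s, (c x : ℤ))]

end NT

section Bubble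

variable {Y : SimpleGraph (Fin n)}

/-- inversion set of a periodic permutation -/
def Inv (n : ℕ) (r : ℤ → ℤ) : Set (ℤ × ℤ) :=
  {p | 0 ≤ p.1 ∧ p.1 < n ∧ p.1 < p.2 ∧ r p.2 < r p.1}

lemma r_inj' {σ τ : Fin n ≃ Fin n} {r : ℤ → ℤ} (hper : ∀ i : ℤ, r (i + n) = r i + n)
    (hcompat : ∀ i : ℤ, uconf τ (r i) = uconf σ i) {i j : ℤ} (h : r i = r j) : i = j := by
  have hc : uconf σ i = uconf σ j := by
    rw [← hcompat i, ← hcompat j, h]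
  have hfm : fm n i = fm n j := σ.injective hc
  obtain ⟨k, hk⟩ := fm_eq_dvd hfm
  have hj : j = i + n * k := by omega
  have h2 := per_shift hper k i
  rw [← hj] at h2
  have hk0 : (n:ℤ) * k = 0 := by omega
  have hk' : k = 0 := by
    rcases mul_eq_zero.mp hk0 with h' | h'
    · exact absurd h' (by have := npos (n := n); omega)
    · exact h'
  omega

lemma window_eq (hn : 3 ≤ n) {i j : ℤ} (h0 : 0 ≤ i) (h1 : i < n) (h2 : 0 ≤ j) (h3 : j < n)
    (hfm : fm n i = fm n j) : i = j := by
  rw [fm_eq_iff] at hfm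
  rw [Int.emod_eq_of_lt h0 h1, Int.emod_eq_of_lt h2 h3] at hfm
  exact hfm

lemma sw_at_base (hn : 3 ≤ n) (i₀ : ℤ) : sw n i₀ i₀ = i₀ + 1 := sw_apply_fst hn i₀ rfl

lemma sw_at_base' (hn : 3 ≤ n) (i₀ : ℤ) : sw n i₀ (i₀ + 1) = i₀ := by
  have := sw_invol hn i₀ i₀
  rwa [sw_at_base hn i₀] at this

lemma inv_sw (hn : 3 ≤ n) {r : ℤ → ℤ} (hper : ∀ i : ℤ, r (i + n) = r i + n) {i₀ : ℤ}
    (hi₀0 : 0 ≤ i₀) (hi₀n : i₀ < n) (hlt : r (i₀ + 1) < r i₀) (hfin : (Inv n r).Finite) :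
    (Inv n (fun i => r (sw n i₀ i))).Finite ∧
      (Inv n (fun i => r (sw n i₀ i))).ncard + 1 = (Inv n r).ncard := by
  have hnpos := npos (n := n)
  set r' : ℤ → ℤ := fun i => r (sw n i₀ i) with hr'
  set F : ℤ × ℤ → ℤ × ℤ := fun p =>
    (sw n i₀ p.1 - n * (sw n i₀ p.1 / n), sw n i₀ p.2 - n * (sw n i₀ p.1 / n)) with hF
  have hrshift : ∀ (k x : ℤ), r (x - n * k) = r x - n * k := by
    intro k x
    have := per_shift hper (-k) x
    have he : x + n * (-k) = x - n * k := by ring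
    rw [he] at this
    omega
  have hswshift : ∀ (y k : ℤ), sw n i₀ (y - n * k) = sw n i₀ y - n * k := by
    intro y k
    have := sw_shift hn i₀ (y - n * k) k
    have he : y - n * k + n * k = y := by ring
    rw [he] at this
    omega
  have hFwin : ∀ p : ℤ × ℤ, 0 ≤ (F p).1 ∧ (F p).1 < n := by
    intro p
    have hmod := Int.emod_def (sw n i₀ p.1) (n:ℤ)
    have h1 := Int.emod_nonneg (sw n i₀ p.1) (by omega : (n:ℤ) ≠ 0)
    have h2 := Int.emod_lt_of_pos (sw n i₀ p.1) hnpos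
    constructor
    · show (0:ℤ) ≤ sw n i₀ p.1 - n * (sw n i₀ p.1 / n)
      omega
    · show sw n i₀ p.1 - (n:ℤ) * (sw n i₀ p.1 / n) < n
      omega
  have hmem : ((i₀, i₀ + 1) : ℤ × ℤ) ∈ Inv n r := ⟨hi₀0, hi₀n, by omega, hlt⟩
  have hinvol : ∀ p : ℤ × ℤ, 0 ≤ p.1 → p.1 < n → F (F p) = p := by
    rintro ⟨i, j⟩ h0 h1
    simp only [hF]
    set k := sw n i₀ i / n with hk
    have e1 : sw n i₀ (sw n i₀ i - n * k) = i - n * k := by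
      rw [hswshift, sw_invol hn]
    have e2 : sw n i₀ (sw n i₀ j - n * k) = j - n * k := by
      rw [hswshift, sw_invol hn]
    have e3 : (i - n * k) / n = -k := by
      have : i - n * k = i + n * (-k) := by ring
      rw [this, Int.add_mul_ediv_left i (-k) (by omega : (n:ℤ) ≠ 0),
        Int.ediv_eq_zero_of_lt h0 h1]
      ring
    rw [e1, e2, e3]
    simp only [Prod.mk.injEq]
    constructor <;> ring
  have hmapsto : ∀ p ∈ Inv n r', F p ∈ Inv n r \ {((i₀, i₀ + 1) : ℤ × ℤ)} := by
    rintro ⟨i, j⟩ hp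
    obtain ⟨h0, h1, hij, hinv⟩ := hp
    dsimp only at h0 h1 hij
    have hinv' : r (sw n i₀ j) < r (sw n i₀ i) := hinv
    have hswlt : sw n i₀ i < sw n i₀ j := by
      rcases lt_trichotomy (sw n i₀ i) (sw n i₀ j) with h | h | h
      · exact h
      · exact absurd (sw_inj hn i₀ h) hij.ne
      · exfalso
        obtain ⟨hj, hfi⟩ := sw_flip hn i₀ hij h
        have hii₀ : i = i₀ := window_eq hn h0 h1 hi₀0 hi₀n hfi
        have hswi : sw n i₀ i = i₀ + 1 := by rw [hii₀]; exact sw_at_base hn i₀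
        have hswj : sw n i₀ j = i₀ := by rw [hj, hii₀]; exact sw_at_base' hn i₀
        rw [hswi, hswj] at hinv'
        omega
    set k := sw n i₀ i / n with hk
    refine ⟨⟨(hFwin (i, j)).1, (hFwin (i, j)).2, ?_, ?_⟩, ?_⟩
    · show sw n i₀ i - (n:ℤ) * k < sw n i₀ j - (n:ℤ) * k
      linarith
    · show r (sw n i₀ j - n * k) < r (sw n i₀ i - n * k)
      rw [hrshift, hrshift]
      linarith
    · intro hpt
      simp only [Set.mem_singleton_iff, Prod.ext_iff, hF] at hpt
      obtain ⟨hp1, hp2⟩ := hpt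
      rw [← hk] at hp1 hp2
      have hi' : sw n i₀ i = i₀ + n * k := by linarith
      have hj' : sw n i₀ j = i₀ + 1 + n * k := by linarith
      have hii : i = i₀ + 1 + n * k := by
        have := sw_invol hn i₀ i
        rw [hi'] at this
        rw [← this]
        have e : i₀ + n * k = i₀ + n * k := rfl
        calc sw n i₀ (i₀ + n * k) = sw n i₀ i₀ + n * k := sw_shift hn i₀ i₀ k
          _ = i₀ + 1 + n * k := by rw [sw_at_base hn]
      have hjj : j = i₀ + n * k := by
        have := sw_invol hn i₀ j
        rw [hj'] at this
        rw [← this]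
        calc sw n i₀ (i₀ + 1 + n * k) = sw n i₀ (i₀ + 1) + n * k := sw_shift hn i₀ (i₀+1) k
          _ = i₀ + n * k := by rw [sw_at_base' hn]
      linarith
  have hmapsfrom : ∀ q ∈ Inv n r \ {((i₀, i₀ + 1) : ℤ × ℤ)}, F q ∈ Inv n r' := by
    rintro ⟨i, j⟩ ⟨hq, hne⟩
    obtain ⟨h0, h1, hij, hinv⟩ := hq
    dsimp only at h0 h1 hij hinv
    have hswlt : sw n i₀ i < sw n i₀ j := by
      rcases lt_trichotomy (sw n i₀ i) (sw n i₀ j) with h | h | h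
      · exact h
      · exact absurd (sw_inj hn i₀ h) hij.ne
      · exfalso
        obtain ⟨hj, hfi⟩ := sw_flip hn i₀ hij h
        have hii₀ : i = i₀ := window_eq hn h0 h1 hi₀0 hi₀n hfi
        exact hne (by
          rw [Set.mem_singleton_iff, Prod.ext_iff]
          exact ⟨hii₀, by show j = i₀ + 1; omega⟩)
    set k := sw n i₀ i / n with hk
    refine ⟨(hFwin (i, j)).1, (hFwin (i, j)).2, ?_, ?_⟩
    · show sw n i₀ i - (n:ℤ) * k < sw n i₀ j - (n:ℤ) * k
      linarith
    · show r (sw n i₀ (sw n i₀ j - n * k)) < r (sw n i₀ (sw n i₀ i - n * k))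
      rw [hswshift, hswshift, sw_invol hn, sw_invol hn, hrshift, hrshift]
      linarith
  have himg : F '' (Inv n r') = Inv n r \ {((i₀, i₀ + 1) : ℤ × ℤ)} := by
    apply Set.Subset.antisymm
    · rintro q ⟨p, hp, rfl⟩
      exact hmapsto p hp
    · intro q hq
      refine ⟨F q, hmapsfrom q hq, ?_⟩
      exact hinvol q hq.1.1 hq.1.2.1
  have hinjOn : Set.InjOn F (Inv n r') := by
    intro p hp q hq hpq
    have h1 := hinvol p hp.1 hp.2.1
    have h2 := hinvol q hq.1 hq.2.1
    rw [← h1, ← h2, hpq]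
  have hfin' : (Inv n r').Finite := by
    apply Set.Finite.of_finite_image _ hinjOn
    rw [himg]
    exact hfin.subset Set.diff_subset
  refine ⟨hfin', ?_⟩
  have hcard1 : (Inv n r').ncard = (Inv n r \ {((i₀, i₀ + 1) : ℤ × ℤ)}).ncard := by
    rw [← himg, Set.ncard_image_of_injOn hinjOn]
  rw [hcard1]
  exact Set.ncard_diff_singleton_add_one hmem hfin

lemma bubble_done (hn : 3 ≤ n) {σ τ : Fin n ≃ Fin n} {r : ℤ → ℤ}
    (hper : ∀ i : ℤ, r (i + n) = r i + n)
    (hcompat : ∀ i : ℤ, uconf τ (r i) = uconf σ i)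
    (hsum : ∑ x : Fin n, (r (x.val : ℤ) - (x.val : ℤ)) = 0)
    (hmono : ∀ i₀ : ℤ, 0 ≤ i₀ → i₀ < n → r i₀ < r (i₀ + 1)) : σ = τ := by
  have hnpos := npos (n := n)
  -- global monotonicity
  have hglob : ∀ i : ℤ, r i < r (i + 1) := by
    intro i
    have hd := fm_dec (n := n) i
    set v : ℤ := ((fm n i : ℕ) : ℤ) with hv
    have hv0 : 0 ≤ v := by positivity
    have hvn : v < n := by rw [hv]; exact_mod_cast (fm n i).isLt
    have h1 : r i = r v + n * (i / n) := by
      have h := per_shift hper (i / n) v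
      rwa [← hd] at h
    have h2 : r (i + 1) = r (v + 1) + n * (i / n) := by
      have he : i + 1 = (v + 1) + n * (i / n) := by linarith
      rw [he]; exact per_shift hper _ _
    have := hmono v hv0 hvn
    linarith
  -- each step is exactly 1
  have hstep_nat : ∀ i ∈ Finset.range n, r ((i:ℕ):ℤ) + 1 = r (((i:ℕ):ℤ) + 1) := by
    have htel : ∑ i ∈ Finset.range n, (r (((i+1 : ℕ)):ℤ) - r ((i:ℕ):ℤ)) =
        r ((n:ℕ):ℤ) - r ((0:ℕ):ℤ) := Finset.sum_range_sub (fun k : ℕ => r ((k:ℕ):ℤ)) n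
    have hrn : r ((n:ℕ):ℤ) = r 0 + n := by
      have := hper 0
      simpa using this
    have hsum1 : ∑ i ∈ Finset.range n, (r (((i+1 : ℕ)):ℤ) - r ((i:ℕ):ℤ) - 1) = 0 := by
      rw [Finset.sum_sub_distrib, htel, hrn]
      simp
    have hnn : ∀ i ∈ Finset.range n, (0:ℤ) ≤ r (((i+1 : ℕ)):ℤ) - r ((i:ℕ):ℤ) - 1 := by
      intro i _
      have := hglob ((i:ℕ):ℤ)
      have hc : (((i+1 : ℕ)):ℤ) = ((i:ℕ):ℤ) + 1 := by push_cast; ring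
      rw [hc]
      omega
    have hall := (Finset.sum_eq_zero_iff_of_nonneg hnn).mp hsum1
    intro i hi
    have := hall i hi
    have hc : (((i+1 : ℕ)):ℤ) = ((i:ℕ):ℤ) + 1 := by push_cast; ring
    rw [hc] at this
    omega
  have hstep : ∀ i : ℤ, r (i + 1) = r i + 1 := by
    intro i
    have hd := fm_dec (n := n) i
    set v : ℤ := ((fm n i : ℕ) : ℤ) with hv
    have h1 : r i = r v + n * (i / n) := by
      have h := per_shift hper (i / n) v
      rwa [← hd] at h
    have h2 : r (i + 1) = r (v + 1) + n * (i / n) := by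
      have he : i + 1 = (v + 1) + n * (i / n) := by linarith
      rw [he]; exact per_shift hper _ _
    have hmem : (fm n i).val ∈ Finset.range n := Finset.mem_range.mpr (fm n i).isLt
    have hsn := hstep_nat (fm n i).val hmem
    have hvv : (((fm n i).val : ℕ) : ℤ) = v := by rw [hv]
    rw [hvv] at hsn
    linarith
  have hlin : ∀ i : ℤ, r i = r 0 + i := by
    intro i
    induction i using Int.induction_on with
    | zero => ring
    | succ k ih => rw [hstep]; omega
    | pred k ih =>
        have := hstep (-(k:ℤ) - 1)
        have he : (-(k:ℤ) - 1) + 1 = -(k:ℤ) := by ring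
        rw [he] at this
        omega
  have hr0 : r 0 = 0 := by
    have : ∑ x : Fin n, (r ((x.val:ℤ)) - ((x.val:ℤ))) = ∑ x : Fin n, r 0 := by
      refine Finset.sum_congr rfl fun x _ => ?_
      rw [hlin]; ring
    rw [this] at hsum
    rw [Finset.sum_const] at hsum
    simp only [Finset.card_univ, Fintype.card_fin, smul_eq_mul] at hsum
    rcases mul_eq_zero.mp hsum with h | h
    · exact absurd h (by omega)
    · exact h
  have hid : ∀ i : ℤ, r i = i := fun i => by rw [hlin, hr0]; ring
  apply Equiv.ext
  intro a
  have := hcompat ((a.val : ℤ))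
  rw [hid] at this
  have h2 : uconf τ ((a.val : ℤ)) = τ a := by rw [uconf, fm_vI]
  have h3 : uconf σ ((a.val : ℤ)) = σ a := by rw [uconf, fm_vI]
  rw [h2, h3] at this
  exact this.symm

theorem bubble (hn : 3 ≤ n) (Y : SimpleGraph (Fin n)) (τ : Fin n ≃ Fin n) :
    ∀ (N : ℕ) (σ : Fin n ≃ Fin n) (r : ℤ → ℤ),
      (∀ i : ℤ, r (i + n) = r i + n) →
      (∀ i : ℤ, uconf τ (r i) = uconf σ i) →
      (∑ x : Fin n, (r (x.val : ℤ) - (x.val : ℤ)) = 0) →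
      (∀ i j : ℤ, i < j → r j < r i → Y.Adj (uconf σ i) (uconf σ j)) →
      (Inv n r).Finite → (Inv n r).ncard ≤ N →
      ∃ W : (FS (cycleGraph n) Y).Walk σ τ, W.length ≤ N := by
  have hnpos := npos (n := n)
  intro N
  induction N with
  | zero =>
      intro σ r hper hcompat hsum hfr hfin hcard
      by_cases hmono : ∀ i₀ : ℤ, 0 ≤ i₀ → i₀ < n → r i₀ < r (i₀ + 1)
      · obtain rfl := bubble_done hn hper hcompat hsum hmono
        exact ⟨SimpleGraph.Walk.nil, by simp⟩
      · exfalso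
        push_neg at hmono
        obtain ⟨i₀, hi₀0, hi₀n, hge⟩ := hmono
        have hlt : r (i₀ + 1) < r i₀ :=
          lt_of_le_of_ne hge (fun h => by have := r_inj' hper hcompat h; omega)
        have hne : (Inv n r).Nonempty := ⟨(i₀, i₀ + 1), hi₀0, hi₀n, by omega, hlt⟩
        have := (Set.ncard_pos hfin).mpr hne
        omega
  | succ N ih =>
      intro σ r hper hcompat hsum hfr hfin hcard
      by_cases hmono : ∀ i₀ : ℤ, 0 ≤ i₀ → i₀ < n → r i₀ < r (i₀ + 1)
      · obtain rfl := bubble_done hn hper hcompat hsum hmono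
        exact ⟨SimpleGraph.Walk.nil, by simp⟩
      push_neg at hmono
      obtain ⟨i₀, hi₀0, hi₀n, hge⟩ := hmono
      have hlt : r (i₀ + 1) < r i₀ :=
        lt_of_le_of_ne hge (fun h => by have := r_inj' hper hcompat h; omega)
      set a : Fin n := fm n i₀ with ha
      set b : Fin n := fm n (i₀ + 1) with hb
      have hba : b = a + 1 := by rw [ha, hb, fm_add_one (by omega : 2 ≤ n)]
      have hone : ((1 : Fin n)).val = 1 := by
        rw [Fin.val_one']; exact Nat.mod_eq_of_lt (by omega)
      set σ' : Fin n ≃ Fin n := (Equiv.swap a b).trans σ with hσ'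
      have hσ'app : ∀ x, σ' x = σ (Equiv.swap a b x) := fun x => rfl
      have hYadj : Y.Adj (σ a) (σ b) := hfr i₀ (i₀ + 1) (by omega) hlt
      have hadj : (FS (cycleGraph n) Y).Adj σ σ' := by
        refine ⟨a, b, ?_, hYadj, ?_, ?_, ?_⟩
        · rw [cycleGraph_adj']
          right
          rw [hba]
          have : a + 1 - a = 1 := add_sub_cancel_left a 1
          rw [this, hone]
        · rw [hσ'app, Equiv.swap_apply_right]
        · rw [hσ'app, Equiv.swap_apply_left]
        · intro c hca hcb
          rw [hσ'app, Equiv.swap_apply_of_ne_of_ne hca hcb]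
      have hconf : ∀ i : ℤ, uconf σ' i = uconf σ (sw n i₀ i) := by
        intro i
        show σ' (fm n i) = σ (fm n (sw n i₀ i))
        rw [sw_fm hn, hσ'app]
      obtain ⟨hfin', hcard'⟩ := inv_sw hn hper hi₀0 hi₀n hlt hfin
      obtain ⟨W, hW⟩ := ih σ' (fun i => r (sw n i₀ i))
        (fun i => by rw [sw_add_n hn, hper])
        (fun i => by rw [hcompat (sw n i₀ i), ← hconf i])
        (sum0_sw hn hper hsum i₀)
        (by
          intro i j hij hinv
          rw [hconf i, hconf j]
          rcases lt_trichotomy (sw n i₀ i) (sw n i₀ j) with h | h | h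
          · exact hfr _ _ h hinv
          · exact absurd (sw_inj hn i₀ h) hij.ne
          · obtain ⟨hj, hfi⟩ := sw_flip hn i₀ hij h
            have hswi : sw n i₀ i = i + 1 := sw_apply_fst hn i₀ hfi
            have hswj : sw n i₀ j = i := by
              rw [hj]
              have h2 := sw_invol hn i₀ i
              rwa [hswi] at h2
            rw [hswi, hswj]
            have e1 : uconf σ i = σ a := by
              show σ (fm n i) = σ a
              rw [hfi, ha]
            have e2 : uconf σ (i + 1) = σ b := by
              show σ (fm n (i + 1)) = σ b
              rw [fm_add_one (by omega : 2 ≤ n), hfi, hb, fm_add_one (by omega : 2 ≤ n)]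
            rw [e1, e2]
            exact hYadj.symm)
        hfin' (by omega)
      exact ⟨SimpleGraph.Walk.cons hadj W, by
        rw [SimpleGraph.Walk.length_cons]; omega⟩

end Bubble

section Main

variable {Y : SimpleGraph (Fin n)}

theorem main_aux (hn : 3 ≤ n) (Y : SimpleGraph (Fin n)) (σ τ : Fin n ≃ Fin n)
    (hreach : (FS (cycleGraph n) Y).Reachable σ τ) :
    (FS (cycleGraph n) Y).dist σ τ ≤ 100 * n ^ 4 := by
  classical
  have hnpos := npos (n := n)
  have hnn : 3 ≤ (n:ℤ) := by exact_mod_cast hn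
  obtain ⟨W0⟩ := hreach
  obtain ⟨r, hv⟩ := valid_of_walk hn W0
  set s : Finset (Fin n) := Finset.image (repC Y) Finset.univ with hsdef
  set c : Fin n → ℕ := fun x => (Finset.univ.filter (fun p => repC Y p = x)).card with hcdef
  set w : Fin n → ℤ := wP σ r with hwdef
  -- fiberwise sums
  have hfiber : ∀ F : Fin n → ℤ, ∑ p : Fin n, F (repC Y p) = ∑ x ∈ s, (c x : ℤ) * F x := by
    intro F
    rw [hsdef, Finset.sum_comp]
    refine Finset.sum_congr rfl fun x _ => ?_
    rw [hcdef, nsmul_eq_mul]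
  have hcpos : ∀ x ∈ s, 0 < c x := by
    intro x hx
    obtain ⟨p, _, hp⟩ := Finset.mem_image.mp hx
    refine Finset.card_pos.mpr ⟨p, ?_⟩
    simp [hp]
  have hs : s.Nonempty := by
    refine ⟨repC Y ⟨0, by omega⟩, Finset.mem_image_of_mem _ (Finset.mem_univ _)⟩
  have hsumw : ∑ p : Fin n, w p = 0 := sum_w hv
  have hwb : ∀ p : Fin n, |w (repC Y p) - w p| ≤ (n:ℤ) - 1 := by
    intro p
    rw [abs_sub_comm]
    exact w_reach hv hn (repC_reachable p)
  set T : ℤ := ∑ x ∈ s, (c x : ℤ) * w x with hTdef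
  have hTform : T = ∑ p : Fin n, w (repC Y p) := (hfiber w).symm
  have hTb : |T| ≤ (n:ℤ) * ((n:ℤ) - 1) := by
    have h1 : T = ∑ p : Fin n, (w (repC Y p) - w p) := by
      rw [Finset.sum_sub_distrib, hsumw, hTform]; ring
    rw [h1]
    calc |∑ p : Fin n, (w (repC Y p) - w p)| ≤ ∑ p : Fin n, |w (repC Y p) - w p| :=
          Finset.abs_sum_le_sum_abs _ _
      _ ≤ ∑ _p : Fin n, ((n:ℤ) - 1) := Finset.sum_le_sum fun p _ => hwb p
      _ = (n:ℤ) * ((n:ℤ) - 1) := by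
          rw [Finset.sum_const, Finset.card_univ, Fintype.card_fin, nsmul_eq_mul]
  have hgcd : ((s.gcd c : ℕ) : ℤ) ∣ T := by
    refine Finset.dvd_sum fun x hx => ?_
    exact Dvd.dvd.mul_right (Int.natCast_dvd_natCast.mpr (Finset.gcd_dvd hx)) _
  obtain ⟨δ, hδsum, hδb⟩ := nt_aux s hs c hcpos T hgcd
  have hcsum : ∑ x ∈ s, (c x : ℤ) = (n:ℤ) := by
    have := hfiber (fun _ => (1:ℤ))
    simp only [mul_one] at this
    rw [← this]
    rw [Finset.sum_const, Finset.card_univ, Fintype.card_fin, nsmul_eq_mul, mul_one]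
  set K : Fin n → ℤ := fun p => δ (repC Y p) - w (repC Y p) with hKdef
  have hKsum : ∑ p : Fin n, K p = 0 := by
    rw [hKdef]
    rw [Finset.sum_sub_distrib]
    rw [hfiber δ, hfiber w, ← hTdef, hδsum]
    ring
  have hKb : ∀ p : Fin n, |w p + K p| ≤ 3 * (n:ℤ)^2 := by
    intro p
    have h1 : w p + K p = (w p - w (repC Y p)) + δ (repC Y p) := by rw [hKdef]; ring
    have h2 : |δ (repC Y p)| ≤ |T| + (n:ℤ)^2 + (n:ℤ) := by
      have := hδb (repC Y p) (Finset.mem_image_of_mem _ (Finset.mem_univ p))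
      rwa [hcsum] at this
    have h3 : |w p - w (repC Y p)| ≤ (n:ℤ) - 1 := by rw [abs_sub_comm]; exact hwb p
    calc |w p + K p| ≤ |w p - w (repC Y p)| + |δ (repC Y p)| := by rw [h1]; exact abs_add_le _ _
      _ ≤ ((n:ℤ) - 1) + (|T| + (n:ℤ)^2 + (n:ℤ)) := by linarith
      _ ≤ 3 * (n:ℤ)^2 := by nlinarith
  set r' : ℤ → ℤ := fun i => r i + n * K (uconf σ i) with hr'def
  have hper' : ∀ i : ℤ, r' (i + n) = r' i + n := by
    intro i
    simp only [hr'def]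
    have hu : uconf σ (i + (n:ℤ)) = uconf σ i := by
      have := uconf_shift σ i 1
      rwa [mul_one] at this
    rw [hv.per, hu]
    ring
  have hcompat' : ∀ i : ℤ, uconf τ (r' i) = uconf σ i := by
    intro i
    simp only [hr'def]
    rw [uconf_shift τ (r i) (K (uconf σ i)), hv.compat]
  have huval : ∀ x : Fin n, uconf σ ((x.val : ℤ)) = σ x := by
    intro x
    show σ (fm n ((x.val : ℤ))) = σ x
    rw [fm_vI]
  have hsum0' : ∑ x : Fin n, (r' ((x.val : ℤ)) - ((x.val : ℤ))) = 0 := by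
    have hsplit : ∀ x : Fin n, r' ((x.val : ℤ)) - ((x.val : ℤ)) =
        (r ((x.val : ℤ)) - ((x.val : ℤ))) + (n:ℤ) * K (σ x) := by
      intro x
      simp only [hr'def]
      rw [huval x]
      ring
    rw [Finset.sum_congr rfl fun x _ => hsplit x, Finset.sum_add_distrib, hv.sum0,
      ← Finset.mul_sum, Equiv.sum_comp σ K, hKsum]
    ring
  have hfr' : ∀ i j : ℤ, i < j → r' j < r' i → Y.Adj (uconf σ i) (uconf σ j) := by
    intro i j hij hinv
    by_contra hnadj
    rcases eq_or_ne (uconf σ i) (uconf σ j) with heq | hne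
    · have hfm : fm n i = fm n j := σ.injective heq
      obtain ⟨k, hk⟩ := fm_eq_dvd hfm
      have hnk : 0 < (n:ℤ) * k := by rw [← hk]; omega
      have hrj : r j = r i + (n:ℤ) * k := by
        have := per_shift hv.per k i
        rw [show i + (n:ℤ) * k = j by omega] at this
        exact this
      have hKeq : K (uconf σ j) = K (uconf σ i) := by rw [heq]
      simp only [hr'def] at hinv
      rw [hKeq, hrj] at hinv
      linarith
    · have hcadj : Yᶜ.Adj (uconf σ i) (uconf σ j) := by
        rw [SimpleGraph.compl_adj]
        exact ⟨hne, hnadj⟩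
      have hrep : repC Y (uconf σ i) = repC Y (uconf σ j) :=
        repC_eq_of_reachable hcadj.reachable
      have hKeq : K (uconf σ i) = K (uconf σ j) := by rw [hKdef]; simp only; rw [hrep]
      have := hv.mono i j hij hnadj
      simp only [hr'def] at hinv
      rw [hKeq] at hinv
      linarith
  -- displacement bound
  set B : ℤ := 4 * (n:ℤ)^3 with hBdef
  have hdisp : ∀ i : ℤ, |r' i - i| ≤ B := by
    have hwin : ∀ x : Fin n, |r' ((x.val : ℤ)) - ((x.val : ℤ))| ≤ B := by
      intro x
      set p : Fin n := σ x with hp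
      have hip : iP σ p = ((x.val : ℤ)) := by
        rw [hp, iP, Equiv.symm_apply_apply]
      have h1 : r' ((x.val : ℤ)) = iP τ p + (n:ℤ) * (w p + K p) := by
        simp only [hr'def]
        rw [huval x, ← hp, ← hip, r_iP hv p]
        rw [hwdef]
        ring
      have h2 := hKb p
      have h3 := iP_nonneg τ p
      have h4 := iP_lt τ p
      have h5 : (0:ℤ) ≤ (x.val : ℤ) := by positivity
      have h6 : ((x.val : ℤ)) < n := by exact_mod_cast x.isLt
      rw [h1, hBdef]
      rw [abs_le] at h2 ⊢
      constructor <;> nlinarith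
    intro i
    have hd := disp_per hper' i
    have := hwin (fm n i)
    rw [← hd] at this
    exact this
  -- inversion count
  have hsub : Inv n r' ⊆ ↑((Finset.Ico (0:ℤ) (n:ℤ)) ×ˢ (Finset.Ico (0:ℤ) ((n:ℤ) + 2 * B))) := by
    rintro ⟨i, j⟩ ⟨h0, h1, hij, hinv⟩
    have hdi := hdisp i
    have hdj := hdisp j
    rw [abs_le] at hdi hdj
    simp only [Finset.coe_product, Set.mem_prod, Finset.mem_coe, Finset.mem_Ico]
    constructor
    · exact ⟨h0, h1⟩
    · constructor
      · show (0:ℤ) ≤ j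
        omega
      · show j < (n:ℤ) + 2 * B
        have : r' j < r' i := hinv
        omega
  have hfin' : (Inv n r').Finite := Set.Finite.subset (Finset.finite_toSet _) hsub
  have hcard' : (Inv n r').ncard ≤ n * (n + 8 * n^3) := by
    have h1 : (Inv n r').ncard ≤
        (((Finset.Ico (0:ℤ) (n:ℤ)) ×ˢ (Finset.Ico (0:ℤ) ((n:ℤ) + 2 * B))) : Finset (ℤ×ℤ)).card := by
      rw [← Set.ncard_coe_finset]
      exact Set.ncard_le_ncard hsub (Finset.finite_toSet _)
    have h2 : (((Finset.Ico (0:ℤ) (n:ℤ)) ×ˢ (Finset.Ico (0:ℤ) ((n:ℤ) + 2 * B))) : Finset (ℤ×ℤ)).card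
        = n * (n + 8 * n^3) := by
      rw [Finset.card_product, Int.card_Ico, Int.card_Ico, hBdef]
      have e1 : ((n:ℤ) - 0).toNat = n := by omega
      have e2 : ((n:ℤ) + 2 * (4 * (n:ℤ)^3) - 0).toNat = n + 8 * n^3 := by
        have : (n:ℤ) + 2 * (4 * (n:ℤ)^3) - 0 = ((n + 8 * n^3 : ℕ) : ℤ) := by push_cast; ring
        rw [this, Int.toNat_natCast]
      rw [e1, e2]
    omega
  obtain ⟨W, hW⟩ := bubble hn Y τ (n * (n + 8 * n^3)) σ r' hper' hcompat' hsum0' hfr' hfin' hcard'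
  have hdist := SimpleGraph.dist_le W
  have harith : n * (n + 8 * n^3) ≤ 100 * n^4 := by nlinarith
  omega

end Main

end FSDiam


/-- There is an absolute constant `C > 0` such that for every `n ≥ 3` and
every `n`-vertex graph `Y`, every connected component of `FS(Cycle_n, Y)` has diameter at most
`C * n⁴`. -/
theorem fs_cycle_component_diam_poly :
    ∃ C : ℕ, 0 < C ∧ ∀ n : ℕ, 3 ≤ n → ∀ Y : SimpleGraph (Fin n),
      ∀ σ τ : Fin n ≃ Fin n, (FS (cycleGraph n) Y).Reachable σ τ →
        (FS (cycleGraph n) Y).dist σ τ ≤ C * n ^ 4 := by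
  refine ⟨100, by omega, fun n hn Y σ τ hreach => ?_⟩
  haveI : NeZero n := ⟨by omega⟩
  exact FSDiam.main_aux hn Y σ τ hreach
end
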